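/- arXiv:1612.09397 — 11 statements merged into one kernel-verified Lean document; each statement's English description precedes it below -/
import Mathlib

section
/- Suppose m ≥ 3. For every pair of distinct elements u, v ∈ X with u + v ≠ 1, there is exactly one block B ∈ W_3 with u ∈ B and v ∈ B; that is, the triple (X, W_2, W_3) is a group divisible design GDD(2^m − 2, 2, 3) with balance parameter λ_3 = 1. -/
open scoped Classical

noncomputable section

/-- `X = GF(2^m) \\ {0, 1}`. -/
def designX (m : ℕ) : Set (GaloisField 2 m) := {x | x ≠ 0 ∧ x ≠ 1}

/-- `W_k`: the collection of all `k`-element subsets `B` of `X` whose element-sum is `1`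
and such that no nonempty proper subset of `B` has element-sum `1`. -/
def designW (m k : ℕ) : Set (Finset (GaloisField 2 m)) :=
  {B | (B : Set (GaloisField 2 m)) ⊆ designX m ∧ B.card = k ∧ B.sum id = 1 ∧
    ∀ I ⊆ B, I.Nonempty → I ≠ B → I.sum id ≠ 1}

/-- For `m ≥ 3` and distinct `u, v ∈ X` with `u + v ≠ 1`, exactly `λ_3 = 1`
blocks of `W_3` contain both `u` and `v`; that is, `(X, W_2, W_3)` is a
`GDD(2^m - 2, 2, 3)` with balance parameter `λ_3`. -/
theorem GDD_W3 (m : ℕ) (hm : 3 ≤ m) (u v : GaloisField 2 m)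
    (hu : u ∈ designX m) (hv : v ∈ designX m) (huv : u ≠ v) (hsum : u + v ≠ 1) :
    {B ∈ designW m 3 | u ∈ B ∧ v ∈ B}.ncard = 1 := by
  obtain ⟨hu0, hu1⟩ := hu
  obtain ⟨hv0, hv1⟩ := hv
  have htwo : (2 : GaloisField 2 m) = 0 := CharP.cast_eq_zero _ 2
  set w : GaloisField 2 m := u + v + 1 with hwdef
  have hwu : w ≠ u := fun h => hv1 (by linear_combination h - htwo)
  have hwv : w ≠ v := fun h => hu1 (by linear_combination h - htwo)
  have hw0 : w ≠ 0 := fun h => hsum (by linear_combination h - htwo)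
  have hw1 : w ≠ 1 := fun h => huv (by linear_combination h - v * htwo)
  set B0 : Finset (GaloisField 2 m) := {u, v, w} with hB0def
  have hmemB0 : ∀ x, x ∈ B0 ↔ x = u ∨ x = v ∨ x = w := by
    intro x; simp [hB0def]
  have hcard : B0.card = 3 := by
    rw [hB0def, Finset.card_insert_of_notMem, Finset.card_insert_of_notMem,
      Finset.card_singleton]
    · simp only [Finset.mem_singleton]
      exact fun h => hwv h.symm
    · simp only [Finset.mem_insert, Finset.mem_singleton]
      push_neg
      exact ⟨huv, fun h => hwu h.symm⟩
  have hsumB0 : B0.sum id = 1 := by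
    rw [hB0def, Finset.sum_insert, Finset.sum_insert, Finset.sum_singleton]
    · show u + (v + w) = 1
      linear_combination (u + v) * htwo
    · simp only [Finset.mem_singleton]
      exact fun h => hwv h.symm
    · simp only [Finset.mem_insert, Finset.mem_singleton]
      push_neg
      exact ⟨huv, fun h => hwu h.symm⟩
  have hpair : ∀ a b : GaloisField 2 m, a ∈ B0 → b ∈ B0 → a ≠ b → a + b ≠ 1 := by
    intro a b ha hb hab h
    rw [hmemB0] at ha hb
    rcases ha with ha | ha | ha <;> rcases hb with hb | hb | hb <;>
      rw [ha, hb] at h hab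
    all_goals first
      | exact hab rfl
      | exact hsum (by linear_combination h)
      | exact hu0 (by linear_combination h - v * htwo - hwdef)
      | exact hv0 (by linear_combination h - u * htwo - hwdef)
  have hB0mem : B0 ∈ designW m 3 := by
    refine ⟨?_, hcard, hsumB0, ?_⟩
    · intro x hx
      rw [Finset.mem_coe, hmemB0] at hx
      rcases hx with rfl | rfl | rfl
      · exact ⟨hu0, hu1⟩
      · exact ⟨hv0, hv1⟩
      · exact ⟨hw0, hw1⟩
    · intro I hI hIne hInB
      have hIle : I.card ≤ 3 := hcard ▸ Finset.card_le_card hI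
      have hIge : 1 ≤ I.card := Finset.one_le_card.mpr hIne
      have hIne3 : I.card ≠ 3 := by
        intro h
        exact hInB (Finset.eq_of_subset_of_card_le hI (by omega))
      have hcases : I.card = 1 ∨ I.card = 2 := by omega
      rcases hcases with h | h
      · obtain ⟨x, rfl⟩ := Finset.card_eq_one.mp h
        rw [Finset.sum_singleton]
        have hx : x ∈ B0 := hI (Finset.mem_singleton_self x)
        rw [hmemB0] at hx
        rcases hx with rfl | rfl | rfl
        · exact hu1
        · exact hv1
        · exact hw1
      · obtain ⟨x, y, hxy, rfl⟩ := Finset.card_eq_two.mp h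
        rw [Finset.sum_pair hxy]
        exact hpair x y (hI (by simp)) (hI (by simp)) hxy
  have hkey : {B ∈ designW m 3 | u ∈ B ∧ v ∈ B} = {B0} := by
    ext B
    simp only [Set.mem_setOf_eq, Set.mem_singleton_iff]
    constructor
    · rintro ⟨⟨hBX, hBc, hBs, hBmin⟩, huB, hvB⟩
      have hsubUV : ({u, v} : Finset (GaloisField 2 m)) ⊆ B := by
        intro x hx
        rcases Finset.mem_insert.mp hx with rfl | hx
        · exact huB
        · exact Finset.mem_singleton.mp hx ▸ hvB
      have hcd : (B \ {u, v}).card = 1 := by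
        rw [Finset.card_sdiff_of_subset hsubUV, hBc, Finset.card_pair huv]
      obtain ⟨x, hx⟩ := Finset.card_eq_one.mp hcd
      have hxmem : x ∈ B \ ({u, v} : Finset (GaloisField 2 m)) := by
        rw [hx]; exact Finset.mem_singleton_self x
      rw [Finset.mem_sdiff] at hxmem
      have hBeq : B = insert x {u, v} := by
        have hun := Finset.sdiff_union_of_subset hsubUV
        rw [hx] at hun
        rw [← hun]
        ext a
        simp only [Finset.mem_union, Finset.mem_insert, Finset.mem_singleton]
      have hxval : x = w := by
        have hsx : x + (u + v) = 1 := by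
          rw [← hBs, hBeq, Finset.sum_insert hxmem.2, Finset.sum_pair huv]
          rfl
        linear_combination hsx - (u + v) * htwo - hwdef
      rw [hBeq, hxval, hB0def]
      ext a
      simp only [Finset.mem_insert, Finset.mem_singleton]
      tauto
    · rintro rfl
      exact ⟨hB0mem, by rw [hmemB0]; left; rfl, by rw [hmemB0]; right; left; rfl⟩
  rw [hkey, Set.ncard_singleton]
end
end

section
/- Suppose m ≥ 3. Then every element x ∈ X is contained in exactly r_3 = (2^m − 4)/2! blocks of W_3, and the total number of blocks is |W_3| = (2^m − 2)(2^m − 4)/3!. -/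
open scoped Classical

noncomputable section

/-!
In characteristic two a three-element subset of `X` with sum `1` is automatically minimal: the
complement of a proper part with sum `1` would consist of one or two elements with sum `0`, that is,
of `0` itself or of a repeated element. The blocks through `x` are then the sets `{x, a, a + x + 1}`
with `a ∉ {0, 1, x, x + 1}`, each arising from exactly two values of `a`, so `2 r₃ = q - 4`.
Counting incidences between `X` and `W₃` gives `3 |W₃| = (q - 2) r₃`.
-/

open Finset

section CharTwo

variable {K : Type*} [CommRing K] [CharP K 2]

lemma sum_ne_zero_of_card_le_two {S : Finset K} (hS : S.Nonempty) (h2 : #S ≤ 2)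
    (h0 : (0 : K) ∉ S) : S.sum id ≠ 0 := by
  obtain h1 | h2 : #S = 1 ∨ #S = 2 := by have := hS.card_pos; omega
  · obtain ⟨c, rfl⟩ := card_eq_one.mp h1
    simpa [eq_comm] using h0
  · obtain ⟨c, d, hcd, rfl⟩ := card_eq_two.mp h2
    simpa [sum_pair hcd, CharTwo.add_eq_zero] using hcd

lemma sum_ne_one_of_ssubset {B I : Finset K} (hB3 : #B = 3) (h0 : (0 : K) ∉ B)
    (hB : B.sum id = 1) (hIB : I ⊂ B) (hI : I.Nonempty) : I.sum id ≠ 1 := by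
  intro hI1
  have hsplit : (B \ I).sum id + I.sum id = B.sum id := sum_sdiff hIB.subset
  refine sum_ne_zero_of_card_le_two (sdiff_nonempty.mpr (not_subset_of_ssubset hIB)) ?_
    (fun h => h0 (mem_sdiff.mp h).1) ?_
  · rw [card_sdiff_of_subset hIB.subset, hB3]
    have := hI.card_pos
    omega
  · rwa [hI1, hB, add_eq_right] at hsplit

end CharTwo

section Triples

variable (K : Type*) [CommRing K] [Fintype K]

def sumOneTriples : Finset (Finset K) :=
  {B ∈ ({0, 1}ᶜ : Finset K).powersetCard 3 | B.sum id = 1}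

variable {K}

lemma mem_sumOneTriples {B : Finset K} :
    B ∈ sumOneTriples K ↔ B ⊆ {0, 1}ᶜ ∧ #B = 3 ∧ B.sum id = 1 := by
  rw [sumOneTriples, mem_filter, mem_powersetCard, and_assoc]

variable [CharP K 2]

lemma triple_mem_sumOneTriples {x a : K} (hx0 : x ≠ 0) (hx1 : x ≠ 1)
    (ha : a ∉ ({0, 1, x, x + 1} : Finset K)) : {x, a, a + x + 1} ∈ sumOneTriples K := by
  simp only [mem_insert, mem_singleton, not_or] at ha
  rw [mem_sumOneTriples, sum_insert (by grind), sum_pair (by grind),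
    card_insert_of_notMem (by grind), card_pair (by grind)]
  refine ⟨fun z hz => ?_, rfl, by grind⟩
  simp only [mem_insert, mem_singleton, mem_compl] at hz ⊢
  grind

lemma eq_triple_of_mem {B : Finset K} (hB : B ∈ sumOneTriples K) {x a : K} (hx : x ∈ B)
    (ha : a ∈ B) (hax : a ≠ x) : B = {x, a, a + x + 1} := by
  obtain ⟨-, hB3, hB1⟩ := mem_sumOneTriples.mp hB
  have ha' : a ∈ B.erase x := mem_erase.mpr ⟨hax, ha⟩
  obtain ⟨b, hb⟩ : ∃ b, (B.erase x).erase a = {b} := by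
    rw [← card_eq_one, card_erase_of_mem ha', card_erase_of_mem hx, hB3]
  have hsum : x + (a + b) = 1 := by
    rw [← hB1, ← add_sum_erase _ _ hx, ← add_sum_erase _ _ ha', hb, sum_singleton]; rfl
  rw [← insert_erase hx, ← insert_erase ha', hb]
  grind

lemma filter_triple_eq_erase {B : Finset K} (hB : B ∈ sumOneTriples K) {x : K} (hx : x ∈ B) :
    {a ∈ ({0, 1, x, x + 1}ᶜ : Finset K) | {x, a, a + x + 1} = B} = B.erase x := by
  ext a
  simp only [mem_filter, mem_compl, mem_insert, mem_singleton, not_or, mem_erase]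
  constructor
  · rintro ⟨⟨-, -, hax, -⟩, rfl⟩
    simp [hax]
  · rintro ⟨hax, ha⟩
    have hBX := (mem_sumOneTriples.mp hB).1
    have hB_eq := eq_triple_of_mem hB hx ha hax
    have ha' : a ∉ ({0, 1} : Finset K) := mem_compl.mp (hBX ha)
    have hb : a + x + 1 ∉ ({0, 1} : Finset K) := mem_compl.mp (hBX (by rw [hB_eq]; simp))
    simp only [mem_insert, mem_singleton, not_or] at ha' hb
    exact ⟨⟨ha'.1, ha'.2, hax, by grind⟩, hB_eq.symm⟩

lemma two_mul_card_filter_mem_sumOneTriples {x : K} (hx0 : x ≠ 0) (hx1 : x ≠ 1) :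
    2 * #{B ∈ sumOneTriples K | x ∈ B} = Fintype.card K - 4 := by
  have hA : #({0, 1, x, x + 1}ᶜ : Finset K) = Fintype.card K - 4 := by
    rw [card_compl, card_insert_of_notMem (by simp; grind), card_insert_of_notMem (by simp; grind),
      card_pair (by grind)]
  have hmaps : ∀ a ∈ ({0, 1, x, x + 1}ᶜ : Finset K),
      {x, a, a + x + 1} ∈ {B ∈ sumOneTriples K | x ∈ B} := fun a ha =>
    mem_filter.mpr ⟨triple_mem_sumOneTriples hx0 hx1 (mem_compl.mp ha), mem_insert_self _ _⟩
  have hfiber : ∀ B ∈ {B ∈ sumOneTriples K | x ∈ B},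
      #{a ∈ ({0, 1, x, x + 1}ᶜ : Finset K) | {x, a, a + x + 1} = B} = 2 := by
    intro B hB
    obtain ⟨hB, hx⟩ := mem_filter.mp hB
    rw [filter_triple_eq_erase hB hx, card_erase_of_mem hx, (mem_sumOneTriples.mp hB).2.1]
  rw [← hA, card_eq_sum_card_fiberwise hmaps, sum_congr rfl hfiber, sum_const, smul_eq_mul,
    mul_comm]

lemma six_mul_card_sumOneTriples :
    6 * #(sumOneTriples K) = (Fintype.card K - 2) * (Fintype.card K - 4) := by
  have hX : #({0, 1}ᶜ : Finset K) = Fintype.card K - 2 := by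
    have : Nontrivial K := CharP.nontrivial_of_char_ne_one (R := K) (by norm_num : 2 ≠ 1)
    rw [card_compl, card_pair zero_ne_one]
  have habove : ∀ x ∈ ({0, 1}ᶜ : Finset K),
      2 * #((sumOneTriples K).bipartiteAbove (· ∈ ·) x) = Fintype.card K - 4 := by
    intro x hx
    simp only [mem_compl, mem_insert, mem_singleton, not_or] at hx
    exact two_mul_card_filter_mem_sumOneTriples hx.1 hx.2
  have hbelow : ∀ B ∈ sumOneTriples K, #(({0, 1}ᶜ : Finset K).bipartiteBelow (· ∈ ·) B) = 3 := by
    intro B hB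
    obtain ⟨hBX, hB3, -⟩ := mem_sumOneTriples.mp hB
    rw [bipartiteBelow, filter_mem_eq_inter, inter_eq_right.mpr hBX, hB3]
  calc 6 * #(sumOneTriples K)
      = 2 * ∑ B ∈ sumOneTriples K, #(({0, 1}ᶜ : Finset K).bipartiteBelow (· ∈ ·) B) := by
        rw [sum_congr rfl hbelow, sum_const, smul_eq_mul]; ring
    _ = ∑ x ∈ ({0, 1}ᶜ : Finset K), 2 * #((sumOneTriples K).bipartiteAbove (· ∈ ·) x) := by
        rw [← sum_card_bipartiteAbove_eq_sum_card_bipartiteBelow, mul_sum]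
    _ = (Fintype.card K - 2) * (Fintype.card K - 4) := by
        rw [sum_congr rfl habove, sum_const, smul_eq_mul, hX]

end Triples

lemma designW_three_eq_coe (m : ℕ) [Fintype (GaloisField 2 m)] :
    designW m 3 = ↑(sumOneTriples (GaloisField 2 m)) := by
  have hX : designX m = ↑({0, 1}ᶜ : Finset (GaloisField 2 m)) := by
    ext x
    simp [designX, and_comm]
  ext B
  rw [mem_coe, mem_sumOneTriples, designW, Set.mem_ofPred_eq, hX, coe_subset]
  refine ⟨fun ⟨hBX, hB3, hB1, _⟩ => ⟨hBX, hB3, hB1⟩, fun ⟨hBX, hB3, hB1⟩ => ⟨hBX, hB3, hB1, ?_⟩⟩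
  intro I hIB hI hIB'
  exact sum_ne_one_of_ssubset hB3 (fun h0 => by simpa using hBX h0) hB1
    (ssubset_of_subset_of_ne hIB hIB') hI

/-- For `m ≥ 3`, every `x ∈ X` lies in exactly `r_3` blocks of `W_3`, and the total
number of blocks is `|W_3| = b_3`. -/
theorem repetition_and_block_numbers_W3 (m : ℕ) (hm : 3 ≤ m) :
    (∀ x ∈ designX m, {B ∈ designW m 3 | x ∈ B}.ncard = (2 ^ m - 4) / Nat.factorial 2) ∧
    (designW m 3).ncard = (2 ^ m - 2) * (2 ^ m - 4) / Nat.factorial 3 := by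
  have : Fintype (GaloisField 2 m) := Fintype.ofFinite _
  have hq : Fintype.card (GaloisField 2 m) = 2 ^ m := by
    rw [← Nat.card_eq_fintype_card]
    exact GaloisField.card 2 m (by omega)
  rw [designW_three_eq_coe, ← hq]
  refine ⟨fun x hx => ?_, ?_⟩
  · rw [← two_mul_card_filter_mem_sumOneTriples hx.1 hx.2, Nat.factorial_two,
      Nat.mul_div_cancel_left _ two_pos, ← Set.ncard_coe_finset, coe_filter]
    rfl
  · rw [Set.ncard_coe_finset, ← six_mul_card_sumOneTriples]
    exact (Nat.mul_div_cancel_left _ (by norm_num)).symm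
end
end

section
/- Given distinct u, v ∈ X with u + v ≠ 1, one has ω_{u,3} = ω_{v+1,3} and ω_{v,3} = ω_{u+1,3}; moreover, for every integer k ≥ 4 and all distinct α, β ∈ S = {u, v, u+1, v+1}, the sets ω_{α,k} and ω_{β,k} are disjoint. -/
open scoped Classical

noncomputable section

/-- `Ω_{z,k}`: the blocks of `W_k` that contain `z`. -/
def OmegaSet (m k : ℕ) (z : GaloisField 2 m) : Set (Finset (GaloisField 2 m)) :=
  {B ∈ designW m k | z ∈ B}

/-- `ω_{α,k}`: the blocks `B ∈ Ω_{z,k}` with `α ∈ B \\ {z}`. -/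
def omegaSet (m k : ℕ) (z α : GaloisField 2 m) : Set (Finset (GaloisField 2 m)) :=
  {B ∈ OmegaSet m k z | α ∈ B ∧ α ≠ z}

/-- `τ_{α,k}`: the blocks `B ∈ Ω_{z,k}` containing distinct `a, b ∈ B \\ {z}`
with `a + b = α`. -/
def tauSet (m k : ℕ) (z α : GaloisField 2 m) : Set (Finset (GaloisField 2 m)) :=
  {B ∈ OmegaSet m k z | ∃ a ∈ B, ∃ b ∈ B, a ≠ z ∧ b ≠ z ∧ a ≠ b ∧ a + b = α}

lemma gf_char2 {m : ℕ} : (2 : GaloisField 2 m) = 0 := by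
  have := CharP.cast_eq_zero (GaloisField 2 m) 2
  simpa using this

lemma sum_ne_zero_of_proper {m k : ℕ} {B T : Finset (GaloisField 2 m)}
    (hB : B ∈ designW m k) (hTB : T ⊆ B) (hTne : T.Nonempty) (hTB' : T ≠ B) :
    T.sum id ≠ 0 := by
  obtain ⟨-, -, hsum, hmin⟩ := hB
  intro h0
  have hdsum : (B \ T).sum id = 1 := by
    rw [← Finset.sum_sdiff hTB, h0, add_zero] at hsum
    exact hsum
  refine hmin (B \ T) (Finset.sdiff_subset) ?_ ?_ hdsum
  · exact Finset.sdiff_nonempty.mpr (fun h => hTB' (subset_antisymm hTB h))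
  · intro h
    obtain ⟨x, hx⟩ := hTne
    have hxB : x ∈ B \ T := by rw [h]; exact hTB hx
    exact (Finset.mem_sdiff.mp hxB).2 hx

lemma no_pair {m k : ℕ} (hk : 4 ≤ k) {B : Finset (GaloisField 2 m)}
    (hB : B ∈ designW m k) {z a b : GaloisField 2 m}
    (hzB : z ∈ B) (haB : a ∈ B) (hbB : b ∈ B)
    (haz : a ≠ z) (hbz : b ≠ z) (hab : a ≠ b)
    (h : a + b = 1 ∨ a + b = z ∨ a + b = z + 1) : False := by
  obtain ⟨hX, hcard, hsum, hmin⟩ := hB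
  have hz2 : z + z = 0 := by linear_combination z * (gf_char2 (m := m))
  have hznm : z ∉ ({a, b} : Finset (GaloisField 2 m)) := by
    simp only [Finset.mem_insert, Finset.mem_singleton]
    rintro (rfl | rfl) <;> simp_all
  have hsubp : ({a, b} : Finset (GaloisField 2 m)) ⊆ B := by
    simp [Finset.insert_subset_iff, haB, hbB]
  have hsub3 : ({z, a, b} : Finset (GaloisField 2 m)) ⊆ B := by
    simp [Finset.insert_subset_iff, hzB, haB, hbB]
  have hcard3 : ({z, a, b} : Finset (GaloisField 2 m)).card ≤ 3 := by
    apply le_trans (Finset.card_insert_le _ _)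
    have := Finset.card_insert_le a ({b} : Finset (GaloisField 2 m))
    simp at this ⊢
    omega
  have hne3 : ({z, a, b} : Finset (GaloisField 2 m)) ≠ B := by
    intro h'
    rw [h'] at hcard3
    omega
  have hsum3 : ({z, a, b} : Finset (GaloisField 2 m)).sum id = z + (a + b) := by
    rw [Finset.sum_insert hznm, Finset.sum_pair hab]
    rfl
  rcases h with h | h | h
  · refine hmin {a, b} hsubp ⟨a, by simp⟩ ?_ ?_
    · intro h'
      have := Finset.card_insert_le a ({b} : Finset (GaloisField 2 m))
      rw [h', hcard] at this
      simp at this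
      omega
    · rw [Finset.sum_pair hab]
      simpa using h
  · refine sum_ne_zero_of_proper ⟨hX, hcard, hsum, hmin⟩ hsub3 ⟨z, by simp⟩ hne3 ?_
    rw [hsum3, h, hz2]
  · refine hmin {z, a, b} hsub3 ⟨z, by simp⟩ hne3 ?_
    rw [hsum3, h, ← add_assoc, hz2, zero_add]

lemma omega3_mem {m : ℕ} {z a b : GaloisField 2 m} (hzab : z + (a + b) = 1)
    (hbz : b ≠ z) {B : Finset (GaloisField 2 m)}
    (hB : B ∈ omegaSet m 3 z a) : B ∈ omegaSet m 3 z b := by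
  obtain ⟨⟨⟨hX, hcard, hsum, hmin⟩, hzB⟩, haB, haz⟩ := hB
  have hsub : ({z, a} : Finset (GaloisField 2 m)) ⊆ B := by
    simp [Finset.insert_subset_iff, hzB, haB]
  have hcard2 : ({z, a} : Finset (GaloisField 2 m)).card = 2 :=
    Finset.card_pair (Ne.symm haz)
  have h1 : (B \ {z, a}).card = 1 := by
    rw [Finset.card_sdiff_of_subset hsub, hcard, hcard2]
  obtain ⟨w, hw⟩ := Finset.card_eq_one.mp h1
  have hwmem : w ∈ B \ ({z, a} : Finset (GaloisField 2 m)) := by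
    rw [hw]; exact Finset.mem_singleton_self w
  have hwB : w ∈ B := (Finset.mem_sdiff.mp hwmem).1
  have hwz : w ∉ ({z, a} : Finset (GaloisField 2 m)) := (Finset.mem_sdiff.mp hwmem).2
  have hsumw : w + (z + a) = 1 := by
    have := Finset.sum_sdiff (f := id) hsub
    rw [hw, hsum, Finset.sum_singleton, Finset.sum_pair (Ne.symm haz)] at this
    simpa using this
  have hwb : w = b := by linear_combination hsumw - hzab
  subst hwb
  exact ⟨⟨⟨hX, hcard, hsum, hmin⟩, hzB⟩, hwB, hbz⟩

/-- For distinct `u, v ∈ X` with `u + v ≠ 1` and `z = u + v`: `ω_{u,3} = ω_{v+1,3}` and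
`ω_{v,3} = ω_{u+1,3}`; moreover for every `k ≥ 4` and all distinct `α, β ∈ S = {u, v, u+1, v+1}`
the sets `ω_{α,k}` and `ω_{β,k}` are disjoint. -/
theorem omega_relations (m : ℕ) (hm : 1 ≤ m) (u v : GaloisField 2 m)
    (hu : u ∈ designX m) (hv : v ∈ designX m) (huv : u ≠ v) (hsum : u + v ≠ 1) :
    omegaSet m 3 (u + v) u = omegaSet m 3 (u + v) (v + 1) ∧
    omegaSet m 3 (u + v) v = omegaSet m 3 (u + v) (u + 1) ∧
    ∀ k, 4 ≤ k → ∀ α ∈ ({u, v, u + 1, v + 1} : Set (GaloisField 2 m)), ∀ β ∈ ({u, v, u + 1, v + 1} : Set (GaloisField 2 m)), α ≠ β →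
      omegaSet m k (u + v) α ∩ omegaSet m k (u + v) β = ∅ := by
  obtain ⟨hu0, hu1⟩ := hu
  obtain ⟨hv0, hv1⟩ := hv
  have hchar : (2 : GaloisField 2 m) = 0 := gf_char2
  have hzu : u ≠ u + v := fun h => hv0 (by linear_combination -h)
  have hzv : v ≠ u + v := fun h => hu0 (by linear_combination -h)
  have hzu1 : u + 1 ≠ u + v := fun h => hv1 (by linear_combination -h)
  have hzv1 : v + 1 ≠ u + v := fun h => hu1 (by linear_combination -h)
  refine ⟨?_, ?_, ?_⟩
  · ext B
    constructor
    · intro hB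
      exact omega3_mem (by linear_combination (u + v) * hchar) hzv1 hB
    · intro hB
      exact omega3_mem (by linear_combination (u + v) * hchar) hzu hB
  · ext B
    constructor
    · intro hB
      exact omega3_mem (by linear_combination (u + v) * hchar) hzu1 hB
    · intro hB
      exact omega3_mem (by linear_combination (u + v) * hchar) hzv hB
  · intro k hk α hα β hβ hne
    ext B
    simp only [Set.mem_inter_iff, Set.mem_empty_iff_false, iff_false, not_and]
    intro hA hB'
    obtain ⟨⟨hBW, hzB⟩, hαB, hαz⟩ := hA
    obtain ⟨⟨-, -⟩, hβB, hβz⟩ := hB'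
    simp only [Set.mem_insert_iff, Set.mem_singleton_iff] at hα hβ
    have key : ∀ a b : GaloisField 2 m,
        (a = u ∨ a = v ∨ a = u + 1 ∨ a = v + 1) →
        (b = u ∨ b = v ∨ b = u + 1 ∨ b = v + 1) → a ≠ b →
        (a + b = 1 ∨ a + b = u + v ∨ a + b = u + v + 1) := by
      have L1 : ∀ x : GaloisField 2 m, x + (x + 1) = 1 := fun x => by
        linear_combination x * hchar
      have L1' : ∀ x : GaloisField 2 m, x + 1 + x = 1 := fun x => by
        linear_combination x * hchar
      have L2 : ∀ x y : GaloisField 2 m, x + 1 + (y + 1) = x + y := fun x y => by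
        linear_combination hchar
      have L2' : ∀ x y : GaloisField 2 m, x + 1 + (y + 1) = y + x := fun x y => by
        linear_combination hchar
      rintro a b (rfl | rfl | rfl | rfl) (rfl | rfl | rfl | rfl) hab <;>
        first
        | exact absurd rfl hab
        | (left; first | exact L1 _ | exact L1' _)
        | (right; left; first | ring1 | exact L2 _ _ | exact L2' _ _)
        | (right; right; ring1)
    exact no_pair hk hBW hzB hαB hβB hαz hβz hne (key α β hα hβ hne)
end
end

section
/- Given distinct u, v ∈ X with u + v ≠ 1, one has ω_{u,4} = τ_{v+1,4} and ω_{v,4} = τ_{u+1,4}; moreover, for every integer k ≥ 5 and all α, β ∈ S = {u, v, u+1, v+1}, the sets ω_{α,k} and τ_{β,k} are disjoint. -/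
open scoped Classical

noncomputable section

/-- In a block of `W_k`, no nonempty proper subset has zero sum. -/
lemma designW_no_zero_sum {m k : ℕ} {B I : Finset (GaloisField 2 m)}
    (hB : B ∈ designW m k) (hIB : I ⊆ B) (hne : I.Nonempty) (hIneB : I ≠ B)
    (h0 : I.sum id = 0) : False := by
  obtain ⟨-, -, hBsum, hmin⟩ := hB
  have hss := Finset.sum_sdiff (f := id) hIB
  rw [h0, add_zero] at hss
  refine hmin (B \ I) Finset.sdiff_subset ?_ ?_ (hss.trans hBsum)
  · rw [Finset.sdiff_nonempty]
    exact fun hBI => hIneB (Finset.Subset.antisymm hIB hBI)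
  · intro h
    obtain ⟨x, hx⟩ := hne
    have : x ∈ B \ I := by rw [h]; exact hIB hx
    simp [hx] at this

/-- The key lemma for `k = 4`. -/
lemma key4 (m : ℕ) (z w : GaloisField 2 m) (hwz : w ≠ z) :
    omegaSet m 4 z w = tauSet m 4 z (z + w + 1) := by
  have htwo : ∀ x : GaloisField 2 m, x + x = 0 := CharTwo.add_self_eq_zero
  ext B
  simp only [omegaSet, tauSet, OmegaSet, Set.mem_setOf_eq]
  constructor
  · rintro ⟨⟨hBW, hzB⟩, hwB, -⟩
    refine ⟨⟨hBW, hzB⟩, ?_⟩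
    obtain ⟨-, hcard, hBsum, -⟩ := hBW
    have hsub : ({z, w} : Finset (GaloisField 2 m)) ⊆ B := by
      intro x hx; simp only [Finset.mem_insert, Finset.mem_singleton] at hx
      rcases hx with rfl | rfl <;> assumption
    have hc2 : ({z, w} : Finset (GaloisField 2 m)).card = 2 := by
      rw [Finset.card_insert_of_notMem (by simp [hwz.symm]), Finset.card_singleton]
    have hcd : (B \ {z, w}).card = 2 := by
      rw [Finset.card_sdiff_of_subset hsub, hcard, hc2]
    obtain ⟨a, b, hab, hE⟩ := Finset.card_eq_two.mp hcd
    have haB : a ∈ B \ {z, w} := by rw [hE]; simp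
    have hbB : b ∈ B \ {z, w} := by rw [hE]; simp
    simp only [Finset.mem_sdiff, Finset.mem_insert, Finset.mem_singleton, not_or] at haB hbB
    have hss := Finset.sum_sdiff (f := id) hsub
    rw [hE, Finset.sum_pair hab, Finset.sum_pair (fun h : z = w => hwz h.symm),
      hBsum] at hss
    refine ⟨a, haB.1, b, hbB.1, haB.2.1, hbB.2.1, hab, ?_⟩
    simp only [id] at hss
    linear_combination hss - htwo z - htwo w
  · rintro ⟨⟨hBW, hzB⟩, a, haB, b, hbB, haz, hbz, hab, habs⟩
    refine ⟨⟨hBW, hzB⟩, ?_, hwz⟩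
    obtain ⟨-, hcard, hBsum, -⟩ := hBW
    have hsub : ({z, a, b} : Finset (GaloisField 2 m)) ⊆ B := by
      intro x hx
      simp only [Finset.mem_insert, Finset.mem_singleton] at hx
      rcases hx with rfl | rfl | rfl <;> assumption
    have hc3 : ({z, a, b} : Finset (GaloisField 2 m)).card = 3 := by
      rw [Finset.card_insert_of_notMem (by simp [Ne.symm haz, Ne.symm hbz]),
        Finset.card_insert_of_notMem (by simp [hab]), Finset.card_singleton]
    have hcd : (B \ {z, a, b}).card = 1 := by
      rw [Finset.card_sdiff_of_subset hsub, hcard, hc3]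
    obtain ⟨c, hE⟩ := Finset.card_eq_one.mp hcd
    have hcB : c ∈ B \ {z, a, b} := by rw [hE]; simp
    have hss := Finset.sum_sdiff (f := id) hsub
    rw [hE, Finset.sum_singleton, hBsum] at hss
    rw [Finset.sum_insert (by simp [Ne.symm haz, Ne.symm hbz]),
      Finset.sum_pair hab] at hss
    simp only [id] at hss
    have hcw : c = w := by linear_combination hss - habs - htwo z - htwo w
    rw [Finset.mem_sdiff] at hcB
    exact hcw ▸ hcB.1

/-- The core disjointness argument for `k ≥ 5`. -/
lemma core_disjoint {m k : ℕ} {B : Finset (GaloisField 2 m)} {z α β : GaloisField 2 m}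
    (hB : B ∈ designW m k) (hk : 5 ≤ k) (hzB : z ∈ B) (hαB : α ∈ B) (hαz : α ≠ z)
    {a b : GaloisField 2 m} (haB : a ∈ B) (hbB : b ∈ B) (haz : a ≠ z) (hbz : b ≠ z)
    (hab : a ≠ b) (hβ : a + b = β)
    (hs : α + β = 0 ∨ α + β = 1 ∨ α + β = z ∨ α + β = z + 1) : False := by
  have htwo : ∀ x : GaloisField 2 m, x + x = 0 := CharTwo.add_self_eq_zero
  obtain ⟨hBX, hcard, hBsum, hmin⟩ := hB
  have hBW : B ∈ designW m k := ⟨hBX, hcard, hBsum, hmin⟩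
  by_cases hαab : α = a ∨ α = b
  · -- get c ∈ B, c ≠ z with c = α + β
    obtain ⟨c, hcB, hcz, hc⟩ : ∃ c, c ∈ B ∧ c ≠ z ∧ c = α + β := by
      rcases hαab with rfl | rfl
      · exact ⟨b, hbB, hbz, by linear_combination hβ - htwo α⟩
      · exact ⟨a, haB, haz, by linear_combination hβ - htwo α⟩
    rcases hs with h | h | h | h
    · exact (hBX hcB).1 (by rw [hc, h])
    · exact (hBX hcB).2 (by rw [hc, h])
    · exact hcz (by rw [hc, h])
    · -- c = z + 1 : the subset {z, c} has sum 1
      have hI : ({z, c} : Finset (GaloisField 2 m)) ⊆ B := by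
        intro x hx; simp only [Finset.mem_insert, Finset.mem_singleton] at hx
        rcases hx with rfl | rfl <;> assumption
      refine hmin {z, c} hI ⟨z, by simp⟩ ?_ ?_
      · intro hEq
        have : ({z, c} : Finset (GaloisField 2 m)).card ≤ 2 :=
          le_trans (Finset.card_insert_le _ _) (by simp)
        rw [hEq, hcard] at this; omega
      · rw [Finset.sum_pair (Ne.symm hcz)]
        simp only [id]
        linear_combination hc + h + htwo z
  · push_neg at hαab
    obtain ⟨hαa, hαb⟩ := hαab
    have hI3 : ({α, a, b} : Finset (GaloisField 2 m)) ⊆ B := by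
      intro x hx; simp only [Finset.mem_insert, Finset.mem_singleton] at hx
      rcases hx with rfl | rfl | rfl <;> assumption
    have hsum3 : ({α, a, b} : Finset (GaloisField 2 m)).sum id = α + β := by
      rw [Finset.sum_insert (by simp [hαa, hαb]), Finset.sum_pair hab]
      simp only [id]; rw [hβ]
    have hne3 : ({α, a, b} : Finset (GaloisField 2 m)) ≠ B := by
      intro hEq
      have h1 := Finset.card_insert_le α ({a, b} : Finset (GaloisField 2 m))
      have h2 := Finset.card_insert_le a ({b} : Finset (GaloisField 2 m))
      have h3 : ({b} : Finset (GaloisField 2 m)).card = 1 := Finset.card_singleton b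
      rw [hEq, hcard] at h1; omega
    have hzI3 : z ∉ ({α, a, b} : Finset (GaloisField 2 m)) := by
      simp [Ne.symm hαz, Ne.symm haz, Ne.symm hbz]
    have hI4 : (insert z ({α, a, b} : Finset (GaloisField 2 m))) ⊆ B := by
      rw [Finset.insert_subset_iff]; exact ⟨hzB, hI3⟩
    have hsum4 : (insert z ({α, a, b} : Finset (GaloisField 2 m))).sum id = z + (α + β) := by
      rw [Finset.sum_insert hzI3, hsum3]; rfl
    have hne4 : (insert z ({α, a, b} : Finset (GaloisField 2 m))) ≠ B := by
      intro hEq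
      have h0 := Finset.card_insert_le z ({α, a, b} : Finset (GaloisField 2 m))
      have h1 := Finset.card_insert_le α ({a, b} : Finset (GaloisField 2 m))
      have h2 := Finset.card_insert_le a ({b} : Finset (GaloisField 2 m))
      have h3 : ({b} : Finset (GaloisField 2 m)).card = 1 := Finset.card_singleton b
      rw [hEq, hcard] at h0; omega
    rcases hs with h | h | h | h
    · exact designW_no_zero_sum hBW hI3 ⟨α, by simp⟩ hne3 (by rw [hsum3, h])
    · exact hmin _ hI3 ⟨α, by simp⟩ hne3 (by rw [hsum3, h])
    · refine designW_no_zero_sum hBW hI4 ⟨z, by simp⟩ hne4 ?_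
      rw [hsum4, h]; exact htwo z
    · refine hmin _ hI4 ⟨z, by simp⟩ hne4 ?_
      rw [hsum4, h]
      linear_combination htwo z

/-- For distinct `u, v ∈ X` with `u + v ≠ 1` and `z = u + v`: `ω_{u,4} = τ_{v+1,4}` and
`ω_{v,4} = τ_{u+1,4}`; moreover for every `k ≥ 5` and all `α, β ∈ S = {u, v, u+1, v+1}`
the sets `ω_{α,k}` and `τ_{β,k}` are disjoint. -/
theorem omega_tau_relations (m : ℕ) (hm : 1 ≤ m) (u v : GaloisField 2 m)
    (hu : u ∈ designX m) (hv : v ∈ designX m) (huv : u ≠ v) (hsum : u + v ≠ 1) :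
    omegaSet m 4 (u + v) u = tauSet m 4 (u + v) (v + 1) ∧
    omegaSet m 4 (u + v) v = tauSet m 4 (u + v) (u + 1) ∧
    ∀ k, 5 ≤ k → ∀ α ∈ ({u, v, u + 1, v + 1} : Set (GaloisField 2 m)), ∀ β ∈ ({u, v, u + 1, v + 1} : Set (GaloisField 2 m)),
      omegaSet m k (u + v) α ∩ tauSet m k (u + v) β = ∅ := by
  have htwo : ∀ x : GaloisField 2 m, x + x = 0 := CharTwo.add_self_eq_zero
  have huz : u ≠ u + v := fun h => hv.1 (by linear_combination -h)
  have hvz : v ≠ u + v := fun h => hu.1 (by linear_combination -h)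
  refine ⟨?_, ?_, ?_⟩
  · have e : u + v + u + 1 = v + 1 := by linear_combination htwo u
    have := key4 m (u + v) u huz
    rwa [e] at this
  · have e : u + v + v + 1 = u + 1 := by linear_combination htwo v
    have := key4 m (u + v) v hvz
    rwa [e] at this
  · intro k hk α hα β hβ
    rw [Set.eq_empty_iff_forall_notMem]
    rintro B ⟨hω, hτ⟩
    simp only [omegaSet, tauSet, OmegaSet, Set.mem_setOf_eq] at hω hτ
    obtain ⟨⟨hBW, hzB⟩, hαB, hαz⟩ := hω
    obtain ⟨-, a, haB, b, hbB, haz, hbz, hab, habs⟩ := hτ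
    have hs : α + β = 0 ∨ α + β = 1 ∨ α + β = u + v ∨ α + β = u + v + 1 := by
      simp only [Set.mem_insert_iff, Set.mem_singleton_iff] at hα hβ
      rcases hα with h1 | h1 | h1 | h1 <;> rcases hβ with h2 | h2 | h2 | h2 <;>
        rw [h1, h2] <;>
        first
          | (left; linear_combination htwo u)
          | (left; linear_combination htwo v)
          | (left; linear_combination htwo u + htwo 1)
          | (left; linear_combination htwo v + htwo 1)
          | (right; left; linear_combination htwo u)
          | (right; left; linear_combination htwo v)
          | (right; right; left; ring1)
          | (right; right; left; linear_combination htwo 1)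
          | (right; right; right; ring1)
    exact core_disjoint hBW hk hzB hαB hαz haB hbB haz hbz hab habs hs
end
end

section
/- Given distinct u, v ∈ X with u + v ≠ 1, one has τ_{u,5} = τ_{v+1,5} and τ_{v,5} = τ_{u+1,5}; moreover, for every integer k ≥ 6 and all distinct α, β ∈ S = {u, v, u+1, v+1}, the sets τ_{α,k} and τ_{β,k} are disjoint. -/
open scoped Classical

noncomputable section

lemma char2 (m : ℕ) : (2 : GaloisField 2 m) = 0 := by
  have := CharP.cast_eq_zero (GaloisField 2 m) 2
  exact_mod_cast this

/-- From a pair summing to `α` inside a block of `τ_{α,5}`, the complementary pair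
sums to `1 + z + α`. -/
lemma tau_flip (m : ℕ) (z α : GaloisField 2 m) {B : Finset (GaloisField 2 m)}
    (hB : B ∈ tauSet m 5 z α) : B ∈ tauSet m 5 z (1 + z + α) := by
  classical
  obtain ⟨⟨⟨hsub, hcard, hsum1, hmin⟩, hzB⟩, a, ha, b, hb, haz, hbz, hab, habs⟩ := hB
  have h2 := char2 m
  have ha' : a ∈ B.erase z := Finset.mem_erase.mpr ⟨haz, ha⟩
  have hb' : b ∈ (B.erase z).erase a :=
    Finset.mem_erase.mpr ⟨hab.symm, Finset.mem_erase.mpr ⟨hbz, hb⟩⟩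
  set C : Finset (GaloisField 2 m) := ((B.erase z).erase a).erase b with hC
  have e1 : id z + (B.erase z).sum id = B.sum id := Finset.add_sum_erase _ id hzB
  have e2 : id a + ((B.erase z).erase a).sum id = (B.erase z).sum id :=
    Finset.add_sum_erase _ id ha'
  have e3 : id b + C.sum id = ((B.erase z).erase a).sum id :=
    Finset.add_sum_erase _ id hb'
  simp only [id_eq] at e1 e2 e3
  have hsumC : C.sum id = 1 + z + α := by
    have hsum1' : (∑ x ∈ B, x) = 1 := hsum1
    show (∑ x ∈ C, x) = 1 + z + α
    linear_combination e1 + e2 + e3 + hsum1' - habs - (z + α) * h2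
  have hcardC : C.card = 2 := by
    rw [hC, Finset.card_erase_of_mem hb', Finset.card_erase_of_mem ha',
      Finset.card_erase_of_mem hzB, hcard]
  obtain ⟨c, d, hcd, hCeq⟩ := Finset.card_eq_two.mp hcardC
  have hcC : c ∈ C := by rw [hCeq]; exact Finset.mem_insert_self _ _
  have hdC : d ∈ C := by rw [hCeq]; simp
  have memB : ∀ x ∈ C, x ∈ B ∧ x ≠ z := by
    intro x hx
    have hx1 : x ∈ B.erase z := Finset.mem_of_mem_erase (Finset.mem_of_mem_erase hx)
    exact ⟨Finset.mem_of_mem_erase hx1, (Finset.mem_erase.mp hx1).1⟩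
  have hsumcd : c + d = 1 + z + α := by
    rw [hCeq] at hsumC
    rw [Finset.sum_pair hcd] at hsumC
    simpa using hsumC
  exact ⟨⟨⟨hsub, hcard, hsum1, hmin⟩, hzB⟩, c, (memB c hcC).1, d, (memB d hdC).1,
    (memB c hcC).2, (memB d hdC).2, hcd, hsumcd⟩

/-- Disjointness of `τ_{α,k}` and `τ_{β,k}` when `α + β ∈ {1, z, z+1}` and `k ≥ 6`. -/
lemma tau_disj (m k : ℕ) (hk : 6 ≤ k) (z α β : GaloisField 2 m)
    (hcase : α + β = 1 ∨ α + β = z ∨ α + β = z + 1) (hαβ : α ≠ β) :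
    tauSet m k z α ∩ tauSet m k z β = ∅ := by
  classical
  ext B
  simp only [Set.mem_inter_iff, Set.mem_empty_iff_false, iff_false]
  rintro ⟨⟨⟨⟨hsub, hcard, hsum1, hmin⟩, hzB⟩, a, ha, b, hb, haz, hbz, hab, habs⟩,
    ⟨_, c, hc, d, hd, hcz, hdz, hcd, hcds⟩⟩
  have h2 := char2 m
  set P : Finset (GaloisField 2 m) := {a, b} with hP
  set Q : Finset (GaloisField 2 m) := {c, d} with hQ
  have hPB : P ⊆ B := by
    intro x hx; rw [hP] at hx; rcases Finset.mem_insert.mp hx with rfl | hx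
    · exact ha
    · rw [Finset.mem_singleton.mp hx]; exact hb
  have hQB : Q ⊆ B := by
    intro x hx; rw [hQ] at hx; rcases Finset.mem_insert.mp hx with rfl | hx
    · exact hc
    · rw [Finset.mem_singleton.mp hx]; exact hd
  have hPsum : P.sum id = α := by rw [hP, Finset.sum_pair hab]; simpa using habs
  have hQsum : Q.sum id = β := by rw [hQ, Finset.sum_pair hcd]; simpa using hcds
  have hzP : z ∉ P := by
    rw [hP]; simp only [Finset.mem_insert, Finset.mem_singleton]
    rintro (rfl | rfl); exacts [haz rfl, hbz rfl]
  have hzQ : z ∉ Q := by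
    rw [hQ]; simp only [Finset.mem_insert, Finset.mem_singleton]
    rintro (rfl | rfl); exacts [hcz rfl, hdz rfl]
  set J : Finset (GaloisField 2 m) := (P \ Q) ∪ (Q \ P) with hJ
  have hJB : J ⊆ B := by
    intro x hx; rw [hJ] at hx
    rcases Finset.mem_union.mp hx with hx | hx
    · exact hPB (Finset.mem_sdiff.mp hx).1
    · exact hQB (Finset.mem_sdiff.mp hx).1
  have hzJ : z ∉ J := by
    rw [hJ]; intro hx
    rcases Finset.mem_union.mp hx with hx | hx
    · exact hzP (Finset.mem_sdiff.mp hx).1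
    · exact hzQ (Finset.mem_sdiff.mp hx).1
  have hdisj : Disjoint (P \ Q) (Q \ P) := disjoint_sdiff_sdiff
  have f1 : ((P \ (P ∩ Q)).sum id) + (P ∩ Q).sum id = P.sum id :=
    Finset.sum_sdiff Finset.inter_subset_left
  have f2 : ((Q \ (P ∩ Q)).sum id) + (P ∩ Q).sum id = Q.sum id := by
    exact Finset.sum_sdiff (f := id) (Finset.inter_subset_right : P ∩ Q ⊆ Q)
  rw [Finset.sdiff_inter_self_left] at f1
  have hQPQ : Q \ (P ∩ Q) = Q \ P := by
    rw [Finset.inter_comm, Finset.sdiff_inter_self_left]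
  rw [hQPQ] at f2
  have hJsum : J.sum id = α + β := by
    rw [hJ, Finset.sum_union hdisj]
    linear_combination f1 + f2 + hPsum + hQsum - (P ∩ Q).sum id * h2
  have hJne : J.Nonempty := by
    rw [Finset.nonempty_iff_ne_empty]
    intro hJe
    rw [hJ, Finset.union_eq_empty] at hJe
    have hPQ : P = Q :=
      le_antisymm (Finset.sdiff_eq_empty_iff_subset.mp hJe.1)
        (Finset.sdiff_eq_empty_iff_subset.mp hJe.2)
    apply hαβ
    rw [← hPsum, ← hQsum, hPQ]
  have hJcard : J.card ≤ 4 := by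
    have h1 : J.card ≤ (P \ Q).card + (Q \ P).card := Finset.card_union_le _ _
    have h2' : (P \ Q).card ≤ P.card := Finset.card_le_card (Finset.sdiff_subset)
    have h3 : (Q \ P).card ≤ Q.card := Finset.card_le_card (Finset.sdiff_subset)
    have h4 : P.card = 2 := Finset.card_pair hab
    have h5 : Q.card = 2 := Finset.card_pair hcd
    omega
  rcases hcase with hcase | hcase | hcase
  · exact hmin J hJB hJne (fun h => hzJ (h ▸ hzB)) (by rw [hJsum, hcase])
  · -- α + β = z : use the complement of insert z J
    have hins : insert z J ⊆ B := Finset.insert_subset hzB hJB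
    have hinscard : (insert z J).card ≤ 5 := by
      have := Finset.card_insert_le z J; omega
    have hsumins : (insert z J).sum id = 0 := by
      rw [Finset.sum_insert hzJ, hJsum, hcase]
      simp only [id_eq]
      linear_combination z * h2
    have hcomp : (B \ insert z J).sum id = 1 := by
      have := Finset.sum_sdiff (f := id) hins
      rw [hsumins, hsum1] at this
      simpa using this
    have hcompne : (B \ insert z J).Nonempty := by
      rw [← Finset.card_pos, Finset.card_sdiff_of_subset hins]
      have : (insert z J).card < B.card := by omega
      omega
    have hcompneq : B \ insert z J ≠ B := by
      intro h
      have : z ∉ B \ insert z J := by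
        simp [Finset.mem_sdiff]
      rw [h] at this
      exact this hzB
    exact hmin _ (Finset.sdiff_subset) hcompne hcompneq hcomp
  · -- α + β = z + 1 : use insert z J
    have hins : insert z J ⊆ B := Finset.insert_subset hzB hJB
    have hsumins : (insert z J).sum id = 1 := by
      rw [Finset.sum_insert hzJ, hJsum, hcase]
      simp only [id_eq]
      linear_combination z * h2
    have hinsne : insert z J ≠ B := by
      intro h
      have hc : (insert z J).card ≤ 5 := by
        have := Finset.card_insert_le z J; omega
      rw [h, hcard] at hc
      omega
    exact hmin _ hins (Finset.insert_nonempty _ _) hinsne hsumins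

/-- For distinct `u, v ∈ X` with `u + v ≠ 1` and `z = u + v`: `τ_{u,5} = τ_{v+1,5}` and
`τ_{v,5} = τ_{u+1,5}`; moreover for every `k ≥ 6` and all distinct `α, β ∈ S = {u, v, u+1, v+1}`
the sets `τ_{α,k}` and `τ_{β,k}` are disjoint. -/
theorem tau_relations (m : ℕ) (hm : 1 ≤ m) (u v : GaloisField 2 m)
    (hu : u ∈ designX m) (hv : v ∈ designX m) (huv : u ≠ v) (hsum : u + v ≠ 1) :
    tauSet m 5 (u + v) u = tauSet m 5 (u + v) (v + 1) ∧
    tauSet m 5 (u + v) v = tauSet m 5 (u + v) (u + 1) ∧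
    ∀ k, 6 ≤ k → ∀ α ∈ ({u, v, u + 1, v + 1} : Set (GaloisField 2 m)), ∀ β ∈ ({u, v, u + 1, v + 1} : Set (GaloisField 2 m)), α ≠ β →
      tauSet m k (u + v) α ∩ tauSet m k (u + v) β = ∅ := by
  have h2 := char2 m
  refine ⟨?_, ?_, ?_⟩
  · ext B
    constructor
    · intro h
      have := tau_flip m (u + v) u h
      have e : 1 + (u + v) + u = v + 1 := by linear_combination u * h2
      rwa [e] at this
    · intro h
      have := tau_flip m (u + v) (v + 1) h
      have e : 1 + (u + v) + (v + 1) = u := by linear_combination (v + 1) * h2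
      rwa [e] at this
  · ext B
    constructor
    · intro h
      have := tau_flip m (u + v) v h
      have e : 1 + (u + v) + v = u + 1 := by linear_combination v * h2
      rwa [e] at this
    · intro h
      have := tau_flip m (u + v) (u + 1) h
      have e : 1 + (u + v) + (u + 1) = v := by linear_combination (u + 1) * h2
      rwa [e] at this
  · intro k hk α hα β hβ hαβ
    have hcase : α + β = 1 ∨ α + β = u + v ∨ α + β = (u + v) + 1 := by
      simp only [Set.mem_insert_iff, Set.mem_singleton_iff] at hα hβ
      rcases hα with rfl | rfl | rfl | rfl <;> rcases hβ with rfl | rfl | rfl | rfl <;>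
        first
          | exact absurd rfl hαβ
          | (left; linear_combination u * h2)
          | (left; linear_combination v * h2)
          | (left; linear_combination α * h2)
          | (left; linear_combination β * h2)
          | (right; left; ring1)
          | (right; left; linear_combination h2)
          | (right; right; ring1)
    exact tau_disj m k hk (u + v) α β hcase hαβ
end
end

section
/- Suppose m ≥ 4. Given distinct u, v ∈ X with u + v ≠ 1, for every α ∈ S = {u, v, u+1, v+1} the number of blocks in τ_{α,4} equals (2^m − 2^3)/2. -/
open scoped Classical

noncomputable section
set_option maxHeartbeats 1000000

private lemma flip2 {m : ℕ} (α x y : GaloisField 2 m) : α + x = y ↔ x = α + y := by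
  constructor
  · rintro rfl; rw [← add_assoc, CharTwo.add_self_eq_zero, zero_add]
  · rintro rfl; rw [← add_assoc, CharTwo.add_self_eq_zero, zero_add]


private lemma mem_W4 {m : ℕ} (B : Finset (GaloisField 2 m)) :
    B ∈ designW m 4 ↔ ((B : Set (GaloisField 2 m)) ⊆ designX m ∧ B.card = 4 ∧ B.sum id = 1) := by
  constructor
  · exact fun h => ⟨h.1, h.2.1, h.2.2.1⟩
  · rintro ⟨hX, h4, hs⟩
    refine ⟨hX, h4, hs, ?_⟩
    intro I hIB hne hIneB hI1
    have hcs : (B \ I).sum id + I.sum id = B.sum id := Finset.sum_sdiff hIB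
    rw [hI1, hs] at hcs
    have hcs0 : (B \ I).sum id = 0 := add_right_cancel (b := (1 : GaloisField 2 m))
      (by rw [hcs, zero_add])
    have hIlt : I.card < 4 := by
      rw [← h4]
      exact Finset.card_lt_card (hIB.ssubset_of_ne hIneB)
    have hIpos : 1 ≤ I.card := Finset.card_pos.mpr hne
    have hJcard : (B \ I).card = 4 - I.card := by rw [Finset.card_sdiff_of_subset hIB, h4]
    have h123 : I.card = 1 ∨ I.card = 2 ∨ I.card = 3 := by omega
    rcases h123 with h | h | h
    · obtain ⟨a, ha⟩ := Finset.card_eq_one.mp h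
      have haB : a ∈ B := hIB (by simp [ha])
      have : a = 1 := by rw [ha, Finset.sum_singleton] at hI1; exact hI1
      exact (hX haB).2 this
    · have : (B \ I).card = 2 := by omega
      obtain ⟨x, y, hxy, hJ⟩ := Finset.card_eq_two.mp this
      rw [hJ, Finset.sum_pair hxy] at hcs0
      have : y = x := by have := (flip2 x y 0).mp hcs0; rwa [add_zero] at this
      exact hxy this.symm
    · have : (B \ I).card = 1 := by omega
      obtain ⟨e, hJ⟩ := Finset.card_eq_one.mp this
      have heB : e ∈ B := Finset.mem_sdiff.mp (hJ ▸ Finset.mem_singleton_self e) |>.1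
      rw [hJ, Finset.sum_singleton] at hcs0
      exact (hX heB).1 hcs0


private lemma mem_tau4 {m : ℕ} (z α : GaloisField 2 m) (hz0 : z ≠ 0) (hz1 : z ≠ 1)
    (hα0 : α ≠ 0) (hα1 : α ≠ 1) (hαz : α ≠ z) (hαz1 : α ≠ z + 1)
    (B : Finset (GaloisField 2 m)) :
    B ∈ tauSet m 4 z α ↔ ∃ p : GaloisField 2 m,
      p ≠ 0 ∧ p ≠ 1 ∧ p ≠ z ∧ p ≠ 1 + z + α ∧ p ≠ α ∧ p ≠ α + 1 ∧ p ≠ α + z ∧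
      p ≠ α + (1 + z + α) ∧ B = {z, 1 + z + α, p, α + p} := by
  have h2 : (2 : GaloisField 2 m) = 0 := CharTwo.two_eq_zero
  have hc0 : (1 + z + α : GaloisField 2 m) ≠ 0 := fun h => hαz1 (by linear_combination h - (z+1)*h2)
  have hc1 : (1 + z + α : GaloisField 2 m) ≠ 1 := fun h => hαz (by linear_combination h - z*h2)
  have hcz : (1 + z + α : GaloisField 2 m) ≠ z := fun h => hα1 (by linear_combination h - h2)
  constructor
  · rintro ⟨⟨hW, hzB⟩, a, ha, b, hb, haz, hbz, hab, habα⟩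
    obtain ⟨hX, h4, hs⟩ := (mem_W4 B).mp hW
    have hzab : ({z, a, b} : Finset (GaloisField 2 m)) ⊆ B := by
      intro x hx; simp only [Finset.mem_insert, Finset.mem_singleton] at hx
      rcases hx with rfl | rfl | rfl <;> assumption
    have hscard : ({z, a, b} : Finset (GaloisField 2 m)).card = 3 := by
      rw [Finset.card_insert_of_notMem (by simp [Ne.symm haz, Ne.symm hbz]),
        Finset.card_insert_of_notMem (by simp [hab]), Finset.card_singleton]
    have hJ1 : (B \ {z, a, b}).card = 1 := by
      rw [Finset.card_sdiff_of_subset hzab, hscard, h4]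
    obtain ⟨d, hd⟩ := Finset.card_eq_one.mp hJ1
    have hdmem : d ∈ B \ ({z, a, b} : Finset (GaloisField 2 m)) :=
      hd ▸ Finset.mem_singleton_self d
    have hdB : d ∈ B := (Finset.mem_sdiff.mp hdmem).1
    have hdnot := (Finset.mem_sdiff.mp hdmem).2
    simp only [Finset.mem_insert, Finset.mem_singleton, not_or] at hdnot
    obtain ⟨hdz, hda, hdb⟩ := hdnot
    have hsum3 : (B \ ({z, a, b} : Finset (GaloisField 2 m))).sum id
        + ({z, a, b} : Finset (GaloisField 2 m)).sum id = B.sum id := Finset.sum_sdiff hzab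
    rw [hd, Finset.sum_singleton, hs] at hsum3
    have hsumzab : ({z, a, b} : Finset (GaloisField 2 m)).sum id = z + (a + b) := by
      rw [Finset.sum_insert (by simp [Ne.symm haz, Ne.symm hbz]),
        Finset.sum_insert (by simp [hab]), Finset.sum_singleton]
      rfl
    rw [hsumzab, habα] at hsum3
    simp only [id_eq] at hsum3
    have hdval : d = 1 + z + α := by linear_combination hsum3 - (z + α) * h2
    have hbval : b = α + a := by linear_combination habα - a * h2
    have hBeq : B = {z, 1 + z + α, a, α + a} := by
      have hB' : ({z, a, b} : Finset (GaloisField 2 m)) ∪ (B \ {z, a, b}) = B :=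
        Finset.union_sdiff_of_subset hzab
      ext x
      rw [← hB', hd]
      simp only [Finset.mem_union, Finset.mem_insert, Finset.mem_singleton, hdval, hbval]
      tauto
    refine ⟨a, (hX ha).1, (hX ha).2, haz, hdval ▸ Ne.symm hda, ?_, ?_, ?_, ?_, hBeq⟩
    · intro h; apply (hX hb).1; rw [hbval, h, CharTwo.add_self_eq_zero]
    · intro h; apply (hX hb).2; rw [hbval, h]
      rw [← add_assoc, CharTwo.add_self_eq_zero, zero_add]
    · intro h; apply hbz; rw [hbval, h]
      rw [← add_assoc, CharTwo.add_self_eq_zero, zero_add]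
    · intro h; apply hdb; rw [hdval, hbval, h]
      rw [← add_assoc, CharTwo.add_self_eq_zero, zero_add]
  · rintro ⟨p, hp0, hp1, hpz, hpc, hpα, hpα1, hpαz, hpαc, rfl⟩
    have hq0 : α + p ≠ 0 := fun h => hpα (by rw [(flip2 α p 0).mp h, add_zero])
    have hq1 : α + p ≠ 1 := fun h => hpα1 ((flip2 α p 1).mp h)
    have hqz : α + p ≠ z := fun h => hpαz ((flip2 α p z).mp h)
    have hqc : α + p ≠ 1 + z + α := fun h => hpαc ((flip2 α p (1 + z + α)).mp h)
    have hqp : α + p ≠ p := fun h => hα0 (by linear_combination h)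
    have hcard : ({z, 1 + z + α, p, α + p} : Finset (GaloisField 2 m)).card = 4 := by
      rw [Finset.card_insert_of_notMem (by simp [Ne.symm hcz, Ne.symm hpz, Ne.symm hqz]),
        Finset.card_insert_of_notMem (by simp [Ne.symm hpc, Ne.symm hqc]),
        Finset.card_insert_of_notMem (by simp [Ne.symm hqp]), Finset.card_singleton]
    have hsum : ({z, 1 + z + α, p, α + p} : Finset (GaloisField 2 m)).sum id = 1 := by
      rw [Finset.sum_insert (by simp [Ne.symm hcz, Ne.symm hpz, Ne.symm hqz]),
        Finset.sum_insert (by simp [Ne.symm hpc, Ne.symm hqc]),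
        Finset.sum_insert (by simp [Ne.symm hqp]), Finset.sum_singleton]
      show z + (1 + z + α + (p + (α + p))) = 1
      linear_combination (z + α + p) * h2
    have hXsub : (({z, 1 + z + α, p, α + p} : Finset (GaloisField 2 m)) : Set (GaloisField 2 m))
        ⊆ designX m := by
      intro x hx
      simp only [Finset.coe_insert, Set.mem_insert_iff, Finset.coe_singleton,
        Set.mem_singleton_iff] at hx
      rcases hx with rfl | rfl | rfl | rfl
      · exact ⟨hz0, hz1⟩
      · exact ⟨hc0, hc1⟩
      · exact ⟨hp0, hp1⟩
      · exact ⟨hq0, hq1⟩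
    have hzmem : z ∈ ({z, 1 + z + α, p, α + p} : Finset (GaloisField 2 m)) :=
      Finset.mem_insert_self _ _
    have hpmem : p ∈ ({z, 1 + z + α, p, α + p} : Finset (GaloisField 2 m)) := by
      simp only [Finset.mem_insert]; tauto
    have hqmem : α + p ∈ ({z, 1 + z + α, p, α + p} : Finset (GaloisField 2 m)) := by
      simp only [Finset.mem_insert, Finset.mem_singleton]; tauto
    have hpq : p + (α + p) = α := by
      rw [add_comm p (α + p), add_assoc, CharTwo.add_self_eq_zero, add_zero]
    exact ⟨⟨(mem_W4 _).mpr ⟨hXsub, hcard, hsum⟩, hzmem⟩, p, hpmem, α + p, hqmem, hpz, hqz,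
      Ne.symm hqp, hpq⟩


private def badF (m : ℕ) (z α : GaloisField 2 m) : Finset (GaloisField 2 m) :=
  {0, 1, z, 1 + z + α, α, α + 1, α + z, α + (1 + z + α)}

private def fB (m : ℕ) (z α p : GaloisField 2 m) : Finset (GaloisField 2 m) :=
  {z, 1 + z + α, p, α + p}

private lemma mem_badF {m : ℕ} (z α x : GaloisField 2 m) :
    x ∈ badF m z α ↔ (x = 0 ∨ x = 1 ∨ x = z ∨ x = 1 + z + α ∨ x = α ∨ x = α + 1 ∨
      x = α + z ∨ x = α + (1 + z + α)) := by
  simp [badF]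

private lemma key_count {m : ℕ} (hm : 4 ≤ m) (z α : GaloisField 2 m)
    (hz0 : z ≠ 0) (hz1 : z ≠ 1) (hα0 : α ≠ 0) (hα1 : α ≠ 1) (hαz : α ≠ z)
    (hαz1 : α ≠ z + 1) :
    (tauSet m 4 z α).ncard = (2 ^ m - 2 ^ 3) / 2 := by
  haveI : Fintype (GaloisField 2 m) := Fintype.ofFinite _
  have h2 : (2 : GaloisField 2 m) = 0 := CharTwo.two_eq_zero
  have hcard_univ : Fintype.card (GaloisField 2 m) = 2 ^ m := by
    rw [← Nat.card_eq_fintype_card]; exact GaloisField.card 2 m (by omega)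
  -- disequalities
  have d01 : (0 : GaloisField 2 m) ≠ 1 := zero_ne_one
  have d0z : (0 : GaloisField 2 m) ≠ z := Ne.symm hz0
  have d0c : (0 : GaloisField 2 m) ≠ 1 + z + α := fun h => hαz1 (by linear_combination -h - (z+1)*h2)
  have d0α : (0 : GaloisField 2 m) ≠ α := Ne.symm hα0
  have d0α1 : (0 : GaloisField 2 m) ≠ α + 1 := fun h => hα1 (by linear_combination -h - h2)
  have d0αz : (0 : GaloisField 2 m) ≠ α + z := fun h => hαz (by linear_combination -h - z*h2)
  have d0αc : (0 : GaloisField 2 m) ≠ α + (1 + z + α) := fun h => hz1 (by linear_combination -h - (1+α)*h2)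
  have d1z : (1 : GaloisField 2 m) ≠ z := Ne.symm hz1
  have d1c : (1 : GaloisField 2 m) ≠ 1 + z + α := fun h => hαz (by linear_combination h + α*h2)
  have d1α : (1 : GaloisField 2 m) ≠ α := Ne.symm hα1
  have d1α1 : (1 : GaloisField 2 m) ≠ α + 1 := fun h => hα0 (by linear_combination -h)
  have d1αz : (1 : GaloisField 2 m) ≠ α + z := fun h => hαz1 (by linear_combination -h - z*h2)
  have d1αc : (1 : GaloisField 2 m) ≠ α + (1 + z + α) := fun h => hz0 (by linear_combination -h - α*h2)
  have dzc : z ≠ 1 + z + α := fun h => hα1 (by linear_combination -h - h2)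
  have dzα : z ≠ α := Ne.symm hαz
  have dzα1 : z ≠ α + 1 := fun h => hαz1 (by linear_combination -h - h2)
  have dzαz : z ≠ α + z := fun h => hα0 (by linear_combination -h)
  have dzαc : z ≠ α + (1 + z + α) := fun h => one_ne_zero (α := GaloisField 2 m) (by linear_combination -h - α*h2)
  have dcα : (1 + z + α : GaloisField 2 m) ≠ α := fun h => hz1 (by linear_combination h - h2)
  have dcα1 : (1 + z + α : GaloisField 2 m) ≠ α + 1 := fun h => hz0 (by linear_combination h)
  have dcαz : (1 + z + α : GaloisField 2 m) ≠ α + z := fun h => one_ne_zero (α := GaloisField 2 m) (by linear_combination h)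
  have dcαc : (1 + z + α : GaloisField 2 m) ≠ α + (1 + z + α) := fun h => hα0 (by linear_combination -h)
  have dαα1 : α ≠ α + 1 := fun h => one_ne_zero (α := GaloisField 2 m) (by linear_combination -h)
  have dααz : α ≠ α + z := fun h => hz0 (by linear_combination -h)
  have dααc : α ≠ α + (1 + z + α) := fun h => hαz1 (by linear_combination -h - (z+1)*h2)
  have dα1αz : α + 1 ≠ α + z := fun h => hz1 (by linear_combination -h)
  have dα1αc : α + 1 ≠ α + (1 + z + α) := fun h => hαz (by linear_combination -h - z*h2)
  have dαzαc : α + z ≠ α + (1 + z + α) := fun h => hα1 (by linear_combination -h - h2)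
  -- badF has 8 elements
  have hbadeq : badF m z α = {0, 1, z, 1 + z + α, α, α + 1, α + z, α + (1 + z + α)} := rfl
  have hbadcard : (badF m z α).card = 8 := by
    rw [hbadeq,
      Finset.card_insert_of_notMem (by
        simp only [Finset.mem_insert, Finset.mem_singleton, not_or]
        exact ⟨d01, d0z, d0c, d0α, d0α1, d0αz, d0αc⟩),
      Finset.card_insert_of_notMem (by
        simp only [Finset.mem_insert, Finset.mem_singleton, not_or]
        exact ⟨d1z, d1c, d1α, d1α1, d1αz, d1αc⟩),
      Finset.card_insert_of_notMem (by
        simp only [Finset.mem_insert, Finset.mem_singleton, not_or]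
        exact ⟨dzc, dzα, dzα1, dzαz, dzαc⟩),
      Finset.card_insert_of_notMem (by
        simp only [Finset.mem_insert, Finset.mem_singleton, not_or]
        exact ⟨dcα, dcα1, dcαz, dcαc⟩),
      Finset.card_insert_of_notMem (by
        simp only [Finset.mem_insert, Finset.mem_singleton, not_or]
        exact ⟨dαα1, dααz, dααc⟩),
      Finset.card_insert_of_notMem (by
        simp only [Finset.mem_insert, Finset.mem_singleton, not_or]
        exact ⟨dα1αz, dα1αc⟩),
      Finset.card_insert_of_notMem (by
        simp only [Finset.mem_singleton]
        exact dαzαc),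
      Finset.card_singleton]
  set G : Finset (GaloisField 2 m) := Finset.univ \ badF m z α with hGdef
  have hGcard : G.card = 2 ^ m - 8 := by
    rw [hGdef, Finset.card_sdiff_of_subset (Finset.subset_univ _), hbadcard, Finset.card_univ, hcard_univ]
  have hclosed : ∀ q : GaloisField 2 m, q ∉ badF m z α → α + q ∉ badF m z α := by
    intro q hq hmem
    apply hq
    rw [mem_badF] at hmem ⊢
    rcases hmem with h | h | h | h | h | h | h | h
    · have hv : q = α := by rw [(flip2 α q 0).mp h, add_zero]
      exact Or.inr (Or.inr (Or.inr (Or.inr (Or.inl hv))))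
    · have hv : q = α + 1 := (flip2 α q 1).mp h
      exact Or.inr (Or.inr (Or.inr (Or.inr (Or.inr (Or.inl hv)))))
    · have hv : q = α + z := (flip2 α q z).mp h
      exact Or.inr (Or.inr (Or.inr (Or.inr (Or.inr (Or.inr (Or.inl hv))))))
    · have hv : q = α + (1 + z + α) := (flip2 α q _).mp h
      exact Or.inr (Or.inr (Or.inr (Or.inr (Or.inr (Or.inr (Or.inr hv))))))
    · have hv : q = 0 := by rw [(flip2 α q α).mp h, CharTwo.add_self_eq_zero]
      exact Or.inl hv
    · have hv : q = 1 := by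
        rw [(flip2 α q (α+1)).mp h, ← add_assoc, CharTwo.add_self_eq_zero, zero_add]
      exact Or.inr (Or.inl hv)
    · have hv : q = z := by
        rw [(flip2 α q (α+z)).mp h, ← add_assoc, CharTwo.add_self_eq_zero, zero_add]
      exact Or.inr (Or.inr (Or.inl hv))
    · have hv : q = 1 + z + α := by
        rw [(flip2 α q (α+(1+z+α))).mp h, ← add_assoc, CharTwo.add_self_eq_zero, zero_add]
      exact Or.inr (Or.inr (Or.inr (Or.inl hv)))
  have hTset : tauSet m 4 z α = ↑(G.image (fB m z α)) := by
    ext B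
    rw [mem_tau4 z α hz0 hz1 hα0 hα1 hαz hαz1 B, Finset.mem_coe, Finset.mem_image]
    constructor
    · rintro ⟨p, h1, h2', h3, h4, h5, h6, h7, h8, rfl⟩
      refine ⟨p, ?_, rfl⟩
      rw [hGdef, Finset.mem_sdiff]
      refine ⟨Finset.mem_univ _, ?_⟩
      rw [mem_badF]
      push_neg
      exact ⟨h1, h2', h3, h4, h5, h6, h7, h8⟩
    · rintro ⟨p, hpG, rfl⟩
      rw [hGdef, Finset.mem_sdiff, mem_badF] at hpG
      push_neg at hpG
      obtain ⟨-, h1, h2', h3, h4, h5, h6, h7, h8⟩ := hpG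
      exact ⟨p, h1, h2', h3, h4, h5, h6, h7, h8, rfl⟩
  have hfiber : ∀ B ∈ G.image (fB m z α), (G.filter fun p => fB m z α p = B).card = 2 := by
    intro B hB
    obtain ⟨p, hpG, rfl⟩ := Finset.mem_image.mp hB
    have hpbad : p ∉ badF m z α := (Finset.mem_sdiff.mp hpG).2
    have hqG : α + p ∈ G := Finset.mem_sdiff.mpr ⟨Finset.mem_univ _, hclosed p hpbad⟩
    have hqq : α + (α + p) = p := by rw [← add_assoc, CharTwo.add_self_eq_zero, zero_add]
    have hfq : fB m z α (α + p) = fB m z α p := by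
      show ({z, 1 + z + α, α + p, α + (α + p)} : Finset (GaloisField 2 m))
        = {z, 1 + z + α, p, α + p}
      rw [hqq, Finset.pair_comm (α + p) p]
    have hfilter : (G.filter fun q => fB m z α q = fB m z α p) = {p, α + p} := by
      ext q
      simp only [Finset.mem_filter, Finset.mem_insert, Finset.mem_singleton]
      constructor
      · rintro ⟨hqG', hq⟩
        have hqB : q ∈ fB m z α p := by
          rw [← hq]
          exact Finset.mem_insert.mpr (Or.inr (Finset.mem_insert.mpr (Or.inr
            (Finset.mem_insert_self _ _))))
        simp only [fB, Finset.mem_insert, Finset.mem_singleton] at hqB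
        have hqbad : q ∉ badF m z α := (Finset.mem_sdiff.mp hqG').2
        rcases hqB with h | h | h | h
        · exact absurd ((mem_badF z α q).mpr (Or.inr (Or.inr (Or.inl h)))) hqbad
        · exact absurd ((mem_badF z α q).mpr (Or.inr (Or.inr (Or.inr (Or.inl h))))) hqbad
        · exact Or.inl h
        · exact Or.inr h
      · rintro (rfl | rfl)
        · exact ⟨hpG, rfl⟩
        · exact ⟨hqG, hfq⟩
    rw [hfilter, Finset.card_insert_of_notMem (by
        simp only [Finset.mem_singleton]
        exact fun h => hα0 (by linear_combination -h)),
      Finset.card_singleton]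
  have hcount := Finset.card_eq_sum_card_fiberwise
    (s := G) (t := G.image (fB m z α)) (f := fB m z α)
    (fun x hx => Finset.mem_image_of_mem _ hx)
  rw [Finset.sum_congr rfl hfiber, Finset.sum_const, smul_eq_mul] at hcount
  rw [hTset, Set.ncard_coe_finset]
  have h1 : (G.image (fB m z α)).card * 2 = 2 ^ m - 8 := by rw [← hcount, hGcard]
  rw [show (2 : ℕ) ^ 3 = 8 from by norm_num, ← h1,
    Nat.mul_div_cancel _ (by norm_num : (0:ℕ) < 2)]


/-- For `m ≥ 4` and distinct `u, v ∈ X` with `u + v ≠ 1`, for every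
`α ∈ S = {u, v, u+1, v+1}` the number of blocks in `τ_{α,4}` equals `(2 ^ m - 2 ^ 3) / 2`. -/
theorem tau_card_4 (m : ℕ) (hm : 4 ≤ m) (u v : GaloisField 2 m)
    (hu : u ∈ designX m) (hv : v ∈ designX m) (huv : u ≠ v) (hsum : u + v ≠ 1) :
    ∀ α ∈ ({u, v, u + 1, v + 1} : Set (GaloisField 2 m)), (tauSet m 4 (u + v) α).ncard = (2 ^ m - 2 ^ 3) / 2 := by
  have h2 : (2 : GaloisField 2 m) = 0 := CharTwo.two_eq_zero
  have hz0 : u + v ≠ 0 := fun h => huv (by linear_combination h - v * h2)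
  intro α hα
  simp only [Set.mem_insert_iff, Set.mem_singleton_iff] at hα
  rcases hα with h | h | h | h <;> rw [h]
  · exact key_count hm (u + v) u hz0 hsum hu.1 hu.2
      (fun h => hv.1 (by linear_combination -h))
      (fun h => hv.2 (by linear_combination -h - h2))
  · exact key_count hm (u + v) v hz0 hsum hv.1 hv.2
      (fun h => hu.1 (by linear_combination -h))
      (fun h => hu.2 (by linear_combination -h - h2))
  · exact key_count hm (u + v) (u + 1) hz0 hsum
      (fun h => hu.2 (by linear_combination h - h2))
      (fun h => hu.1 (by linear_combination h))
      (fun h => hv.2 (by linear_combination -h))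
      (fun h => hv.1 (by linear_combination -h))
  · exact key_count hm (u + v) (v + 1) hz0 hsum
      (fun h => hv.2 (by linear_combination h - h2))
      (fun h => hv.1 (by linear_combination h))
      (fun h => hu.2 (by linear_combination -h))
      (fun h => hu.1 (by linear_combination -h))
end
end

section
/- Suppose m ≥ 5. Given distinct u, v ∈ X with u + v ≠ 1, for every α ∈ S = {u, v, u+1, v+1} the number of blocks in τ_{α,5} equals (2^m − 2^3)(2^m − 2^4)/4. -/
open scoped Classical
open Finset
noncomputable section


section main
variable {m : ℕ}



private lemma htwoF : (2 : GaloisField 2 m) = 0 := by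
  exact_mod_cast CharP.cast_eq_zero (GaloisField 2 m) 2

private def Vset (z α : GaloisField 2 m) : Finset (GaloisField 2 m) :=
  {0, 1, α, α + 1, z, z + 1, z + α, z + α + 1}

private lemma mem_Vset {z α x : GaloisField 2 m} :
    x ∈ Vset z α ↔ x = 0 ∨ x = 1 ∨ x = α ∨ x = α + 1 ∨ x = z ∨ x = z + 1 ∨ x = z + α ∨
      x = z + α + 1 := by
  simp [Vset]

private def phiV (z α : GaloisField 2 m) (p : ZMod 2 × ZMod 2 × ZMod 2) : GaloisField 2 m :=
  (ZMod.castHom dvd_rfl (GaloisField 2 m)) p.1 +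
    (ZMod.castHom dvd_rfl (GaloisField 2 m)) p.2.1 * α +
    (ZMod.castHom dvd_rfl (GaloisField 2 m)) p.2.2 * z

private lemma zmod2_cases : ∀ t : ZMod 2, t = 0 ∨ t = 1 := by decide

private lemma phiV_add (z α : GaloisField 2 m) (p q : ZMod 2 × ZMod 2 × ZMod 2) :
    phiV z α (p + q) = phiV z α p + phiV z α q := by
  simp only [phiV, Prod.fst_add, Prod.snd_add, map_add]
  ring

private lemma Vset_eq_image (z α : GaloisField 2 m) :
    Vset z α = Finset.image (phiV z α) Finset.univ := by
  ext x
  simp only [mem_Vset, Finset.mem_image, Finset.mem_univ, true_and]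
  constructor
  · rintro (rfl | rfl | rfl | rfl | rfl | rfl | rfl | rfl)
    · exact ⟨(0, 0, 0), by simp [phiV]⟩
    · exact ⟨(1, 0, 0), by simp [phiV]⟩
    · exact ⟨(0, 1, 0), by simp [phiV]⟩
    · exact ⟨(1, 1, 0), by simp [phiV]; ring⟩
    · exact ⟨(0, 0, 1), by simp [phiV]⟩
    · exact ⟨(1, 0, 1), by simp [phiV]; ring⟩
    · exact ⟨(0, 1, 1), by simp [phiV]; ring⟩
    · exact ⟨(1, 1, 1), by simp [phiV]; ring⟩
  · rintro ⟨⟨p1, p2, p3⟩, rfl⟩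
    rcases zmod2_cases p1 with rfl | rfl <;> rcases zmod2_cases p2 with rfl | rfl <;>
      rcases zmod2_cases p3 with rfl | rfl <;> simp [phiV] <;> ring_nf <;> tauto

private lemma add_mem_Vset {z α x y : GaloisField 2 m} (hx : x ∈ Vset z α) (hy : y ∈ Vset z α) :
    x + y ∈ Vset z α := by
  rw [Vset_eq_image] at hx hy ⊢
  obtain ⟨p, -, rfl⟩ := Finset.mem_image.mp hx
  obtain ⟨q, -, rfl⟩ := Finset.mem_image.mp hy
  exact Finset.mem_image.mpr ⟨p + q, Finset.mem_univ _, phiV_add z α p q⟩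

private lemma phiV_ker (z α : GaloisField 2 m) (hz0 : z ≠ 0) (hz1 : z ≠ 1) (ha0 : α ≠ 0)
    (ha1 : α ≠ 1) (haz : α ≠ z) (haz1 : α ≠ z + 1) :
    ∀ p, phiV z α p = 0 → p = 0 := by
  rintro ⟨p1, p2, p3⟩ h
  rcases zmod2_cases p1 with rfl | rfl <;> rcases zmod2_cases p2 with rfl | rfl <;>
      rcases zmod2_cases p3 with rfl | rfl <;> simp [phiV] at h ⊢
  · exact hz0 h
  · exact ha0 h
  · exact haz (by linear_combination h - z * htwoF)
  · exact hz1 (by linear_combination h - htwoF)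
  · exact ha1 (by linear_combination h - htwoF)
  · exact haz1 (by linear_combination h - (z + 1) * htwoF)

private lemma phiV_inj (z α : GaloisField 2 m) (hz0 : z ≠ 0) (hz1 : z ≠ 1) (ha0 : α ≠ 0)
    (ha1 : α ≠ 1) (haz : α ≠ z) (haz1 : α ≠ z + 1) :
    Function.Injective (phiV z α) := by
  intro p q h
  have hq : q + q = 0 := by
    rcases q with ⟨q1, q2, q3⟩
    have : ∀ t : ZMod 2, t + t = 0 := by decide
    simp [Prod.ext_iff, this]
  have h0 : phiV z α (p + q) = 0 := by
    rw [phiV_add, h]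
    exact CharTwo.add_self_eq_zero _
  have hpq := phiV_ker z α hz0 hz1 ha0 ha1 haz haz1 _ h0
  calc p = p + (q + q) := by rw [hq, add_zero]
    _ = (p + q) + q := by rw [add_assoc]
    _ = q := by rw [hpq, zero_add]

private lemma card_Vset (z α : GaloisField 2 m) (hz0 : z ≠ 0) (hz1 : z ≠ 1) (ha0 : α ≠ 0)
    (ha1 : α ≠ 1) (haz : α ≠ z) (haz1 : α ≠ z + 1) : (Vset z α).card = 8 := by
  rw [Vset_eq_image, Finset.card_image_of_injective _ (phiV_inj z α hz0 hz1 ha0 ha1 haz haz1)]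
  simp

private lemma disj_Vset {z α a : GaloisField 2 m} (ha : a ∉ Vset z α) :
    Disjoint (Vset z α) ((Vset z α).image (a + ·)) := by
  rw [Finset.disjoint_right]
  rintro x hx hx'
  obtain ⟨s, hs, rfl⟩ := Finset.mem_image.mp hx
  apply ha
  have : a = (a + s) + s := by linear_combination -s * htwoF
  rw [this]
  exact add_mem_Vset hx' hs



private lemma htwoF' : (2 : GaloisField 2 m) = 0 := by
  exact_mod_cast CharP.cast_eq_zero (GaloisField 2 m) 2

private lemma card5 {x1 x2 x3 x4 x5 : GaloisField 2 m} (h12 : x1 ≠ x2) (h13 : x1 ≠ x3)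
    (h14 : x1 ≠ x4) (h15 : x1 ≠ x5) (h23 : x2 ≠ x3) (h24 : x2 ≠ x4) (h25 : x2 ≠ x5)
    (h34 : x3 ≠ x4) (h35 : x3 ≠ x5) (h45 : x4 ≠ x5) :
    ({x1, x2, x3, x4, x5} : Finset (GaloisField 2 m)).card = 5 := by
  rw [card_insert_of_notMem (by simp [h12, h13, h14, h15]),
    card_insert_of_notMem (by simp [h23, h24, h25]),
    card_insert_of_notMem (by simp [h34, h35]),
    card_insert_of_notMem (by simp [h45]), card_singleton]

private lemma sum5 {x1 x2 x3 x4 x5 : GaloisField 2 m} (h12 : x1 ≠ x2) (h13 : x1 ≠ x3)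
    (h14 : x1 ≠ x4) (h15 : x1 ≠ x5) (h23 : x2 ≠ x3) (h24 : x2 ≠ x4) (h25 : x2 ≠ x5)
    (h34 : x3 ≠ x4) (h35 : x3 ≠ x5) (h45 : x4 ≠ x5) :
    ({x1, x2, x3, x4, x5} : Finset (GaloisField 2 m)).sum id = x1 + x2 + x3 + x4 + x5 := by
  rw [sum_insert (by simp [h12, h13, h14, h15]), sum_insert (by simp [h23, h24, h25]),
    sum_insert (by simp [h34, h35]), sum_insert (by simp [h45]), sum_singleton]
  simp [add_assoc]

private lemma min5 {B : Finset (GaloisField 2 m)} (h5 : B.card = 5) (hsum : B.sum id = 1)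
    (h0 : (0 : GaloisField 2 m) ∉ B) (h1 : (1 : GaloisField 2 m) ∉ B)
    (hp : ∀ x ∈ B, ∀ y ∈ B, x ≠ y → x + y ≠ 1) :
    ∀ I ⊆ B, I.Nonempty → I ≠ B → I.sum id ≠ 1 := by
  have single : ∀ K ⊆ B, K.card = 1 → K.sum id ≠ 1 ∧ K.sum id ≠ 0 := by
    intro K hK hK1
    obtain ⟨x, rfl⟩ := Finset.card_eq_one.mp hK1
    have hxB : x ∈ B := hK (mem_singleton_self x)
    simp only [sum_singleton, id]
    exact ⟨fun h => h1 (h ▸ hxB), fun h => h0 (h ▸ hxB)⟩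
  have double : ∀ K ⊆ B, K.card = 2 → K.sum id ≠ 1 ∧ K.sum id ≠ 0 := by
    intro K hK hK2
    obtain ⟨x, y, hxy, rfl⟩ := Finset.card_eq_two.mp hK2
    have hxB : x ∈ B := hK (by simp)
    have hyB : y ∈ B := hK (by simp)
    rw [Finset.sum_pair hxy]
    simp only [id]
    refine ⟨hp x hxB y hyB hxy, fun h => hxy ?_⟩
    linear_combination h - y * htwoF'
  intro I hIB hIne hInB hI1
  have hJ : (B \ I).sum id = 0 := by
    have h := Finset.sum_sdiff (f := id) hIB
    rw [hI1, hsum] at h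
    linear_combination h
  have hcardJ : (B \ I).card = 5 - I.card := by rw [card_sdiff_of_subset hIB, h5]
  have hI1c : 1 ≤ I.card := hIne.card_pos
  have hIlt : I.card < 5 := by
    have : I ⊂ B := Finset.ssubset_iff_subset_ne.mpr ⟨hIB, hInB⟩
    exact h5 ▸ Finset.card_lt_card this
  have hcases : I.card = 1 ∨ I.card = 2 ∨ (B \ I).card = 2 ∨ (B \ I).card = 1 := by omega
  rcases hcases with h | h | h | h
  · exact (single I hIB h).1 hI1
  · exact (double I hIB h).1 hI1
  · exact (double _ (sdiff_subset) h).2 hJ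
  · exact (single _ (sdiff_subset) h).2 hJ

private lemma designW_pair {B : Finset (GaloisField 2 m)} (hB : B ∈ designW m 5) :
    ∀ x ∈ B, ∀ y ∈ B, x ≠ y → x + y ≠ 1 := by
  obtain ⟨hsub, hcard, hsum, hmin⟩ := hB
  intro x hx y hy hxy h1
  refine hmin {x, y} (by simp [insert_subset_iff, hx, hy]) ⟨x, by simp⟩ ?_ ?_
  · intro h
    rw [← h, card_pair hxy] at hcard
    norm_num at hcard
  · rw [Finset.sum_pair hxy]
    simpa using h1

private lemma mem_tauSet_iff {z α : GaloisField 2 m} {B : Finset (GaloisField 2 m)} :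
    B ∈ tauSet m 5 z α ↔ (B ∈ designW m 5 ∧ z ∈ B) ∧
      ∃ a ∈ B, ∃ b ∈ B, a ≠ z ∧ b ≠ z ∧ a ≠ b ∧ a + b = α := Iff.rfl

private lemma notMem_Vset {z α x : GaloisField 2 m} (h : x ∉ Vset z α) :
    x ≠ 0 ∧ x ≠ 1 ∧ x ≠ α ∧ x ≠ α + 1 ∧ x ≠ z ∧ x ≠ z + 1 ∧ x ≠ z + α ∧ x ≠ z + α + 1 := by
  rw [mem_Vset] at h
  push_neg at h
  exact h

private lemma notMem_image_Vset {z α a x : GaloisField 2 m}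
    (h : x ∉ (Vset z α).image (a + ·)) :
    x ≠ a ∧ x ≠ a + 1 ∧ x ≠ a + α ∧ x ≠ a + α + 1 ∧ x ≠ a + z ∧ x ≠ a + z + 1 ∧
      x ≠ a + z + α ∧ x ≠ a + z + α + 1 := by
  refine ⟨?_, ?_, ?_, ?_, ?_, ?_, ?_, ?_⟩ <;> (rintro rfl; apply h; rw [Finset.mem_image])
  · exact ⟨0, by rw [mem_Vset]; tauto, by ring⟩
  · exact ⟨1, by rw [mem_Vset]; tauto, by ring⟩
  · exact ⟨α, by rw [mem_Vset]; tauto, by ring⟩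
  · exact ⟨α + 1, by rw [mem_Vset]; tauto, by ring⟩
  · exact ⟨z, by rw [mem_Vset]; tauto, by ring⟩
  · exact ⟨z + 1, by rw [mem_Vset]; tauto, by ring⟩
  · exact ⟨z + α, by rw [mem_Vset]; tauto, by ring⟩
  · exact ⟨z + α + 1, by rw [mem_Vset]; tauto, by ring⟩

set_option maxHeartbeats 1600000 in
private lemma step1 {z α : GaloisField 2 m} (hz0 : z ≠ 0) (hz1 : z ≠ 1) (ha0 : α ≠ 0)
    (ha1 : α ≠ 1) (haz : α ≠ z) (haz1 : α ≠ z + 1) {a c : GaloisField 2 m}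
    (ha : a ∉ Vset z α) (hc1 : c ∉ Vset z α) (hc2 : c ∉ (Vset z α).image (a + ·)) :
    ({z, a, a + α, c, c + (1 + z + α)} : Finset (GaloisField 2 m)) ∈ tauSet m 5 z α := by
  have h2 : (2 : GaloisField 2 m) = 0 := htwoF'
  obtain ⟨ha0', ha1', haα, haα1, haz', haz1', hazα, hazα1⟩ := notMem_Vset ha
  obtain ⟨hc0', hc1', hcα, hcα1, hcz', hcz1', hczα, hczα1⟩ := notMem_Vset hc1
  obtain ⟨hca, hca1, hcaα, hcaα1, hcaz, hcaz1, hcazα, hcazα1⟩ := notMem_image_Vset hc2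
  have d12 : z ≠ a := Ne.symm haz'
  have d13 : z ≠ a + α := fun h => hazα (by linear_combination -h - α * h2)
  have d14 : z ≠ c := Ne.symm hcz'
  have d15 : z ≠ c + (1 + z + α) := fun h => hcα1 (by linear_combination -h - (1 + α) * h2)
  have d23 : a ≠ a + α := fun h => ha0 (by linear_combination -h)
  have d24 : a ≠ c := Ne.symm hca
  have d25 : a ≠ c + (1 + z + α) := fun h => hcazα1 (by linear_combination -h - (1 + z + α) * h2)
  have d34 : a + α ≠ c := Ne.symm hcaα
  have d35 : a + α ≠ c + (1 + z + α) := fun h => hcaz1 (by linear_combination -h - (1 + z) * h2)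
  have d45 : c ≠ c + (1 + z + α) := fun h => haz1 (by linear_combination -h - (1 + z) * h2)
  have x30 : a + α ≠ 0 := fun h => haα (by linear_combination h - α * h2)
  have x31 : a + α ≠ 1 := fun h => haα1 (by linear_combination h - α * h2)
  have x50 : c + (1 + z + α) ≠ 0 := fun h => hczα1 (by linear_combination h - (1 + z + α) * h2)
  have x51 : c + (1 + z + α) ≠ 1 := fun h => hczα (by linear_combination h - (z + α) * h2)
  have p1 : z + a ≠ 1 := fun h => haz1' (by linear_combination h - z * h2)
  have p2 : z + (a + α) ≠ 1 := fun h => hazα1 (by linear_combination h - (z + α) * h2)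
  have p3 : z + c ≠ 1 := fun h => hcz1' (by linear_combination h - z * h2)
  have p4 : z + (c + (1 + z + α)) ≠ 1 := fun h => hcα (by linear_combination h - (z + α) * h2)
  have p5 : a + (a + α) ≠ 1 := fun h => ha1 (by linear_combination h - a * h2)
  have p6 : a + c ≠ 1 := fun h => hca1 (by linear_combination h - a * h2)
  have p7 : a + (c + (1 + z + α)) ≠ 1 := fun h =>
    hcazα (by linear_combination h - (a + z + α) * h2)
  have p8 : a + α + c ≠ 1 := fun h => hcaα1 (by linear_combination h - (a + α) * h2)
  have p9 : a + α + (c + (1 + z + α)) ≠ 1 := fun h =>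
    hcaz (by linear_combination h - (a + α + z) * h2)
  have p10 : c + (c + (1 + z + α)) ≠ 1 := fun h => haz (by linear_combination h - (c + z) * h2)
  set B : Finset (GaloisField 2 m) := {z, a, a + α, c, c + (1 + z + α)} with hBdef
  have hmemB : ∀ x, x ∈ B ↔ x = z ∨ x = a ∨ x = a + α ∨ x = c ∨ x = c + (1 + z + α) := by
    intro x; simp [hBdef]
  have hcard : B.card = 5 := card5 d12 d13 d14 d15 d23 d24 d25 d34 d35 d45
  have hsum : B.sum id = 1 := by
    rw [hBdef, sum5 d12 d13 d14 d15 d23 d24 d25 d34 d35 d45]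
    linear_combination (z + a + α + c) * h2
  have h0B : (0 : GaloisField 2 m) ∉ B := by
    rw [hmemB]; push_neg
    exact ⟨Ne.symm hz0, Ne.symm ha0', Ne.symm x30, Ne.symm hc0', Ne.symm x50⟩
  have h1B : (1 : GaloisField 2 m) ∉ B := by
    rw [hmemB]; push_neg
    exact ⟨Ne.symm hz1, Ne.symm ha1', Ne.symm x31, Ne.symm hc1', Ne.symm x51⟩
  have hpairs : ∀ x ∈ B, ∀ y ∈ B, x ≠ y → x + y ≠ 1 := by
    intro x hx y hy hxy
    rw [hmemB] at hx hy
    rcases hx with rfl | rfl | rfl | rfl | rfl <;> rcases hy with rfl | rfl | rfl | rfl | rfl <;>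
      first
        | exact absurd rfl hxy
        | (intro h;
            first
              | exact p1 (by linear_combination h) | exact p2 (by linear_combination h)
              | exact p3 (by linear_combination h) | exact p4 (by linear_combination h)
              | exact p5 (by linear_combination h) | exact p6 (by linear_combination h)
              | exact p7 (by linear_combination h) | exact p8 (by linear_combination h)
              | exact p9 (by linear_combination h) | exact p10 (by linear_combination h))
  refine mem_tauSet_iff.mpr ⟨⟨⟨?_, hcard, hsum, min5 hcard hsum h0B h1B hpairs⟩,
    (hmemB z).mpr (Or.inl rfl)⟩, a, (hmemB a).mpr (by tauto), a + α,
    (hmemB (a + α)).mpr (by tauto), haz', Ne.symm d13, d23, by linear_combination a * h2⟩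
  intro x hx
  rcases (hmemB x).mp (Finset.mem_coe.mp hx) with rfl | rfl | rfl | rfl | rfl
  exacts [⟨hz0, hz1⟩, ⟨ha0', ha1'⟩, ⟨x30, x31⟩, ⟨hc0', hc1'⟩, ⟨x50, x51⟩]

private def Aset (z α : GaloisField 2 m) [Fintype (GaloisField 2 m)] :
    Finset (GaloisField 2 m) := Finset.univ.filter (· ∉ Vset z α)

private def Cset (z α a : GaloisField 2 m) [Fintype (GaloisField 2 m)] :
    Finset (GaloisField 2 m) :=
  Finset.univ.filter (fun c => c ∉ Vset z α ∧ c ∉ (Vset z α).image (a + ·))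

private def Dset (z α : GaloisField 2 m) [Fintype (GaloisField 2 m)] :
    Finset ((_ : GaloisField 2 m) × GaloisField 2 m) :=
  (Aset z α).sigma (fun a => Cset z α a)

private def fmap (z α : GaloisField 2 m) (p : (_ : GaloisField 2 m) × GaloisField 2 m) :
    Finset (GaloisField 2 m) := {z, p.1, p.1 + α, p.2, p.2 + (1 + z + α)}

private lemma mem_Dset [Fintype (GaloisField 2 m)] {z α x y : GaloisField 2 m} :
    (⟨x, y⟩ : (_ : GaloisField 2 m) × GaloisField 2 m) ∈ Dset z α ↔
      x ∉ Vset z α ∧ y ∉ Vset z α ∧ y ∉ (Vset z α).image (x + ·) := by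
  simp [Dset, Aset, Cset, Finset.mem_sigma, and_assoc]

set_option maxHeartbeats 1600000 in
private lemma step2 [Fintype (GaloisField 2 m)] {z α : GaloisField 2 m} (hz0 : z ≠ 0)
    (hz1 : z ≠ 1) (ha0 : α ≠ 0) (ha1 : α ≠ 1) (haz : α ≠ z) (haz1 : α ≠ z + 1)
    {B : Finset (GaloisField 2 m)} (hB : B ∈ tauSet m 5 z α) :
    ((Dset z α).filter (fun p => fmap z α p = B)).card = 4 := by
  have h2 : (2 : GaloisField 2 m) = 0 := htwoF'
  obtain ⟨⟨hW, hzB⟩, a, haB, b, hbB, hazne, hbzne, habne, habα⟩ := mem_tauSet_iff.mp hB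
  have hpair := designW_pair hW
  obtain ⟨hsub, hcard, hsum, hmin⟩ := hW
  have hXf : ∀ x ∈ B, x ≠ 0 ∧ x ≠ 1 := fun x hx => hsub hx
  have hb : b = a + α := by linear_combination habα - a * h2
  subst hb
  have hzab : ({z, a, a + α} : Finset (GaloisField 2 m)) ⊆ B := by
    simp [Finset.insert_subset_iff, hzB, haB, hbB]
  have hcard3 : ({z, a, a + α} : Finset (GaloisField 2 m)).card = 3 := by
    rw [card_insert_of_notMem (by simp [Ne.symm hazne, Ne.symm hbzne]),
      card_insert_of_notMem (by simp [habne]), card_singleton]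
  have hR : (B \ {z, a, a + α}).card = 2 := by rw [card_sdiff_of_subset hzab, hcard, hcard3]
  obtain ⟨c, d, hcd, hReq⟩ := Finset.card_eq_two.mp hR
  have hcR : c ∈ B \ {z, a, a + α} := by rw [hReq]; simp
  have hdR : d ∈ B \ {z, a, a + α} := by rw [hReq]; simp
  rw [Finset.mem_sdiff] at hcR hdR
  obtain ⟨hcB, hcne⟩ := hcR
  obtain ⟨hdB, hdne⟩ := hdR
  simp only [mem_insert, mem_singleton] at hcne hdne
  push_neg at hcne hdne
  obtain ⟨hcz, hcaa, hcb⟩ := hcne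
  obtain ⟨hdz, hda, hdb⟩ := hdne
  have hBeq : B = {z, a, a + α, c, d} := by
    have hsubB : ({z, a, a + α, c, d} : Finset (GaloisField 2 m)) ⊆ B := by
      intro t ht
      simp only [mem_insert, mem_singleton] at ht
      rcases ht with rfl | rfl | rfl | rfl | rfl
      exacts [hzB, haB, hbB, hcB, hdB]
    refine (Finset.eq_of_subset_of_card_le hsubB ?_).symm
    rw [hcard, card5 (Ne.symm hazne) (Ne.symm hbzne) (Ne.symm hcz) (Ne.symm hdz) habne
      (Ne.symm hcaa) (Ne.symm hda) (Ne.symm hcb) (Ne.symm hdb) hcd]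
  have hmemB : ∀ x, x ∈ B ↔ x = z ∨ x = a ∨ x = a + α ∨ x = c ∨ x = d := by
    intro x; rw [hBeq]; simp
  have hd : d = c + (1 + z + α) := by
    have hs : z + a + (a + α) + c + d = 1 := by
      rw [hBeq, sum5 (Ne.symm hazne) (Ne.symm hbzne) (Ne.symm hcz) (Ne.symm hdz) habne
        (Ne.symm hcaa) (Ne.symm hda) (Ne.symm hcb) (Ne.symm hdb) hcd] at hsum
      exact hsum
    linear_combination hs - (a + c + z + α) * h2
  have key1 : ∀ x, x ∈ B → x ≠ z → x + α ∈ B → x + α ≠ z → x ∉ Vset z α := by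
    intro x hxB hxz hxaB hxaz hmem
    rcases mem_Vset.mp hmem with h | h | h | h | h | h | h | h
    · exact (hXf x hxB).1 h
    · exact (hXf x hxB).2 h
    · exact (hXf _ hxaB).1 (by linear_combination h + α * h2)
    · exact (hXf _ hxaB).2 (by linear_combination h + α * h2)
    · exact hxz h
    · exact hpair x hxB z hzB hxz (by linear_combination h + z * h2)
    · exact hxaz (by linear_combination h + α * h2)
    · exact hpair _ hxaB z hzB hxaz (by linear_combination h + (z + α) * h2)
  have key2 : ∀ y, y ∈ B → y ≠ z → y + (1 + z + α) ∈ B → y + (1 + z + α) ≠ z →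
      y ∉ Vset z α := by
    intro y hyB hyz hyβB hyβz hmem
    rcases mem_Vset.mp hmem with h | h | h | h | h | h | h | h
    · exact (hXf y hyB).1 h
    · exact (hXf y hyB).2 h
    · exact hpair _ hyβB z hzB hyβz (by linear_combination h + (z + α) * h2)
    · exact hyβz (by linear_combination h + (1 + α) * h2)
    · exact hyz h
    · exact hpair y hyB z hzB hyz (by linear_combination h + z * h2)
    · exact (hXf _ hyβB).2 (by linear_combination h + (z + α) * h2)
    · exact (hXf _ hyβB).1 (by linear_combination h + (1 + z + α) * h2)
  have key3 : ∀ x y, x ∈ B → x ≠ z → x + α ∈ B → x + α ≠ z → y ∈ B → y ≠ x → y ≠ x + α →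
      y + (1 + z + α) ∈ B → y + (1 + z + α) ≠ x → y + (1 + z + α) ≠ x + α →
      y ∉ (Vset z α).image (x + ·) := by
    intro x y hxB hxz hxaB hxaz hyB hyx hyxa hyβB hyβx hyβxa hmem
    obtain ⟨s, hs, hsy⟩ := Finset.mem_image.mp hmem
    rcases mem_Vset.mp hs with h | h | h | h | h | h | h | h
    · exact hyx (by linear_combination -hsy + h)
    · exact hpair x hxB y hyB (Ne.symm hyx) (by linear_combination hsy - h + (y - 1) * h2)
    · exact hyxa (by linear_combination -hsy + h)
    · exact hpair (x + α) hxaB y hyB (Ne.symm hyxa)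
        (by linear_combination hsy - h + (y - 1) * h2)
    · exact hpair (x + α) hxaB _ hyβB (Ne.symm hyβxa)
        (by linear_combination hsy - h + (y + α) * h2)
    · exact hyβxa (by linear_combination hsy - h + (y - x) * h2)
    · exact hpair x hxB _ hyβB (Ne.symm hyβx) (by linear_combination hsy - h + y * h2)
    · exact hyβx (by linear_combination hsy - h + (y - x) * h2)
  have hba : a + α + α = a := by linear_combination α * h2
  have hdβ : d + (1 + z + α) = c := by rw [hd]; linear_combination (1 + z + α) * h2
  have hcβ : c + (1 + z + α) = d := hd.symm
  have haV : a ∉ Vset z α := key1 a haB hazne hbB hbzne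
  have hbV : (a + α) ∉ Vset z α :=
    key1 _ hbB hbzne (by rw [hba]; exact haB) (by rw [hba]; exact hazne)
  have hcV : c ∉ Vset z α := key2 c hcB hcz (by rw [hcβ]; exact hdB) (by rw [hcβ]; exact hdz)
  have hdV : d ∉ Vset z α := key2 d hdB hdz (by rw [hdβ]; exact hcB) (by rw [hdβ]; exact hcz)
  have hcIa : c ∉ (Vset z α).image (a + ·) :=
    key3 a c haB hazne hbB hbzne hcB hcaa hcb (by rw [hcβ]; exact hdB)
      (by rw [hcβ]; exact hda) (by rw [hcβ]; exact hdb)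
  have hdIa : d ∉ (Vset z α).image (a + ·) :=
    key3 a d haB hazne hbB hbzne hdB hda hdb (by rw [hdβ]; exact hcB)
      (by rw [hdβ]; exact hcaa) (by rw [hdβ]; exact hcb)
  have hcIb : c ∉ (Vset z α).image ((a + α) + ·) :=
    key3 (a + α) c hbB hbzne (by rw [hba]; exact haB) (by rw [hba]; exact hazne) hcB hcb
      (by rw [hba]; exact hcaa) (by rw [hcβ]; exact hdB) (by rw [hcβ]; exact hdb)
      (by rw [hba, hcβ]; exact hda)
  have hdIb : d ∉ (Vset z α).image ((a + α) + ·) :=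
    key3 (a + α) d hbB hbzne (by rw [hba]; exact haB) (by rw [hba]; exact hazne) hdB hdb
      (by rw [hba]; exact hda) (by rw [hdβ]; exact hcB) (by rw [hdβ]; exact hcb)
      (by rw [hba, hdβ]; exact hcaa)
  have hf1 : fmap z α ⟨a, c⟩ = B := by
    show ({z, a, a + α, c, c + (1 + z + α)} : Finset (GaloisField 2 m)) = B
    rw [hcβ]; exact hBeq.symm
  have hf2 : fmap z α ⟨a, d⟩ = B := by
    show ({z, a, a + α, d, d + (1 + z + α)} : Finset (GaloisField 2 m)) = B
    rw [hdβ, hBeq]; ext t; simp; tauto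
  have hf3 : fmap z α ⟨a + α, c⟩ = B := by
    show ({z, a + α, a + α + α, c, c + (1 + z + α)} : Finset (GaloisField 2 m)) = B
    rw [hba, hcβ, hBeq]; ext t; simp; tauto
  have hf4 : fmap z α ⟨a + α, d⟩ = B := by
    show ({z, a + α, a + α + α, d, d + (1 + z + α)} : Finset (GaloisField 2 m)) = B
    rw [hba, hdβ, hBeq]; ext t; simp; tauto
  have hfe : (Dset z α).filter (fun p => fmap z α p = B) =
      ({⟨a, c⟩, ⟨a, d⟩, ⟨a + α, c⟩, ⟨a + α, d⟩} :
        Finset ((_ : GaloisField 2 m) × GaloisField 2 m)) := by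
    ext p
    simp only [Finset.mem_filter, Finset.mem_insert, Finset.mem_singleton]
    constructor
    · rintro ⟨hpD, hfp⟩
      obtain ⟨x, y⟩ := p
      rw [mem_Dset] at hpD
      obtain ⟨hxV, hyV, hyI⟩ := hpD
      obtain ⟨-, -, -, -, hxz', -, hxzα, -⟩ := notMem_Vset hxV
      obtain ⟨-, -, -, -, hyz', -, -, -⟩ := notMem_Vset hyV
      obtain ⟨hyx, -, hyxα, -, -, -, -, -⟩ := notMem_image_Vset hyI
      have hxB : x ∈ B := by rw [← hfp]; simp [fmap]
      have hxaB : x + α ∈ B := by rw [← hfp]; simp [fmap]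
      have hyB : y ∈ B := by rw [← hfp]; simp [fmap]
      have hxab : x = a ∨ x = a + α := by
        rcases (hmemB x).mp hxB with h | h | h | h | h
        · exact absurd h hxz'
        · exact Or.inl h
        · exact Or.inr h
        · exfalso
          rcases (hmemB (x + α)).mp hxaB with h' | h' | h' | h' | h'
          · exact hxzα (by linear_combination h' - α * h2)
          · exact hcb (by linear_combination h' - h - α * h2)
          · exact hcaa (by linear_combination h' - h)
          · exact ha0 (by linear_combination h' - h)
          · exact hz1 (by linear_combination h' - h - hd - (α + c - d + 1) * h2)
        · exfalso
          rcases (hmemB (x + α)).mp hxaB with h' | h' | h' | h' | h'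
          · exact hxzα (by linear_combination h' - α * h2)
          · exact hdb (by linear_combination h' - h - α * h2)
          · exact hda (by linear_combination h' - h)
          · exact hz1 (by linear_combination h' - h - hd - (α + 1) * h2)
          · exact ha0 (by linear_combination h' - h)
      rcases hxab with h1 | h1
      · have hyc : y = c ∨ y = d := by
          rcases (hmemB y).mp hyB with h | h | h | h | h
          · exact absurd h hyz'
          · exact absurd (show y = x by linear_combination h - h1) hyx
          · exact absurd (show y = x + α by linear_combination h - h1) hyxα
          · exact Or.inl h
          · exact Or.inr h
        rcases hyc with h3 | h3
        · exact Or.inl (by rw [h1, h3])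
        · exact Or.inr (Or.inl (by rw [h1, h3]))
      · have hyc : y = c ∨ y = d := by
          rcases (hmemB y).mp hyB with h | h | h | h | h
          · exact absurd h hyz'
          · exact absurd (show y = x + α by linear_combination h - h1 - α * h2) hyxα
          · exact absurd (show y = x by linear_combination h - h1) hyx
          · exact Or.inl h
          · exact Or.inr h
        rcases hyc with h3 | h3
        · exact Or.inr (Or.inr (Or.inl (by rw [h1, h3])))
        · exact Or.inr (Or.inr (Or.inr (by rw [h1, h3])))
    · rintro (rfl | rfl | rfl | rfl)
      · exact ⟨mem_Dset.mpr ⟨haV, hcV, hcIa⟩, hf1⟩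
      · exact ⟨mem_Dset.mpr ⟨haV, hdV, hdIa⟩, hf2⟩
      · exact ⟨mem_Dset.mpr ⟨hbV, hcV, hcIb⟩, hf3⟩
      · exact ⟨mem_Dset.mpr ⟨hbV, hdV, hdIb⟩, hf4⟩
  rw [hfe]
  rw [card_insert_of_notMem (by simp [hcd, habne]),
    card_insert_of_notMem (by simp [habne]),
    card_insert_of_notMem (by simp [hcd]), card_singleton]

set_option maxHeartbeats 3200000 in
private lemma tau_main (hm : 5 ≤ m) (z α : GaloisField 2 m) (hz0 : z ≠ 0) (hz1 : z ≠ 1)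
    (ha0 : α ≠ 0) (ha1 : α ≠ 1) (haz : α ≠ z) (haz1 : α ≠ z + 1) :
    (tauSet m 5 z α).ncard = (2 ^ m - 2 ^ 3) * (2 ^ m - 2 ^ 4) / 4 := by
  haveI : Fintype (GaloisField 2 m) := Fintype.ofFinite _
  have hq : Fintype.card (GaloisField 2 m) = 2 ^ m := by
    rw [← Nat.card_eq_fintype_card]
    exact GaloisField.card 2 m (by omega)
  have h8 : (Vset z α).card = 8 := card_Vset z α hz0 hz1 ha0 ha1 haz haz1
  have hT : (tauSet m 5 z α).ncard = (tauSet m 5 z α).toFinset.card :=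
    Set.ncard_eq_toFinset_card' _
  set T := (tauSet m 5 z α).toFinset with hTdef
  have hmapsto : ∀ p ∈ Dset z α, fmap z α p ∈ T := by
    rintro ⟨a, c⟩ hp
    rw [mem_Dset] at hp
    rw [Set.mem_toFinset]
    exact step1 hz0 hz1 ha0 ha1 haz haz1 hp.1 hp.2.1 hp.2.2
  have hcount := Finset.card_eq_sum_card_fiberwise hmapsto
  have hfib : ∀ B ∈ T, ((Dset z α).filter (fun p => fmap z α p = B)).card = 4 := by
    intro B hB
    exact step2 hz0 hz1 ha0 ha1 haz haz1 (Set.mem_toFinset.mp hB)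
  rw [Finset.sum_congr rfl hfib, Finset.sum_const, smul_eq_mul] at hcount
  have hAcard : (Aset z α).card = 2 ^ m - 8 := by
    have hAe : Aset z α = Finset.univ \ Vset z α := by
      ext x; simp [Aset, Finset.mem_sdiff]
    rw [hAe, Finset.card_sdiff_of_subset (Finset.subset_univ _), Finset.card_univ, hq, h8]
  have hCcard : ∀ a ∈ Aset z α, (Cset z α a).card = 2 ^ m - 16 := by
    intro a haA
    have haV : a ∉ Vset z α := by simpa [Aset] using haA
    have himg : ((Vset z α).image (a + ·)).card = 8 := by
      rw [Finset.card_image_of_injective _ (add_right_injective a), h8]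
    have hCe : Cset z α a = Finset.univ \ (Vset z α ∪ (Vset z α).image (a + ·)) := by
      ext x
      simp only [Cset, Finset.mem_filter, Finset.mem_univ, true_and, Finset.mem_sdiff,
        Finset.mem_union]
      tauto
    rw [hCe, Finset.card_sdiff_of_subset (Finset.subset_univ _), Finset.card_univ, hq,
      Finset.card_union_of_disjoint (disj_Vset haV), h8, himg]
  have hDcard : (Dset z α).card = (2 ^ m - 8) * (2 ^ m - 16) := by
    rw [Dset, Finset.card_sigma, Finset.sum_congr rfl hCcard, Finset.sum_const, smul_eq_mul,
      hAcard]
  rw [hDcard] at hcount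
  rw [hT]
  calc #T = #T * 4 / 4 := by omega
    _ = (2 ^ m - 2 ^ 3) * (2 ^ m - 2 ^ 4) / 4 := by rw [← hcount]; norm_num

end main

/-- For `m ≥ 5` and distinct `u, v ∈ X` with `u + v ≠ 1`, for every
`α ∈ S = {u, v, u+1, v+1}` the number of blocks in `τ_{α,5}` equals `(2 ^ m - 2 ^ 3) * (2 ^ m - 2 ^ 4) / 4`. -/
theorem tau_card_5 (m : ℕ) (hm : 5 ≤ m) (u v : GaloisField 2 m)
    (hu : u ∈ designX m) (hv : v ∈ designX m) (huv : u ≠ v) (hsum : u + v ≠ 1) :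
    ∀ α ∈ ({u, v, u + 1, v + 1} : Set (GaloisField 2 m)), (tauSet m 5 (u + v) α).ncard = (2 ^ m - 2 ^ 3) * (2 ^ m - 2 ^ 4) / 4 := by
  have h2 : (2 : GaloisField 2 m) = 0 := htwoF'
  obtain ⟨hu0, hu1⟩ := hu
  obtain ⟨hv0, hv1⟩ := hv
  have hz0 : u + v ≠ 0 := fun h => huv (by linear_combination h - v * h2)
  intro α hα
  simp only [Set.mem_insert_iff, Set.mem_singleton_iff] at hα
  rcases hα with h | h | h | h <;> obtain rfl := h.symm
  · exact tau_main hm (u + v) u hz0 hsum hu0 hu1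
      (fun h => hv0 (by linear_combination -h)) (fun h => hv1 (by linear_combination -h - h2))
  · exact tau_main hm (u + v) v hz0 hsum hv0 hv1
      (fun h => hu0 (by linear_combination -h)) (fun h => hu1 (by linear_combination -h - h2))
  · exact tau_main hm (u + v) (u + 1) hz0 hsum (fun h => hu1 (by linear_combination h - h2))
      (fun h => hu0 (by linear_combination h)) (fun h => hv1 (by linear_combination -h))
      (fun h => hv0 (by linear_combination -h))
  · exact tau_main hm (u + v) (v + 1) hz0 hsum (fun h => hv1 (by linear_combination h - h2))
      (fun h => hv0 (by linear_combination h)) (fun h => hu1 (by linear_combination -h))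
      (fun h => hu0 (by linear_combination -h))
end
end

section
/- Suppose m ≥ 4. For every pair of distinct elements u, v ∈ X with u + v ≠ 1, the number of blocks B ∈ W_4 with u ∈ B and v ∈ B equals λ_4 = (2^m − 8)/2!; that is, the triple (X, W_2, W_4) is a group divisible design GDD(2^m − 2, 2, 4) with balance parameter λ_4 = (2^m − 8)/2. -/
open scoped Classical

noncomputable section

-- minimality from pair conditions
lemma aux_minimal {K : Type*} [Field K] (B : Finset K)
    (h0 : (0:K) ∉ B) (h1 : (1:K) ∉ B) (hcard : B.card = 4) (hsum : B.sum id = 1)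
    (hpair : ∀ a ∈ B, ∀ b ∈ B, a ≠ b → a + b ≠ 1) :
    ∀ I ⊆ B, I.Nonempty → I ≠ B → I.sum id ≠ 1 := by
  classical
  intro I hIB hne hIneB
  have hlt : I.card < 4 := by
    rw [← hcard]
    exact Finset.card_lt_card (lt_of_le_of_ne hIB (by simpa using hIneB))
  have hpos : 1 ≤ I.card := Finset.card_pos.mpr hne
  have h123 : I.card = 1 ∨ I.card = 2 ∨ I.card = 3 := by omega
  rcases h123 with h | h | h
  · obtain ⟨a, rfl⟩ := Finset.card_eq_one.mp h
    have ha : a ∈ B := hIB (Finset.mem_singleton_self a)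
    simp only [Finset.sum_singleton, id]
    intro hc; rw [hc] at ha; exact h1 ha
  · obtain ⟨a, b, hab, rfl⟩ := Finset.card_eq_two.mp h
    have ha : a ∈ B := hIB (by simp)
    have hb : b ∈ B := hIB (by simp)
    rw [Finset.sum_insert (by simpa using hab), Finset.sum_singleton]
    exact hpair a ha b hb hab
  · have hJ : (B \ I).card = 1 := by
      rw [Finset.card_sdiff_of_subset hIB, hcard, h]
    obtain ⟨c, hc⟩ := Finset.card_eq_one.mp hJ
    have hcB : c ∈ B := by
      have : c ∈ B \ I := hc ▸ Finset.mem_singleton_self c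
      exact (Finset.mem_sdiff.mp this).1
    have hsd := Finset.sum_sdiff (f := id) hIB
    rw [hc, Finset.sum_singleton] at hsd
    intro hI
    rw [hI, hsum] at hsd
    have : c = 0 := by
      have : id c + 1 = 1 := hsd
      simpa using this
    rw [this] at hcB
    exact h0 hcB

set_option maxHeartbeats 1000000 in
/-- For `m ≥ 4` and distinct `u, v ∈ X` with `u + v ≠ 1`, exactly `λ_4 = (2^m - 8)/2!`
blocks of `W_4` contain both `u` and `v`; that is, `(X, W_2, W_4)` is a
`GDD(2^m - 2, 2, 4)` with balance parameter `λ_4`. -/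
theorem GDD_W4 (m : ℕ) (hm : 4 ≤ m) (u v : GaloisField 2 m)
    (hu : u ∈ designX m) (hv : v ∈ designX m) (huv : u ≠ v) (hsum : u + v ≠ 1) :
    {B ∈ designW m 4 | u ∈ B ∧ v ∈ B}.ncard = (2 ^ m - 8) / Nat.factorial 2 := by
  classical
  haveI : Fact (Nat.Prime 2) := ⟨Nat.prime_two⟩
  haveI : Fintype (GaloisField 2 m) := Fintype.ofFinite _
  have h2 : (2 : GaloisField 2 m) = 0 := by
    have := CharP.cast_eq_zero (GaloisField 2 m) 2
    exact_mod_cast this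
  obtain ⟨hu0, hu1⟩ := hu
  obtain ⟨hv0, hv1⟩ := hv
  set s : GaloisField 2 m := 1 + u + v with hs
  set Fb : Finset (GaloisField 2 m) := {0, 1, u, v, 1+u, 1+v, s, 1+s} with hFb
  set φ : GaloisField 2 m → Finset (GaloisField 2 m) := fun x => {u, v, x, x + s} with hφ
  set G : Finset (GaloisField 2 m) := Finset.univ \ Fb with hG
  have hmemFb : ∀ x : GaloisField 2 m, x ∉ Fb ↔ (x ≠ 0 ∧ x ≠ 1 ∧ x ≠ u ∧ x ≠ v ∧
      x ≠ 1 + u ∧ x ≠ 1 + v ∧ x ≠ s ∧ x ≠ 1 + s) := by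
    intro x
    simp [hFb, not_or]
  -- basic disequalities
  have hs0 : s ≠ 0 := by
    intro h; apply hsum; linear_combination h - h2
  have hs1 : s ≠ 1 := by
    intro h; apply huv; linear_combination h - v * h2
  have d01 : (0 : GaloisField 2 m) ≠ 1 := zero_ne_one
  have d02 : (0 : GaloisField 2 m) ≠ u := Ne.symm hu0
  have d03 : (0 : GaloisField 2 m) ≠ v := Ne.symm hv0
  have d04 : (0 : GaloisField 2 m) ≠ 1 + u := by
    intro h; exact hu1 (by linear_combination -h - h2)
  have d05 : (0 : GaloisField 2 m) ≠ 1 + v := by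
    intro h; exact hv1 (by linear_combination -h - h2)
  have d06 : (0 : GaloisField 2 m) ≠ s := Ne.symm hs0
  have d07 : (0 : GaloisField 2 m) ≠ 1 + s := by
    intro h; exact hs1 (by linear_combination -h - h2)
  have d12 : (1 : GaloisField 2 m) ≠ u := Ne.symm hu1
  have d13 : (1 : GaloisField 2 m) ≠ v := Ne.symm hv1
  have d14 : (1 : GaloisField 2 m) ≠ 1 + u := by
    intro h; exact hu0 (by linear_combination -h)
  have d15 : (1 : GaloisField 2 m) ≠ 1 + v := by
    intro h; exact hv0 (by linear_combination -h)
  have d16 : (1 : GaloisField 2 m) ≠ s := Ne.symm hs1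
  have d17 : (1 : GaloisField 2 m) ≠ 1 + s := by
    intro h; exact hs0 (by linear_combination -h)
  have d23 : u ≠ v := huv
  have d24 : u ≠ 1 + u := by
    intro h; exact one_ne_zero (α := GaloisField 2 m) (by linear_combination -h)
  have d25 : u ≠ 1 + v := by
    intro h; exact hsum (by linear_combination h + v * h2)
  have d26 : u ≠ s := by
    intro h; exact hv1 (by linear_combination -h - h2)
  have d27 : u ≠ 1 + s := by
    intro h; exact hv0 (by linear_combination -h - h2)
  have d34 : v ≠ 1 + u := by
    intro h; exact hsum (by linear_combination h + u * h2)
  have d35 : v ≠ 1 + v := by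
    intro h; exact one_ne_zero (α := GaloisField 2 m) (by linear_combination -h)
  have d36 : v ≠ s := by
    intro h; exact hu1 (by linear_combination -h - h2)
  have d37 : v ≠ 1 + s := by
    intro h; exact hu0 (by linear_combination -h - h2)
  have d45 : 1 + u ≠ 1 + v := by
    intro h; exact huv (by linear_combination h)
  have d46 : 1 + u ≠ s := by
    intro h; exact hv0 (by linear_combination -h)
  have d47 : 1 + u ≠ 1 + s := by
    intro h; exact hv1 (by linear_combination -h - h2)
  have d56 : 1 + v ≠ s := by
    intro h; exact hu0 (by linear_combination -h)
  have d57 : 1 + v ≠ 1 + s := by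
    intro h; exact hu1 (by linear_combination -h - h2)
  have d67 : s ≠ 1 + s := by
    intro h; exact one_ne_zero (α := GaloisField 2 m) (by linear_combination -h)
  have hFbcard : Fb.card = 8 := by
    rw [hFb]
    rw [Finset.card_insert_of_notMem (by
      simp only [Finset.mem_insert, Finset.mem_singleton]
      push_neg
      exact ⟨d01, d02, d03, d04, d05, d06, d07⟩)]
    rw [Finset.card_insert_of_notMem (by
      simp only [Finset.mem_insert, Finset.mem_singleton]
      push_neg
      exact ⟨d12, d13, d14, d15, d16, d17⟩)]
    rw [Finset.card_insert_of_notMem (by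
      simp only [Finset.mem_insert, Finset.mem_singleton]
      push_neg
      exact ⟨d23, d24, d25, d26, d27⟩)]
    rw [Finset.card_insert_of_notMem (by
      simp only [Finset.mem_insert, Finset.mem_singleton]
      push_neg
      exact ⟨d34, d35, d36, d37⟩)]
    rw [Finset.card_insert_of_notMem (by
      simp only [Finset.mem_insert, Finset.mem_singleton]
      push_neg
      exact ⟨d45, d46, d47⟩)]
    rw [Finset.card_insert_of_notMem (by
      simp only [Finset.mem_insert, Finset.mem_singleton]
      push_neg
      exact ⟨d56, d57⟩)]
    rw [Finset.card_insert_of_notMem (by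
      simp only [Finset.mem_singleton]
      exact d67)]
    rw [Finset.card_singleton]
  -- Fb is invariant under adding s
  have hshift : ∀ x : GaloisField 2 m, x ∉ Fb → x + s ∉ Fb := by
    intro x hx
    rw [hmemFb] at hx ⊢
    obtain ⟨h0, h1, hxu, hxv, hx1u, hx1v, hxs, hx1s⟩ := hx
    refine ⟨?_, ?_, ?_, ?_, ?_, ?_, ?_, ?_⟩
    · intro h; exact hxs (by linear_combination h - s * h2)
    · intro h; exact hx1s (by linear_combination h - s * h2)
    · intro h; exact hx1v (by linear_combination h - h2 - v * h2)
    · intro h; exact hx1u (by linear_combination h - h2 - u * h2)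
    · intro h; exact hxv (by linear_combination h - v * h2)
    · intro h; exact hxu (by linear_combination h - u * h2)
    · intro h; exact h0 (by linear_combination h)
    · intro h; exact h1 (by linear_combination h)
  -- the forward map lands in the design
  have key1 : ∀ x : GaloisField 2 m, x ∉ Fb →
      (φ x ∈ designW m 4 ∧ u ∈ φ x ∧ v ∈ φ x) := by
    intro x hx
    rw [hmemFb] at hx
    obtain ⟨h0, h1, hxu, hxv, hx1u, hx1v, hxs, hx1s⟩ := hx
    have hux : u ≠ x := Ne.symm hxu
    have hvx : v ≠ x := Ne.symm hxv
    have huxs : u ≠ x + s := by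
      intro h; exact hx1v (by linear_combination -h - h2 - v * h2)
    have hvxs : v ≠ x + s := by
      intro h; exact hx1u (by linear_combination -h - h2 - u * h2)
    have hxxs : x ≠ x + s := by
      intro h; exact hs0 (by linear_combination -h)
    have hxs0 : x + s ≠ 0 := by
      intro h; exact hxs (by linear_combination h - s * h2)
    have hxs1 : x + s ≠ 1 := by
      intro h; exact hx1s (by linear_combination h - s * h2)
    have hcard : (φ x).card = 4 := by
      rw [hφ]
      rw [Finset.card_insert_of_notMem (by
        simp only [Finset.mem_insert, Finset.mem_singleton]; push_neg
        exact ⟨huv, hux, huxs⟩)]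
      rw [Finset.card_insert_of_notMem (by
        simp only [Finset.mem_insert, Finset.mem_singleton]; push_neg
        exact ⟨hvx, hvxs⟩)]
      rw [Finset.card_insert_of_notMem (by
        simp only [Finset.mem_singleton]; exact hxxs)]
      rw [Finset.card_singleton]
    have hsub : (↑(φ x) : Set (GaloisField 2 m)) ⊆ designX m := by
      intro a ha
      simp only [hφ, Finset.coe_insert, Set.mem_insert_iff, Finset.coe_singleton,
        Set.mem_singleton_iff] at ha
      rcases ha with rfl | rfl | rfl | rfl
      · exact ⟨hu0, hu1⟩
      · exact ⟨hv0, hv1⟩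
      · exact ⟨h0, h1⟩
      · exact ⟨hxs0, hxs1⟩
    have hsum4 : (φ x).sum id = 1 := by
      rw [hφ]
      rw [Finset.sum_insert (by
        simp only [Finset.mem_insert, Finset.mem_singleton]; push_neg
        exact ⟨huv, hux, huxs⟩)]
      rw [Finset.sum_insert (by
        simp only [Finset.mem_insert, Finset.mem_singleton]; push_neg
        exact ⟨hvx, hvxs⟩)]
      rw [Finset.sum_insert (by
        simp only [Finset.mem_singleton]; exact hxxs)]
      rw [Finset.sum_singleton]
      show u + (v + (x + (x + s))) = 1
      linear_combination (x + u + v) * h2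
    have hpair : ∀ a ∈ φ x, ∀ b ∈ φ x, a ≠ b → a + b ≠ 1 := by
      intro a ha b hb hab hone
      simp only [hφ, Finset.mem_insert, Finset.mem_singleton] at ha hb
      rcases ha with ha | ha | ha | ha <;> rcases hb with hb | hb | hb | hb
      · exact hab (ha.trans hb.symm)
      · exact hsum (by linear_combination hone - ha - hb)
      · exact hx1u (by linear_combination hone - ha - hb - u * h2)
      · exact hxv (by linear_combination hone - ha - hb - u * h2 - v * h2)
      · exact hsum (by linear_combination hone - ha - hb)
      · exact hab (ha.trans hb.symm)
      · exact hx1v (by linear_combination hone - ha - hb - v * h2)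
      · exact hxu (by linear_combination hone - ha - hb - v * h2 - u * h2)
      · exact hx1u (by linear_combination hone - ha - hb - u * h2)
      · exact hx1v (by linear_combination hone - ha - hb - v * h2)
      · exact hab (ha.trans hb.symm)
      · exact hs1 (by linear_combination hone - ha - hb - x * h2)
      · exact hxv (by linear_combination hone - ha - hb - u * h2 - v * h2)
      · exact hxu (by linear_combination hone - ha - hb - v * h2 - u * h2)
      · exact hs1 (by linear_combination hone - ha - hb - x * h2)
      · exact hab (ha.trans hb.symm)
    have h0mem : (0 : GaloisField 2 m) ∉ φ x := by
      intro h
      exact ((hsub h).1) rfl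
    have h1mem : (1 : GaloisField 2 m) ∉ φ x := by
      intro h
      exact ((hsub h).2) rfl
    refine ⟨⟨hsub, hcard, hsum4, aux_minimal (φ x) h0mem h1mem hcard hsum4 hpair⟩, ?_, ?_⟩
    · simp [hφ]
    · simp [hφ]
  -- every block containing u and v comes from the map
  have key2 : ∀ B ∈ designW m 4, u ∈ B → v ∈ B → ∃ x ∉ Fb, φ x = B := by
    intro B hB huB hvB
    obtain ⟨hBX, hBcard, hBsum, hBmin⟩ := hB
    have hsubUV : ({u, v} : Finset (GaloisField 2 m)) ⊆ B := by
      intro a ha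
      simp only [Finset.mem_insert, Finset.mem_singleton] at ha
      rcases ha with rfl | rfl
      · exact huB
      · exact hvB
    have hUVcard : ({u, v} : Finset (GaloisField 2 m)).card = 2 := by
      rw [Finset.card_insert_of_notMem (by simpa using huv), Finset.card_singleton]
    have hCcard : (B \ {u, v}).card = 2 := by
      rw [Finset.card_sdiff_of_subset hsubUV, hBcard, hUVcard]
    obtain ⟨x, y, hxy, hC⟩ := Finset.card_eq_two.mp hCcard
    have hxC : x ∈ B \ {u, v} := by rw [hC]; simp
    have hyC : y ∈ B \ {u, v} := by rw [hC]; simp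
    have hxB : x ∈ B := (Finset.mem_sdiff.mp hxC).1
    have hyB : y ∈ B := (Finset.mem_sdiff.mp hyC).1
    have hxu : x ≠ u := by
      have := (Finset.mem_sdiff.mp hxC).2; simp only [Finset.mem_insert, Finset.mem_singleton] at this; push_neg at this; exact this.1
    have hxv : x ≠ v := by
      have := (Finset.mem_sdiff.mp hxC).2; simp only [Finset.mem_insert, Finset.mem_singleton] at this; push_neg at this; exact this.2
    have hyu : y ≠ u := by
      have := (Finset.mem_sdiff.mp hyC).2; simp only [Finset.mem_insert, Finset.mem_singleton] at this; push_neg at this; exact this.1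
    have hyv : y ≠ v := by
      have := (Finset.mem_sdiff.mp hyC).2; simp only [Finset.mem_insert, Finset.mem_singleton] at this; push_neg at this; exact this.2
    have hx0 : x ≠ 0 := (hBX hxB).1
    have hx1 : x ≠ 1 := (hBX hxB).2
    have hy0 : y ≠ 0 := (hBX hyB).1
    have hy1 : y ≠ 1 := (hBX hyB).2
    have hBeq : B = {u, v, x, y} := by
      have hsub4 : ({u, v, x, y} : Finset (GaloisField 2 m)) ⊆ B := by
        intro a ha
        simp only [Finset.mem_insert, Finset.mem_singleton] at ha
        rcases ha with h | h | h | h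
        · rw [h]; exact huB
        · rw [h]; exact hvB
        · rw [h]; exact hxB
        · rw [h]; exact hyB
      have hcard4 : ({u, v, x, y} : Finset (GaloisField 2 m)).card = 4 := by
        rw [Finset.card_insert_of_notMem (by
          simp only [Finset.mem_insert, Finset.mem_singleton]; push_neg
          exact ⟨huv, Ne.symm hxu, Ne.symm hyu⟩)]
        rw [Finset.card_insert_of_notMem (by
          simp only [Finset.mem_insert, Finset.mem_singleton]; push_neg
          exact ⟨Ne.symm hxv, Ne.symm hyv⟩)]
        rw [Finset.card_insert_of_notMem (by
          simp only [Finset.mem_singleton]; exact hxy)]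
        rw [Finset.card_singleton]
      exact (Finset.eq_of_subset_of_card_le hsub4
        (le_of_eq (hBcard.trans hcard4.symm))).symm
    have hBsum4 : u + (v + (x + y)) = 1 := by
      rw [hBeq] at hBsum
      rw [Finset.sum_insert (by
        simp only [Finset.mem_insert, Finset.mem_singleton]; push_neg
        exact ⟨huv, Ne.symm hxu, Ne.symm hyu⟩),
        Finset.sum_insert (by
        simp only [Finset.mem_insert, Finset.mem_singleton]; push_neg
        exact ⟨Ne.symm hxv, Ne.symm hyv⟩),
        Finset.sum_insert (by simp only [Finset.mem_singleton]; exact hxy),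
        Finset.sum_singleton] at hBsum
      exact hBsum
    have hpairB : ∀ a ∈ B, ∀ b ∈ B, a ≠ b → a + b ≠ 1 := by
      intro a ha b hb hab hone
      refine hBmin {a, b} ?_ ⟨a, by simp⟩ ?_ ?_
      · intro z hz
        simp only [Finset.mem_insert, Finset.mem_singleton] at hz
        rcases hz with rfl | rfl
        · exact ha
        · exact hb
      · intro h
        have : ({a, b} : Finset (GaloisField 2 m)).card = 4 := by rw [h, hBcard]
        rw [Finset.card_insert_of_notMem (by simpa using hab), Finset.card_singleton] at this
        omega
      · rw [Finset.sum_insert (by simpa using hab), Finset.sum_singleton]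
        exact hone
    have hyx : y = x + s := by
      linear_combination hBsum4 - (x + u + v) * h2
    refine ⟨x, ?_, ?_⟩
    · rw [hmemFb]
      refine ⟨hx0, hx1, hxu, hxv, ?_, ?_, ?_, ?_⟩
      · intro h
        exact hpairB x hxB u huB (fun hh => hxu hh) (by linear_combination h + u * h2)
      · intro h
        exact hpairB x hxB v hvB (fun hh => hxv hh) (by linear_combination h + v * h2)
      · intro h
        exact hy0 (by linear_combination hyx + h + s * h2)
      · intro h
        exact hy1 (by linear_combination hyx + h + s * h2)
    · rw [hBeq, hyx, hφ]
  -- the set in question is the image of G under φ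
  have hSet : {B ∈ designW m 4 | u ∈ B ∧ v ∈ B} = ↑(G.image φ) := by
    ext B
    simp only [Set.mem_setOf_eq, Finset.coe_image, Set.mem_image, Finset.mem_coe]
    constructor
    · rintro ⟨hBW, huB, hvB⟩
      obtain ⟨x, hx, hxeq⟩ := key2 B hBW huB hvB
      exact ⟨x, by rw [hG]; exact Finset.mem_sdiff.mpr ⟨Finset.mem_univ _, hx⟩, hxeq⟩
    · rintro ⟨x, hxG, rfl⟩
      rw [hG, Finset.mem_sdiff] at hxG
      obtain ⟨hW, hum, hvm⟩ := key1 x hxG.2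
      exact ⟨hW, hum, hvm⟩
  -- fibers of φ over G have exactly two elements
  have hfiber : ∀ x ∈ G, (G.filter (fun z => φ z = φ x)) = {x, x + s} := by
    intro x hxG
    have hx : x ∉ Fb := (Finset.mem_sdiff.mp hxG).2
    have hxFb := (hmemFb x).mp hx
    obtain ⟨h0, h1, hxu, hxv, hx1u, hx1v, hxs, hx1s⟩ := hxFb
    ext z
    simp only [Finset.mem_filter, Finset.mem_insert, Finset.mem_singleton]
    constructor
    · rintro ⟨hzG, hze⟩
      have hz : z ∉ Fb := (Finset.mem_sdiff.mp hzG).2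
      have hzin : z ∈ φ x := by
        rw [← hze, hφ]
        simp
      simp only [hφ, Finset.mem_insert, Finset.mem_singleton] at hzin
      rcases hzin with hz1 | hz1 | hz1 | hz1
      · exact absurd (by rw [hz1, hFb]; simp) hz
      · exact absurd (by rw [hz1, hFb]; simp) hz
      · exact Or.inl hz1
      · exact Or.inr hz1
    · intro h
      have hφs : φ (x + s) = φ x := by
        have hx2 : x + s + s = x := by linear_combination s * h2
        rw [hφ]
        show ({u, v, x + s, x + s + s} : Finset (GaloisField 2 m)) = {u, v, x, x + s}
        rw [hx2, Finset.pair_comm (x + s) x]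
      rcases h with rfl | rfl
      · exact ⟨hxG, rfl⟩
      · exact ⟨by rw [hG, Finset.mem_sdiff]; exact ⟨Finset.mem_univ _, hshift x hx⟩, hφs⟩
  have hGcard : G.card = 2 ^ m - 8 := by
    rw [hG, Finset.card_sdiff_of_subset (Finset.subset_univ _), hFbcard, Finset.card_univ]
    congr 1
    have hcardK := GaloisField.card 2 m (by omega)
    rw [Nat.card_eq_fintype_card] at hcardK
    exact hcardK
  have hfib2 : ∀ b ∈ G.image φ, (G.filter (fun z => φ z = b)).card = 2 := by
    intro b hb
    obtain ⟨x, hxG, rfl⟩ := Finset.mem_image.mp hb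
    rw [hfiber x hxG]
    rw [Finset.card_insert_of_notMem (by
      simp only [Finset.mem_singleton]
      intro h; exact hs0 (by linear_combination -h)), Finset.card_singleton]
  have h2G : G.card = 2 * (G.image φ).card := by
    rw [Finset.card_eq_sum_card_image φ G, Finset.sum_congr rfl hfib2,
      Finset.sum_const, smul_eq_mul, mul_comm]
  have hkey : 2 * (G.image φ).card = 2 ^ m - 8 := by
    rw [← h2G, hGcard]
  have h16 : 16 ≤ 2 ^ m := by
    calc (16 : ℕ) = 2 ^ 4 := by norm_num
    _ ≤ 2 ^ m := Nat.pow_le_pow_right (by norm_num) hm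
  rw [hSet, Set.ncard_coe_finset]
  rw [show Nat.factorial 2 = 2 from rfl]
  generalize hgen : (2 : ℕ) ^ m = n at hkey h16
  omega
end
end

section
/- Suppose m ≥ 4. Then every element x ∈ X is contained in exactly r_4 = (2^m − 4)(2^m − 8)/3! blocks of W_4, and the total number of blocks is |W_4| = (2^m − 2)(2^m − 4)(2^m − 8)/4!. -/
/-!
Over `𝔽₂` a linear relation is a vanishing subset sum. For a set `B` with sum `1`, a proper subset
with sum `1` is the complement of a nonempty subset with sum `0`, so a `k`-set with sum `1` is a
block of `W_k` exactly when its elements are linearly independent over `𝔽₂`.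

A block through `x` is `{x, b, c, 1 + x + b + c}`, and this set is a block iff `1, x, b, c` are
independent, because `1 + x + b + c ≡ 1` modulo the span of `x, b, c`. Extending the independent
pair `1, x` by `b` outside a span of size `4` and then `c` outside one of size `8` gives
`(2^m - 4)(2^m - 8)` ordered pairs `(b, c)`, and each block through `x` arises from `3 · 2` of them.
Counting incidences between `X` and `W_4` then gives `4 |W_4| = (2^m - 2) r_4`.
-/

open scoped Classical

noncomputable section

open Finset

theorem Finset.sum_sdiff_eq_sum_iff {α M : Type*} [AddCommGroup M] {s t : Finset α} {f : α → M}
    (h : t ⊆ s) : ∑ i ∈ s \ t, f i = ∑ i ∈ s, f i ↔ ∑ i ∈ t, f i = 0 := by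
  rw [← sum_sdiff h, left_eq_add]

theorem ZMod.two_smul_eq_ite {V : Type*} [AddCommGroup V] [Module (ZMod 2) V] (a : ZMod 2)
    (v : V) : a • v = if a = 0 then 0 else v := by
  obtain rfl | rfl : a = 0 ∨ a = 1 := by revert a; decide
  all_goals simp

theorem linearIndependent_zmod_two_iff {ι V : Type*} [Fintype ι] [AddCommGroup V]
    [Module (ZMod 2) V] {v : ι → V} :
    LinearIndependent (ZMod 2) v ↔ ∀ s : Finset ι, s.Nonempty → ∑ i ∈ s, v i ≠ 0 := by
  rw [Fintype.linearIndependent_iff]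
  constructor
  · rintro h s ⟨i, hi⟩ hs
    have := h (fun j => if j ∈ s then 1 else 0) (by simpa [ite_smul] using hs) i
    simp [hi] at this
  · intro h g hg i
    by_contra hgi
    refine h {j | g j ≠ 0} ⟨i, by simpa using hgi⟩ ?_
    rw [← hg, sum_filter]
    exact sum_congr rfl fun j _ => by rw [ZMod.two_smul_eq_ite, ite_not]

section LinearIndependent

variable {K V : Type*} [DivisionRing K] [AddCommGroup V] [Module K V]

theorem linearIndependent_finCons_sub_iff {n : ℕ} {v : Fin n → V} {a u : V}
    (hu : u ∈ Submodule.span K (Set.range v)) :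
    LinearIndependent K (Fin.cons (a - u) v : Fin (n + 1) → V) ↔
      LinearIndependent K (Fin.cons a v : Fin (n + 1) → V) := by
  rw [linearIndependent_finCons, linearIndependent_finCons, Submodule.sub_mem_iff_left _ hu]

variable [Fintype K] [Fintype V]

theorem card_filter_linearIndependent_snoc {n : ℕ} {v : Fin n → V} (hv : LinearIndependent K v) :
    #{w | LinearIndependent K (Fin.snoc v w : Fin (n + 1) → V)} =
      Fintype.card V - Fintype.card K ^ n := by
  have hspan : #{w | w ∈ Submodule.span K (Set.range v)} = Fintype.card K ^ n := by
    rw [← Fintype.card_subtype, Module.card_eq_pow_finrank (K := K), finrank_span_eq_card hv,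
      Fintype.card_fin]
  simp only [linearIndependent_finSnoc, hv, true_and]
  rw [filter_not, card_univ_sdiff, hspan]

theorem card_filter_linearIndependent_snoc_snoc {n : ℕ} {v : Fin n → V}
    (hv : LinearIndependent K v) :
    #{p : V × V | LinearIndependent K (Fin.snoc (Fin.snoc v p.1) p.2 : Fin (n + 2) → V)} =
      (Fintype.card V - Fintype.card K ^ n) * (Fintype.card V - Fintype.card K ^ (n + 1)) := by
  have hfiber (b : V) :
      #{c | LinearIndependent K (Fin.snoc (Fin.snoc v b) c : Fin (n + 2) → V)} =
        if LinearIndependent K (Fin.snoc v b : Fin (n + 1) → V)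
        then Fintype.card V - Fintype.card K ^ (n + 1) else 0 := by
    split_ifs with hb
    · exact card_filter_linearIndependent_snoc hb
    · exact card_eq_zero.2 <|
        filter_eq_empty_iff.2 fun c _ hc => hb (linearIndependent_finSnoc.1 hc).1
  calc _ = ∑ b : V, #{c | LinearIndependent K (Fin.snoc (Fin.snoc v b) c : Fin (n + 2) → V)} := by
        simp only [card_filter, Fintype.sum_prod_type]
    _ = ∑ b ∈ {b | LinearIndependent K (Fin.snoc v b : Fin (n + 1) → V)},
          (Fintype.card V - Fintype.card K ^ (n + 1)) := by
        rw [sum_filter]; exact sum_congr rfl fun b _ => hfiber b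
    _ = _ := by rw [sum_const, smul_eq_mul, card_filter_linearIndependent_snoc hv]

end LinearIndependent

/-- In characteristic `2` the first entry is the paper's `1 + x + b + c`. -/
def fourBlock {R : Type*} [Ring R] (x b c : R) : Finset R :=
  univ.image ![1 - (x + b + c), x, b, c]

theorem eq_fourBlock {R : Type*} [CommRing R] {B : Finset R} (hcard : B.card = 4)
    (hsum : B.sum id = 1) {x b c : R} (hx : x ∈ B) (hb : b ∈ B.erase x)
    (hc : c ∈ (B.erase x).erase b) : B = fourBlock x b c := by
  obtain ⟨d, hd⟩ : ∃ d, ((B.erase x).erase b).erase c = {d} := card_eq_one.1 <| by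
    rw [card_erase_of_mem hc, card_erase_of_mem hb, card_erase_of_mem hx, hcard]
  have hB : B = {x, b, c, d} := by
    rw [← hd, insert_erase hc, insert_erase hb, insert_erase hx]
  have hxbcd : x + (b + (c + d)) = 1 := by
    rw [← hsum, ← add_sum_erase B id hx, ← add_sum_erase _ id hb, ← add_sum_erase _ id hc, hd,
      sum_singleton]
    rfl
  have hd : d = 1 - (x + b + c) := by linear_combination hxbcd
  rw [hB, hd, fourBlock]
  ext y
  simp only [mem_insert, mem_singleton, mem_image, mem_univ, true_and, Fin.exists_fin_succ,
    Matrix.cons_val_zero, Matrix.cons_val_succ, Matrix.cons_val_fin_one, exists_const]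
  tauto

instance {p n : ℕ} [Fact p.Prime] : Fintype (GaloisField p n) := Fintype.ofFinite _

theorem GaloisField.fintypeCard (p : ℕ) [Fact p.Prime] {n : ℕ} (hn : n ≠ 0) :
    Fintype.card (GaloisField p n) = p ^ n := by
  rw [Fintype.card_eq_nat_card, GaloisField.card p n hn]

section Design

variable {m : ℕ}

theorem mem_designW_iff {k : ℕ} (hk : 2 ≤ k) {B : Finset (GaloisField 2 m)} :
    B ∈ designW m k ↔ B.card = k ∧ B.sum id = 1 ∧ ∀ t ⊆ B, t.Nonempty → t.sum id ≠ 0 := by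
  constructor
  · rintro ⟨-, hcard, hsum, hmin⟩
    refine ⟨hcard, hsum, fun t ht htne ht0 => ?_⟩
    obtain rfl | htB := eq_or_ne t B
    · exact one_ne_zero (hsum.symm.trans ht0)
    refine hmin (B \ t) sdiff_subset (sdiff_nonempty.2 fun hBt => htB (ht.antisymm hBt))
      (sdiff_ssubset ht htne).ne ?_
    rw [← hsum]
    exact (sum_sdiff_eq_sum_iff ht).2 ht0
  · rintro ⟨hcard, hsum, hfree⟩
    refine ⟨fun a ha => ⟨fun ha0 => ?_, fun ha1 => ?_⟩, hcard, hsum, fun I hI hIne hIB hI1 => ?_⟩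
    · exact hfree {a} (singleton_subset_iff.2 ha) (singleton_nonempty a) (by simpa using ha0)
    · refine hfree (B.erase a) (erase_subset a B) ?_ ?_
      · rw [← card_pos, card_erase_of_mem ha]; omega
      · rw [sum_erase_eq_sub ha, hsum, id, ha1, sub_self]
    · refine hfree (B \ I) sdiff_subset (sdiff_nonempty.2 fun hBI => hIB (hI.antisymm hBI)) ?_
      rw [← sum_sdiff_eq_sum_iff sdiff_subset, Finset.sdiff_sdiff_eq_self hI, hI1, hsum]

theorem image_mem_designW_iff {k : ℕ} (hk : 2 ≤ k) (w : Fin k → GaloisField 2 m) :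
    univ.image w ∈ designW m k ↔ ∑ i, w i = 1 ∧ LinearIndependent (ZMod 2) w := by
  rw [mem_designW_iff hk, linearIndependent_zmod_two_iff]
  constructor
  · rintro ⟨hcard, hsum, hfree⟩
    have hw : Function.Injective w := by
      rw [← Set.injOn_univ, ← coe_univ, ← card_image_iff, hcard, card_univ, Fintype.card_fin]
    refine ⟨by rwa [sum_image hw.injOn] at hsum, fun s hs => ?_⟩
    simpa [sum_image hw.injOn] using
      hfree (s.image w) (image_subset_image (subset_univ s)) (hs.image w)
  · rintro ⟨hsum, hfree⟩
    have hw : Function.Injective w := (linearIndependent_zmod_two_iff.2 hfree).injective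
    refine ⟨by rw [card_image_of_injective _ hw, card_univ, Fintype.card_fin],
      by rwa [sum_image hw.injOn], fun t ht htne => ?_⟩
    obtain ⟨s, -, rfl⟩ := subset_image_iff.mp ht
    rw [sum_image hw.injOn]
    exact hfree s (image_nonempty.mp htne)

theorem fourBlock_mem_designW_iff (x b c : GaloisField 2 m) :
    fourBlock x b c ∈ designW m 4 ↔ LinearIndependent (ZMod 2) ![1, x, b, c] := by
  have hsum : ∑ i, ![1 - (x + b + c), x, b, c] i = 1 := by
    rw [Fin.sum_univ_four]
    show 1 - (x + b + c) + x + b + c = 1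
    ring
  have hu : x + b + c ∈ Submodule.span (ZMod 2) (Set.range ![x, b, c]) :=
    add_mem (add_mem (Submodule.subset_span ⟨0, rfl⟩) (Submodule.subset_span ⟨1, rfl⟩))
      (Submodule.subset_span ⟨2, rfl⟩)
  rw [fourBlock, image_mem_designW_iff (by norm_num), and_iff_right hsum]
  exact linearIndependent_finCons_sub_iff hu

theorem filter_fourBlock_eq_offDiag {B : Finset (GaloisField 2 m)} (hB : B ∈ designW m 4)
    {x : GaloisField 2 m} (hx : x ∈ B) :
    ({p | LinearIndependent (ZMod 2) ![1, x, p.1, p.2] ∧ fourBlock x p.1 p.2 = B} :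
      Finset (GaloisField 2 m × GaloisField 2 m)) = (B.erase x).offDiag := by
  ext ⟨b, c⟩
  simp only [mem_filter, mem_univ, true_and, mem_offDiag]
  constructor
  · rintro ⟨hli, rfl⟩
    have hinj := hli.injective
    exact ⟨mem_erase.2 ⟨hinj.ne (by decide : (2 : Fin 4) ≠ 1), mem_image_of_mem _ (mem_univ 2)⟩,
      mem_erase.2 ⟨hinj.ne (by decide : (3 : Fin 4) ≠ 1), mem_image_of_mem _ (mem_univ 3)⟩,
      hinj.ne (by decide : (2 : Fin 4) ≠ 3)⟩
  · rintro ⟨hb, hc, hbc⟩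
    have hBeq := eq_fourBlock hB.2.1 hB.2.2.1 hx hb (mem_erase.2 ⟨hbc.symm, hc⟩)
    exact ⟨(fourBlock_mem_designW_iff x b c).1 (hBeq ▸ hB), hBeq.symm⟩

theorem linearIndependent_one_of_mem_designX {x : GaloisField 2 m} (hx : x ∈ designX m) :
    LinearIndependent (ZMod 2) ![1, x] := by
  rw [LinearIndependent.pair_iff' one_ne_zero]
  intro a
  obtain rfl | rfl : a = 0 ∨ a = 1 := by revert a; decide
  · simpa using hx.1.symm
  · simpa using hx.2.symm

theorem card_filter_designW_four_mem_mul (hm : m ≠ 0) {x : GaloisField 2 m}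
    (hx : x ∈ designX m) :
    #{B : Finset (GaloisField 2 m) | B ∈ designW m 4 ∧ x ∈ B} * 6 = (2 ^ m - 4) * (2 ^ m - 8) := by
  have hpairs : #{p : GaloisField 2 m × GaloisField 2 m |
      LinearIndependent (ZMod 2) ![1, x, p.1, p.2]} = (2 ^ m - 4) * (2 ^ m - 8) := by
    have h := card_filter_linearIndependent_snoc_snoc (linearIndependent_one_of_mem_designX hx)
    simp only [Matrix.Fin.snoc_vecCons, Matrix.Fin.snoc_vecEmpty, ZMod.card,
      GaloisField.fintypeCard 2 hm] at h
    rw [h]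
    norm_num
  rw [← hpairs, card_eq_sum_card_fiberwise
    (f := fun p : GaloisField 2 m × GaloisField 2 m => fourBlock x p.1 p.2)]
  · rw [sum_congr rfl fun B hB => ?_, sum_const, smul_eq_mul]
    obtain ⟨hB, hxB⟩ := (mem_filter.1 hB).2
    rw [filter_filter, filter_fourBlock_eq_offDiag hB hxB, offDiag_card, card_erase_of_mem hxB,
      hB.2.1]
  · intro p hp
    simp only [coe_filter, mem_univ, true_and, Set.mem_ofPred_eq] at hp ⊢
    exact ⟨(fourBlock_mem_designW_iff x p.1 p.2).2 hp, mem_image_of_mem _ (mem_univ 1)⟩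

theorem ncard_designW_four_mem_mul (hm : m ≠ 0) {x : GaloisField 2 m} (hx : x ∈ designX m) :
    {B ∈ designW m 4 | x ∈ B}.ncard * 6 = (2 ^ m - 4) * (2 ^ m - 8) := by
  rw [← card_filter_designW_four_mem_mul hm hx, ← Set.ncard_coe_finset]
  congr 2
  ext B
  simp

theorem card_designX (hm : m ≠ 0) : #{x : GaloisField 2 m | x ∈ designX m} = 2 ^ m - 2 := by
  have hX : ({x | x ∈ designX m} : Finset (GaloisField 2 m)) = univ \ {0, 1} := by
    ext x
    simp only [mem_filter, mem_univ, true_and, mem_sdiff, mem_insert, mem_singleton, not_or]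
    rfl
  rw [hX, card_univ_sdiff, GaloisField.fintypeCard 2 hm, card_pair zero_ne_one]

theorem ncard_designW_four_mul (hm : m ≠ 0) :
    (designW m 4).ncard * 24 = (2 ^ m - 2) * (2 ^ m - 4) * (2 ^ m - 8) := by
  set T : Finset (Finset (GaloisField 2 m)) := {B | B ∈ designW m 4}
  set X : Finset (GaloisField 2 m) := {x | x ∈ designX m}
  have hT : (designW m 4).ncard = #T := by
    rw [← Set.ncard_coe_finset]
    congr 1
    ext B
    simp [T]
  have hdouble := sum_card_bipartiteAbove_eq_sum_card_bipartiteBelow (s := X) (t := T) (· ∈ ·)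
  have habove : ∀ x ∈ X, #(T.bipartiteAbove (· ∈ ·) x) * 6 = (2 ^ m - 4) * (2 ^ m - 8) := by
    intro x hx
    rw [bipartiteAbove, filter_filter]
    exact card_filter_designW_four_mem_mul hm (by simpa [X] using hx)
  have hbelow : ∀ B ∈ T, #(X.bipartiteBelow (· ∈ ·) B) = 4 := by
    intro B hB
    obtain ⟨hBX, hcard, -⟩ := (mem_filter.1 hB).2
    rw [bipartiteBelow, filter_mem_eq_inter, inter_eq_right.2 fun y hy => by simpa [X] using hBX hy,
      hcard]
  calc (designW m 4).ncard * 24 = (∑ B ∈ T, #(X.bipartiteBelow (· ∈ ·) B)) * 6 := by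
        rw [hT, sum_congr rfl hbelow, sum_const, smul_eq_mul]
        ring
    _ = ∑ x ∈ X, #(T.bipartiteAbove (· ∈ ·) x) * 6 := by rw [← hdouble, sum_mul]
    _ = _ := by rw [sum_congr rfl habove, sum_const, smul_eq_mul, card_designX hm, mul_assoc]

end Design

/-- For `m ≥ 4`, every `x ∈ X` lies in exactly `r_4` blocks of `W_4`, and the total
number of blocks is `|W_4| = b_4`. -/
theorem repetition_and_block_numbers_W4 (m : ℕ) (hm : 4 ≤ m) :
    (∀ x ∈ designX m, {B ∈ designW m 4 | x ∈ B}.ncard = (2 ^ m - 4) * (2 ^ m - 8) / Nat.factorial 3) ∧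
    (designW m 4).ncard = (2 ^ m - 2) * (2 ^ m - 4) * (2 ^ m - 8) / Nat.factorial 4 := by
  have hm0 : m ≠ 0 := by omega
  refine ⟨fun x hx => ?_, ?_⟩
  · rw [show Nat.factorial 3 = 6 from rfl, ← ncard_designW_four_mem_mul hm0 hx,
      Nat.mul_div_cancel _ (by norm_num)]
  · rw [show Nat.factorial 4 = 24 from rfl, ← ncard_designW_four_mul hm0,
      Nat.mul_div_cancel _ (by norm_num)]
end
end

section
/- Suppose m ≥ 5. Then every element x ∈ X is contained in exactly r_5 = (2^m − 4)(2^m − 8)(2^m − 16)/4! blocks of W_5, and the total number of blocks is |W_5| = (2^m − 2)(2^m − 4)(2^m − 8)(2^m − 16)/5!. -/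
/-!
Regard `V = GF(2^m)` as a vector space over `𝔽₂`, with `u = 1`. A set `B` with `∑ B = u` is
minimal exactly when, for one (equivalently every) `a ∈ B`, the set `{u} ∪ (B \ {a})` is
linearly independent: a relation among these vectors is a subset of `B` summing to `0` or to
`u`, and the complement in `B` of a subset summing to `0` sums to `u`. Conversely, an
independent set `{u, x, b, c, d}` completes to the block `{x, b, c, d, u + x + b + c + d}`.
Hence the blocks through `x` are the images of the ordered triples `(b, c, d)` with
`u, x, b, c, d` independent, of which there are `(q - 4)(q - 8)(q - 16)`, each block arising
from exactly `4 · 3 · 2` of them. Counting incidences between blocks and points of `X` then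
gives `5 |W₅| = (q - 2) r₅`.
-/

open scoped Classical

noncomputable section

section

open Finset Submodule

section MinimalSum

variable {V : Type*} [AddCommGroup V] {u : V} {B T : Finset V}

def IsMinimalSum (u : V) (B : Finset V) : Prop :=
  B.sum id = u ∧ ∀ I ⊆ B, I.Nonempty → I ≠ B → I.sum id ≠ u

lemma IsMinimalSum.sum_notMem (hB : IsMinimalSum u B) (hcard : 2 ≤ #B) : u ∉ B := by
  intro hu
  refine hB.2 {u} (singleton_subset_iff.2 hu) (singleton_nonempty u) ?_ (sum_singleton id u)
  rintro rfl
  simp at hcard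

lemma IsMinimalSum.zero_notMem (hB : IsMinimalSum u B) (hcard : 2 ≤ #B) : (0 : V) ∉ B := by
  intro h0
  refine hB.2 (B.erase 0) (erase_subset 0 B) ?_ (fun h => notMem_erase 0 B (h.symm ▸ h0)) ?_
  · rw [← card_pos, card_erase_of_mem h0]; omega
  · rw [sum_erase B (f := id) rfl, hB.1]

lemma eq_insert_sum_sub_of_card_sdiff_eq_one (hT : T ⊆ B) (h : #(B \ T) = 1) :
    B = insert (B.sum id - T.sum id) T := by
  obtain ⟨a, ha⟩ := card_eq_one.1 h
  rw [← sum_sdiff hT, ha, sum_singleton, id, add_sub_cancel_right, insert_eq, ← ha,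
    sdiff_union_of_subset hT]

end MinimalSum

section CharTwo

variable {V : Type*} [AddCommGroup V] [Module (ZMod 2) V] {u x : V} {B T : Finset V}

lemma zmod_two_smul_eq_ite (a : ZMod 2) (v : V) : a • v = if a = 0 then 0 else v := by
  rcases (by decide : ∀ b : ZMod 2, b = 0 ∨ b = 1) a with rfl | rfl <;> simp

lemma linearIndepOn_zmod_two_iff {S : Finset V} :
    LinearIndepOn (ZMod 2) id (S : Set V) ↔ ∀ I ⊆ S, I.Nonempty → I.sum id ≠ 0 := by
  rw [linearIndepOn_finset_iff]
  constructor
  · rintro hS I hIS ⟨a, ha⟩ hI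
    have := hS (fun v => if v ∈ I then 1 else 0)
      (by simpa [ite_smul, sum_ite_mem, inter_eq_right.2 hIS] using hI) a (hIS ha)
    simp [ha] at this
  · intro hS f hf a ha
    by_contra hfa
    refine hS (S.filter (f · ≠ 0)) (filter_subset _ S) ⟨a, mem_filter.2 ⟨ha, hfa⟩⟩ ?_
    simpa [zmod_two_smul_eq_ite, sum_filter, ite_not] using hf

def completeToSum (u : V) (T : Finset V) : Finset V := insert (u + T.sum id) T

lemma isMinimalSum_completeToSum (hT : LinearIndepOn (ZMod 2) id (↑(insert u T) : Set V))
    (hu : u ∉ T) : IsMinimalSum u (completeToSum u T) ∧ u + T.sum id ∉ T := by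
  rw [linearIndepOn_zmod_two_iff] at hT
  have hσ : u + T.sum id ∉ T := by
    intro hσ
    refine hT (insert u (T.erase (u + T.sum id))) (insert_subset_insert u (erase_subset _ T))
      (insert_nonempty _ _) ?_
    rw [sum_insert (fun h => hu (mem_of_mem_erase h)), sum_erase_eq_sub hσ,
      ZModModule.sub_eq_add, ← add_assoc]
    exact ZModModule.add_self _
  have hsumB : (completeToSum u T).sum id = u := by
    rw [completeToSum, sum_insert hσ, id, add_assoc, ZModModule.add_self, add_zero]
  refine ⟨⟨hsumB, fun I hIB hI hIne hIsum => ?_⟩, hσ⟩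
  by_cases hσI : u + T.sum id ∈ I
  · have hsub : completeToSum u T \ I ⊆ insert u T := by
      intro v hv
      rw [mem_sdiff, completeToSum, mem_insert] at hv
      rcases hv with ⟨rfl | hv, hvI⟩
      · exact absurd hσI hvI
      · exact mem_insert_of_mem hv
    refine hT _ hsub (sdiff_nonempty.2 fun h => hIne (hIB.antisymm h)) ?_
    rw [sum_sdiff_eq_sub hIB, hIsum, hsumB, sub_self]
  · have hIT : I ⊆ T := fun v hv =>
      mem_of_mem_insert_of_ne (hIB hv) (by rintro rfl; exact hσI hv)
    refine hT (insert u I) (insert_subset_insert u hIT) (insert_nonempty u I) ?_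
    rw [sum_insert (fun h => hu (hIT h)), hIsum]
    exact ZModModule.add_self u

lemma IsMinimalSum.linearIndepOn_insert (hB : IsMinimalSum u B) (hu : u ≠ 0) (hTB : T ⊂ B) :
    LinearIndepOn (ZMod 2) id (↑(insert u T) : Set V) := by
  rw [linearIndepOn_zmod_two_iff]
  intro I hI hIne hIsum
  by_cases huI : u ∈ I
  · have hsubT : I.erase u ⊆ T := fun v hv =>
      mem_of_mem_insert_of_ne (hI (mem_of_mem_erase hv)) (ne_of_mem_erase hv)
    have hsum : (I.erase u).sum id = u := by
      rw [sum_erase_eq_sub huI, hIsum, zero_sub, id, ZModModule.neg_eq_self]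
    exact hB.2 (I.erase u) (hsubT.trans hTB.subset) (nonempty_of_sum_ne_zero (hsum ▸ hu))
      (fun h => hTB.ne (hTB.subset.antisymm (h ▸ hsubT))) hsum
  · have hIT : I ⊆ T := fun v hv =>
      mem_of_mem_insert_of_ne (hI hv) (by rintro rfl; exact huI hv)
    obtain ⟨b, hbB, hbT⟩ := exists_of_ssubset hTB
    obtain ⟨a, ha⟩ := hIne
    refine hB.2 (B \ I) sdiff_subset ⟨b, mem_sdiff.2 ⟨hbB, fun h => hbT (hIT h)⟩⟩
      (fun h => (mem_sdiff.1 (h ▸ hTB.subset (hIT ha))).2 ha) ?_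
    rw [sum_sdiff_eq_sub (hIT.trans hTB.subset), hIsum, hB.1, sub_zero]

lemma eq_completeToSum (hsum : B.sum id = u) (hT : T ⊆ B) (h : #(B \ T) = 1) :
    B = completeToSum u T := by
  rw [completeToSum, ← hsum, ← ZModModule.sub_eq_add]
  exact eq_insert_sum_sub_of_card_sdiff_eq_one hT h

lemma linearIndepOn_pair (hu : u ≠ 0) (hx0 : x ≠ 0) (hxu : x ≠ u) :
    LinearIndepOn (ZMod 2) id ({u, x} : Set V) := by
  rw [Set.pair_comm]
  refine ((linearIndepOn_singleton_iff (ZMod 2)).2 hu).id_insert fun hx => ?_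
  obtain ⟨a, rfl⟩ := mem_span_singleton.1 hx
  rcases (by decide : ∀ b : ZMod 2, b = 0 ∨ b = 1) a with rfl | rfl <;> simp_all

lemma linearIndepOn_insert_and_card_of_notMem_span {S : Finset V} {w : V}
    (hS : LinearIndepOn (ZMod 2) id (S : Set V)) (hw : w ∉ span (ZMod 2) (S : Set V)) :
    LinearIndepOn (ZMod 2) id (↑(insert w S) : Set V) ∧ #(insert w S) = #S + 1 := by
  rw [coe_insert]
  exact ⟨hS.id_insert hw, card_insert_of_notMem fun h => hw (subset_span h)⟩

lemma notMem_span_of_linearIndepOn_insert {s : Set V} {w : V}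
    (h : LinearIndepOn (ZMod 2) id (insert w s)) (hw : w ∉ s) : w ∉ span (ZMod 2) s :=
  ((linearIndepOn_id_insert hw).1 h).2

end CharTwo

section Counting

variable {α β : Type*} [Fintype α] [Fintype β]

-- The decidability instances are arguments so that these lemmas match filters elaborated under
-- `Classical`, whose instances for compound predicates differ from the ones built here.
lemma card_filter_prod_eq_mul {P : α → Prop} {Q : α → β → Prop} [DecidablePred P]
    [∀ a, DecidablePred (Q a)] [DecidablePred fun p : α × β => P p.1 ∧ Q p.1 p.2] {n : ℕ}
    (hQ : ∀ a, P a → #{b | Q a b} = n) :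
    #{p : α × β | P p.1 ∧ Q p.1 p.2} = #{a | P a} * n := by
  rw [card_filter, Fintype.sum_prod_type, card_filter, sum_mul]
  refine Fintype.sum_congr _ _ fun a => ?_
  by_cases ha : P a
  · simp only [ha, true_and, if_true, one_mul, ← hQ a ha, card_filter]
  · simp [ha]

lemma card_filter_triple_eq_mul {P : α → Prop} {Q : α → α → Prop}
    {R : α → α → α → Prop} [DecidablePred P] [∀ a, DecidablePred (Q a)]
    [∀ a b, DecidablePred (R a b)]
    [DecidablePred fun p : α × α × α => P p.1 ∧ Q p.1 p.2.1 ∧ R p.1 p.2.1 p.2.2]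
    {k l n : ℕ}
    (hP : #{a | P a} = k) (hQ : ∀ a, P a → #{b | Q a b} = l)
    (hR : ∀ a b, P a → Q a b → #{c | R a b c} = n) :
    #{p : α × α × α | P p.1 ∧ Q p.1 p.2.1 ∧ R p.1 p.2.1 p.2.2} = k * l * n := by
  have h := card_filter_prod_eq_mul (Q := fun a (q : α × α) => Q a q.1 ∧ R a q.1 q.2)
    (n := l * n) fun a ha => by rw [card_filter_prod_eq_mul fun b hb => hR a b ha hb, hQ a ha]
  rw [hP, ← mul_assoc] at h
  convert h using 3

end Counting

lemma card_notMem_span {K V : Type*} [DivisionRing K] [Fintype K] [AddCommGroup V] [Module K V]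
    [Fintype V] {S : Finset V} (hS : LinearIndepOn K id (S : Set V)) :
    #{w | w ∉ span K (S : Set V)} = Fintype.card V - Fintype.card K ^ #S := by
  have h := card_filter_add_card_filter_not (s := univ) (· ∈ span K (S : Set V))
  rw [card_univ, ← Fintype.card_subtype, Module.card_eq_pow_finrank (K := K),
    finrank_span_set_eq_card hS, toFinset_coe] at h
  omega

section Blocks

variable {V : Type*} [AddCommGroup V] [Module (ZMod 2) V] [Fintype V] {u x : V}

def blocks (u : V) : Finset (Finset V) := {B | #B = 5 ∧ IsMinimalSum u B}

def extendingTriples (u x : V) : Finset (V × V × V) :=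
  {p | p.1 ∉ span (ZMod 2) {u, x} ∧ p.2.1 ∉ span (ZMod 2) {p.1, u, x} ∧
    p.2.2 ∉ span (ZMod 2) {p.2.1, p.1, u, x}}

lemma card_extendingTriples (hu : u ≠ 0) (hx0 : x ≠ 0) (hxu : x ≠ u) :
    #(extendingTriples u x) =
      (Fintype.card V - 4) * (Fintype.card V - 8) * (Fintype.card V - 16) := by
  have h0 : LinearIndepOn (ZMod 2) id (↑({u, x} : Finset V) : Set V) := by
    simpa using linearIndepOn_pair hu hx0 hxu
  have hcard0 : #({u, x} : Finset V) = 2 := card_pair hxu.symm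
  have hcount : ∀ S : Finset V, LinearIndepOn (ZMod 2) id (S : Set V) →
      #{w | w ∉ span (ZMod 2) (S : Set V)} = Fintype.card V - 2 ^ #S := fun S hS => by
    rw [card_notMem_span hS, ZMod.card]
  rw [extendingTriples]
  apply card_filter_triple_eq_mul (P := fun b => b ∉ span (ZMod 2) {u, x})
    (Q := fun b c => c ∉ span (ZMod 2) {b, u, x})
    (R := fun b c d => d ∉ span (ZMod 2) {c, b, u, x})
  · simpa [hcard0] using hcount _ h0
  · intro b hb
    obtain ⟨h1, hcard1⟩ := linearIndepOn_insert_and_card_of_notMem_span h0 (by simpa using hb)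
    simpa [hcard1, hcard0] using hcount _ h1
  · intro b c hb hc
    obtain ⟨h1, hcard1⟩ := linearIndepOn_insert_and_card_of_notMem_span h0 (by simpa using hb)
    obtain ⟨h2, hcard2⟩ := linearIndepOn_insert_and_card_of_notMem_span h1 (by simpa using hc)
    simpa [hcard2, hcard1, hcard0] using hcount _ h2

def tripleBlock (u x : V) (p : V × V × V) : Finset V := completeToSum u {x, p.1, p.2.1, p.2.2}

lemma linearIndepOn_of_mem_extendingTriples (hux : LinearIndepOn (ZMod 2) id ({u, x} : Set V))
    (hxu : x ≠ u) {p : V × V × V} (hp : p ∈ extendingTriples u x) :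
    LinearIndepOn (ZMod 2) id (↑({u, x, p.1, p.2.1, p.2.2} : Finset V) : Set V) ∧
      #({u, x, p.1, p.2.1, p.2.2} : Finset V) = 5 := by
  simp only [extendingTriples, mem_filter, mem_univ, true_and] at hp
  obtain ⟨hb, hc, hd⟩ := hp
  obtain ⟨h1, hcard1⟩ :=
    linearIndepOn_insert_and_card_of_notMem_span (S := {u, x}) (by simpa using hux)
      (by simpa using hb)
  obtain ⟨h2, hcard2⟩ := linearIndepOn_insert_and_card_of_notMem_span h1 (by simpa using hc)
  obtain ⟨h3, hcard3⟩ := linearIndepOn_insert_and_card_of_notMem_span h2 (by simpa using hd)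
  have hS : ({u, x, p.1, p.2.1, p.2.2} : Finset V) =
      insert p.2.2 (insert p.2.1 (insert p.1 {u, x})) := by
    ext; simp only [mem_insert, mem_singleton]; tauto
  rw [hS]
  exact ⟨h3, by rw [hcard3, hcard2, hcard1, card_pair hxu.symm]⟩

lemma tripleBlock_mem (hu : u ≠ 0) (hx0 : x ≠ 0) (hxu : x ≠ u) {p : V × V × V}
    (hp : p ∈ extendingTriples u x) :
    tripleBlock u x p ∈ blocks u ∧ x ∈ tripleBlock u x p := by
  obtain ⟨hLI, h5⟩ :=
    linearIndepOn_of_mem_extendingTriples (linearIndepOn_pair hu hx0 hxu) hxu hp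
  have huT : u ∉ ({x, p.1, p.2.1, p.2.2} : Finset V) := fun h => by
    rw [insert_eq_of_mem h] at h5; exact absurd h5 (card_le_four.trans_lt (by norm_num)).ne
  obtain ⟨hmin, hσ⟩ := isMinimalSum_completeToSum hLI huT
  refine ⟨?_, mem_insert_of_mem (mem_insert_self _ _)⟩
  simp only [blocks, mem_filter, mem_univ, true_and]
  refine ⟨?_, hmin⟩
  rw [tripleBlock, completeToSum, card_insert_of_notMem hσ, ← card_insert_of_notMem huT, h5]

lemma mem_extendingTriples_and_tripleBlock_eq_iff (hu : u ≠ 0) {B : Finset V}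
    (hB : B ∈ blocks u) (hxB : x ∈ B) (p : V × V × V) :
    p ∈ extendingTriples u x ∧ tripleBlock u x p = B ↔
      p.1 ∈ B.erase x ∧ p.2.1 ∈ (B.erase x).erase p.1 ∧
        p.2.2 ∈ ((B.erase x).erase p.1).erase p.2.1 := by
  obtain ⟨b, c, d⟩ := p
  simp only [blocks, mem_filter, mem_univ, true_and] at hB
  obtain ⟨h5, hB⟩ := hB
  simp only [extendingTriples, mem_filter, mem_univ, true_and, mem_erase]
  constructor
  · rintro ⟨⟨hb, hc, hd⟩, rfl⟩
    have hne : ∀ {v w : V} {s : Set V}, v ∉ span (ZMod 2) s → w ∈ s → v ≠ w :=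
      fun hv hw h => hv (h ▸ subset_span hw)
    simp only [tripleBlock, completeToSum, mem_insert, mem_singleton, true_or, or_true, and_true]
    exact ⟨hne hb (by simp), ⟨hne hc (by simp), hne hc (by simp)⟩, hne hd (by simp),
      hne hd (by simp), hne hd (by simp)⟩
  · rintro ⟨⟨hbx, hbB⟩, ⟨hcb, hcx, hcB⟩, ⟨hdc, hdb, hdx, hdB⟩⟩
    set T : Finset V := {x, b, c, d}
    have hTB : T ⊆ B := by simp [T, insert_subset_iff, *]
    have hT4 : #T = 4 := by
      rw [card_insert_of_notMem (by simp [*, Ne.symm]),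
        card_insert_of_notMem (by simp [*, Ne.symm]), card_pair (Ne.symm hdc)]
    have hsd : #(B \ T) = 1 := by rw [card_sdiff_of_subset hTB, h5, hT4]
    have hTB' : T ⊂ B :=
      Finset.ssubset_iff_subset_ne.2 ⟨hTB, fun h => by rw [h, h5] at hT4; simp at hT4⟩
    have hLI := hB.linearIndepOn_insert hu hTB'
    have huB : u ∉ B := hB.sum_notMem (by omega)
    have huT : ∀ v ∈ B, v ≠ u := fun v hv h => huB (h ▸ hv)
    refine ⟨⟨?_, ?_, ?_⟩, (eq_completeToSum hB.1 hTB hsd).symm⟩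
    · exact notMem_span_of_linearIndepOn_insert (hLI.mono (by simp [T, Set.insert_subset_iff]))
        (by simp [hbx, huT b hbB])
    · exact notMem_span_of_linearIndepOn_insert (hLI.mono (by simp [T, Set.insert_subset_iff]))
        (by simp [hcx, hcb, huT c hcB])
    · exact notMem_span_of_linearIndepOn_insert (hLI.mono (by simp [T, Set.insert_subset_iff]))
        (by simp [hdx, hdb, hdc, huT d hdB])

lemma card_blocks_mem (hu : u ≠ 0) (hx0 : x ≠ 0) (hxu : x ≠ u) :
    24 * #{B ∈ blocks u | x ∈ B} =
      (Fintype.card V - 4) * (Fintype.card V - 8) * (Fintype.card V - 16) := by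
  have hmaps : Set.MapsTo (tripleBlock u x) (extendingTriples u x)
      ({B ∈ blocks u | x ∈ B} : Finset (Finset V)) :=
    fun p hp => by simpa using tripleBlock_mem hu hx0 hxu hp
  rw [← card_extendingTriples hu hx0 hxu, card_eq_sum_card_fiberwise hmaps, mul_comm,
    sum_const_nat fun B hBx => ?_]
  obtain ⟨hB, hxB⟩ := mem_filter.1 hBx
  have h5 : #B = 5 := (mem_filter.1 hB).2.1
  have hfiber : {p ∈ extendingTriples u x | tripleBlock u x p = B} =
      ({p | p.1 ∈ B.erase x ∧ p.2.1 ∈ (B.erase x).erase p.1 ∧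
        p.2.2 ∈ ((B.erase x).erase p.1).erase p.2.1} : Finset (V × V × V)) := by
    ext p
    rw [mem_filter, mem_extendingTriples_and_tripleBlock_eq_iff hu hB hxB, mem_filter]
    simp only [mem_univ, true_and]
  rw [hfiber]
  apply card_filter_triple_eq_mul (P := (· ∈ B.erase x))
    (Q := fun b c => c ∈ (B.erase x).erase b)
    (R := fun b c d => d ∈ ((B.erase x).erase b).erase c) (k := 4) (l := 3) (n := 2)
  · rw [filter_univ_mem, card_erase_of_mem hxB, h5]
  · intro b hb
    rw [filter_univ_mem, card_erase_of_mem hb, card_erase_of_mem hxB, h5]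
  · intro b c hb hc
    rw [filter_univ_mem, card_erase_of_mem hc, card_erase_of_mem hb, card_erase_of_mem hxB, h5]

lemma card_blocks (hu : u ≠ 0) :
    120 * #(blocks u) = (Fintype.card V - 2) * (Fintype.card V - 4) * (Fintype.card V - 8) *
      (Fintype.card V - 16) := by
  set X : Finset V := {y | y ≠ 0 ∧ y ≠ u}
  have hX : #X = Fintype.card V - 2 := by
    rw [show X = ({0, u} : Finset V)ᶜ by ext; simp [X], card_compl, card_pair hu.symm]
  have hB : ∀ B ∈ blocks u, #{y ∈ X | y ∈ B} = 5 := fun B hB => by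
    obtain ⟨h5, hmin⟩ := (mem_filter.1 hB).2
    rw [← h5, filter_mem_eq_inter, inter_eq_right.2 fun y hy => ?_]
    exact mem_filter.2 ⟨mem_univ y, fun h => hmin.zero_notMem (by omega) (h ▸ hy),
      fun h => hmin.sum_notMem (by omega) (h ▸ hy)⟩
  have hy : ∀ y ∈ X, 24 * #{B ∈ blocks u | y ∈ B} =
      (Fintype.card V - 4) * (Fintype.card V - 8) * (Fintype.card V - 16) := fun y hy => by
    obtain ⟨hy0, hyu⟩ := (mem_filter.1 hy).2
    exact card_blocks_mem hu hy0 hyu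
  have hdouble := sum_card_bipartiteAbove_eq_sum_card_bipartiteBelow (s := blocks u) (t := X)
    (r := fun B y => y ∈ B)
  simp only [bipartiteAbove, bipartiteBelow] at hdouble
  calc 120 * #(blocks u) = 24 * ∑ B ∈ blocks u, #{y ∈ X | y ∈ B} := by
        rw [sum_const_nat hB]; ring
    _ = ∑ y ∈ X, 24 * #{B ∈ blocks u | y ∈ B} := by rw [hdouble, mul_sum]
    _ = _ := by rw [sum_const_nat hy, hX]; ring

end Blocks

lemma designW_eq {m k : ℕ} (hk : 2 ≤ k) : designW m k = {B | #B = k ∧ IsMinimalSum 1 B} := by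
  ext B
  refine ⟨fun ⟨_, hB⟩ => hB, fun ⟨hk', hB⟩ => ⟨fun y hy => ?_, hk', hB⟩⟩
  exact ⟨fun h => hB.zero_notMem (by omega) (h ▸ hy),
    fun h => hB.sum_notMem (by omega) (h ▸ hy)⟩

end

/-- For `m ≥ 5`, every `x ∈ X` lies in exactly `r_5` blocks of `W_5`, and the total
number of blocks is `|W_5| = b_5`. -/
theorem repetition_and_block_numbers_W5 (m : ℕ) (hm : 5 ≤ m) :
    (∀ x ∈ designX m, {B ∈ designW m 5 | x ∈ B}.ncard = (2 ^ m - 4) * (2 ^ m - 8) * (2 ^ m - 16) / Nat.factorial 4) ∧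
    (designW m 5).ncard = (2 ^ m - 2) * (2 ^ m - 4) * (2 ^ m - 8) * (2 ^ m - 16) / Nat.factorial 5 := by
  let _ : Fintype (GaloisField 2 m) := Fintype.ofFinite _
  have hq : Fintype.card (GaloisField 2 m) = 2 ^ m := by
    rw [← Nat.card_eq_fintype_card, GaloisField.card 2 m (by omega)]
  have hW : designW m 5 = ↑(blocks (1 : GaloisField 2 m)) := by
    rw [designW_eq (by norm_num)]; ext; simp [blocks]
  refine ⟨fun x hx => ?_, ?_⟩
  · have hWx : {B ∈ designW m 5 | x ∈ B} = ↑((blocks 1).filter (x ∈ ·)) := by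
      rw [hW]; ext; simp
    rw [hWx, Set.ncard_coe_finset, ← hq]
    exact (Nat.div_eq_of_eq_mul_right (by norm_num)
      (card_blocks_mem one_ne_zero hx.1 hx.2).symm).symm
  · rw [hW, Set.ncard_coe_finset, ← hq]
    exact (Nat.div_eq_of_eq_mul_right (by norm_num) (card_blocks one_ne_zero).symm).symm
end
end

section
/- Suppose m ≥ 6. For every pair of distinct elements u, v ∈ X with u + v ≠ 1, the number of blocks B ∈ W_6 with u ∈ B and v ∈ B equals λ_6 = (2^m − 8)(2^m − 16)(2^m − 32)/4!; that is, the triple (X, W_2, W_6) is a group divisible design GDD(2^m − 2, 2, 6) with balance parameter λ_6 = (2^m − 8)(2^m − 16)(2^m − 32)/24. -/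
open scoped Classical

noncomputable section

/-!
Regard `GF(2^m)` as a vector space over `GF(2)`. A set `B ⊆ X` lies in `W_k` exactly when
`B ∪ {1}` is a minimal zero-sum set. Deleting from such a set any of the `k - 2` elements other
than `1, u, v` leaves a zero-sum-free set `S ⊇ {1, u, v}`, and conversely every zero-sum-free `S`
of size at least `2` closes up to the unique minimal zero-sum set `S ∪ {∑ S}`. A zero-sum-free
set `S` has `2^|S|` distinct subset sums, and `S ∪ {x}` is zero-sum-free exactly when `x` is not
one of them; so counting chains `{1, u, v} ⊂ S₄ ⊂ S₅ ⊂ S₆` gives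
`3! · #{S₆} = (2^m - 8)(2^m - 16)(2^m - 32)`, and each block of `W_6` through `u, v` is counted
`4` times among the `S₆`.
-/

open Finset
open scoped symmDiff Nat

section ZeroSumFree

variable {V : Type*} [AddCommGroup V]

def ZeroSumFree (s : Finset V) : Prop := ∀ t ⊆ s, t.Nonempty → t.sum id ≠ 0

def subsetSums (s : Finset V) : Finset V := s.powerset.image (·.sum id)

theorem mem_subsetSums {s : Finset V} {x : V} : x ∈ subsetSums s ↔ ∃ t ⊆ s, t.sum id = x := by
  simp [subsetSums]

theorem ZeroSumFree.mono {s t : Finset V} (h : ZeroSumFree s) (hts : t ⊆ s) : ZeroSumFree t :=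
  fun u hu => h u (hu.trans hts)

theorem mem_subsetSums_of_mem {s : Finset V} {x : V} (hx : x ∈ s) : x ∈ subsetSums s :=
  mem_subsetSums.2 ⟨{x}, singleton_subset_iff.2 hx, sum_singleton _ _⟩

theorem mem_subsetSums_insert {s : Finset V} {x y : V} (hx : x ∉ s) :
    y ∈ subsetSums (insert x s) ↔ y ∈ subsetSums s ∨ y - x ∈ subsetSums s := by
  simp only [subsetSums, powerset_insert, image_union, image_image, mem_union, mem_image,
    mem_powerset]
  refine or_congr_right ⟨?_, ?_⟩
  · rintro ⟨t, hts, rfl⟩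
    exact ⟨t, hts, by
      rw [Function.comp_apply, sum_insert (fun h => hx (hts h)), id, add_sub_cancel_left]⟩
  · rintro ⟨t, hts, ht⟩
    exact ⟨t, hts, by
      rw [Function.comp_apply, sum_insert (fun h => hx (hts h)), id, ht, add_sub_cancel]⟩

theorem mem_subsetSums_singleton {x y : V} :
    y ∈ subsetSums ({x} : Finset V) ↔ y = 0 ∨ y = x := by
  simp [mem_subsetSums, subset_singleton_iff, eq_comm]

theorem zeroSumFree_singleton {x : V} : ZeroSumFree ({x} : Finset V) ↔ x ≠ 0 := by
  simp [ZeroSumFree, subset_singleton_iff]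

variable [Module (ZMod 2) V]

theorem sum_symmDiff_id (s t : Finset V) : (s ∆ t).sum id = s.sum id + t.sum id := by
  have h := sum_sdiff (f := id) (inter_subset_union (s := s) (t := t))
  rw [← sum_union_inter, ← h, symmDiff_eq_sup_sdiff_inf, add_assoc, ZModModule.add_self,
    add_zero]
  rfl

theorem ZeroSumFree.card_subsetSums {s : Finset V} (h : ZeroSumFree s) :
    #(subsetSums s) = 2 ^ #s := by
  rw [subsetSums, card_image_of_injOn, card_powerset]
  intro t ht t' ht' heq
  by_contra hne
  have hsub : t ∆ t' ⊆ s :=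
    symmDiff_le_sup.trans (union_subset (mem_powerset.1 ht) (mem_powerset.1 ht'))
  refine h _ hsub (nonempty_iff_ne_empty.2 (symmDiff_eq_bot.not.2 hne)) ?_
  rw [sum_symmDiff_id, show t.sum id = t'.sum id from heq, ZModModule.add_self]

theorem zeroSumFree_insert_iff {s : Finset V} {x : V} (hx : x ∉ s) :
    ZeroSumFree (insert x s) ↔ ZeroSumFree s ∧ x ∉ subsetSums s := by
  constructor
  · refine fun h => ⟨h.mono (subset_insert x s), fun hmem => ?_⟩
    obtain ⟨t, hts, rfl⟩ := mem_subsetSums.1 hmem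
    refine h (insert (t.sum id) t) (insert_subset_insert _ hts) (insert_nonempty _ _) ?_
    rw [sum_insert (fun ht => hx (hts ht)), id, ZModModule.add_self]
  · rintro ⟨h, hxs⟩ t hts hne
    by_cases hxt : x ∈ t
    · intro h0
      refine hxs (mem_subsetSums.2 ⟨t.erase x, ?_, ?_⟩)
      · exact (erase_subset_erase x hts).trans (erase_insert hx).le
      · rw [← add_sum_erase t id hxt, add_eq_zero_iff_eq_neg, ZModModule.neg_eq_self] at h0
        exact h0.symm
    · exact h t ((subset_insert_iff_of_notMem hxt).1 hts) hne

end ZeroSumFree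

section Counting

variable {V : Type*} [AddCommGroup V] [Fintype V]

def zeroSumFreeExtensions (s₀ : Finset V) (j : ℕ) : Finset (Finset V) :=
  {s | s₀ ⊆ s ∧ ZeroSumFree s ∧ #s = #s₀ + j}

theorem card_zeroSumFreeExtensions_filter_subset {s₀ s' : Finset V} {j : ℕ} (hs₀ : s₀ ⊆ s')
    (hcard : #s' = #s₀ + j + 1) (h : ∀ x ∈ s', ZeroSumFree (s'.erase x)) :
    #{s ∈ zeroSumFreeExtensions s₀ j | s ⊆ s'} = j + 1 := by
  have heq : {s ∈ zeroSumFreeExtensions s₀ j | s ⊆ s'} = (s' \ s₀).image s'.erase := by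
    ext s
    simp only [zeroSumFreeExtensions, mem_filter, mem_univ, true_and, mem_image, mem_sdiff]
    constructor
    · rintro ⟨⟨hs₀s, -, hs⟩, hss'⟩
      obtain ⟨x, hxs, rfl⟩ := exists_eq_insert_iff.2 ⟨hss', by omega⟩
      exact ⟨x, ⟨mem_insert_self x s, fun hx => hxs (hs₀s hx)⟩, erase_insert hxs⟩
    · rintro ⟨x, ⟨hxs', hxs₀⟩, rfl⟩
      exact ⟨⟨subset_erase.2 ⟨hs₀, hxs₀⟩, h x hxs', by rw [card_erase_of_mem hxs']; omega⟩,
        erase_subset x s'⟩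
  rw [heq, card_image_of_injOn ((erase_injOn s').mono sdiff_subset), card_sdiff_of_subset hs₀]
  omega

variable [Module (ZMod 2) V]

theorem card_zeroSumFreeExtensions_filter_supset {s₀ s : Finset V} {j : ℕ}
    (hs : s ∈ zeroSumFreeExtensions s₀ j) :
    #{s' ∈ zeroSumFreeExtensions s₀ (j + 1) | s ⊆ s'} = Fintype.card V - 2 ^ (#s₀ + j) := by
  simp only [zeroSumFreeExtensions, mem_filter, mem_univ, true_and] at hs
  obtain ⟨hs₀s, hfree, hcard⟩ := hs
  have heq : {s' ∈ zeroSumFreeExtensions s₀ (j + 1) | s ⊆ s'} =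
      (subsetSums s)ᶜ.image (insert · s) := by
    ext s'
    simp only [zeroSumFreeExtensions, mem_filter, mem_univ, true_and, mem_image, mem_compl]
    constructor
    · rintro ⟨⟨-, hfree', hs'⟩, hss'⟩
      obtain ⟨x, hxs, rfl⟩ := exists_eq_insert_iff.2 ⟨hss', by omega⟩
      exact ⟨x, ((zeroSumFree_insert_iff hxs).1 hfree').2, rfl⟩
    · rintro ⟨x, hx, rfl⟩
      have hxs : x ∉ s := fun h => hx (mem_subsetSums_of_mem h)
      exact ⟨⟨hs₀s.trans (subset_insert x s), (zeroSumFree_insert_iff hxs).2 ⟨hfree, hx⟩,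
        by rw [card_insert_of_notMem hxs]; omega⟩, subset_insert x s⟩
  have hinj : Set.InjOn (insert · s) ((subsetSums s)ᶜ : Finset V) := fun x hx y _ hxy =>
    (insert_inj fun h => (mem_compl.1 hx) (mem_subsetSums_of_mem h)).1 hxy
  rw [heq, card_image_of_injOn hinj, card_compl, hfree.card_subsetSums, hcard]

theorem card_zeroSumFreeExtensions_succ_mul {s₀ : Finset V} (j : ℕ) :
    #(zeroSumFreeExtensions s₀ (j + 1)) * (j + 1) =
      #(zeroSumFreeExtensions s₀ j) * (Fintype.card V - 2 ^ (#s₀ + j)) := by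
  refine (card_mul_eq_card_mul (· ⊆ ·) (fun s hs => ?_) (fun s' hs' => ?_)).symm
  · exact card_zeroSumFreeExtensions_filter_supset hs
  · simp only [zeroSumFreeExtensions, mem_filter, mem_univ, true_and] at hs'
    obtain ⟨hs₀s', hfree', hcard'⟩ := hs'
    exact card_zeroSumFreeExtensions_filter_subset hs₀s' (by omega)
      fun x _ => hfree'.mono (erase_subset x s')

theorem card_zeroSumFreeExtensions_mul_factorial {s₀ : Finset V} (h₀ : ZeroSumFree s₀) (j : ℕ) :
    #(zeroSumFreeExtensions s₀ j) * j ! =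
      ∏ i ∈ range j, (Fintype.card V - 2 ^ (#s₀ + i)) := by
  induction j with
  | zero =>
    have : zeroSumFreeExtensions s₀ 0 = {s₀} := by
      ext s
      simp only [zeroSumFreeExtensions, mem_filter, mem_univ, true_and, mem_singleton,
        add_zero]
      exact ⟨fun ⟨hs₀s, _, hcard⟩ => (eq_of_subset_of_card_le hs₀s hcard.le).symm,
        fun hs => by subst hs; exact ⟨Subset.rfl, h₀, rfl⟩⟩
    simp [this]
  | succ j ih =>
    rw [Nat.factorial_succ, ← mul_assoc, card_zeroSumFreeExtensions_succ_mul, prod_range_succ,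
      ← ih]
    ring

end Counting

section MinimalZeroSum

variable {V : Type*} [AddCommGroup V]

def IsMinimalZeroSum (c : Finset V) : Prop :=
  c.sum id = 0 ∧ ∀ t ⊆ c, t.Nonempty → t ≠ c → t.sum id ≠ 0

theorem IsMinimalZeroSum.zeroSumFree_erase {c : Finset V} (hc : IsMinimalZeroSum c) {x : V}
    (hx : x ∈ c) : ZeroSumFree (c.erase x) := fun t htc hne =>
  hc.2 t (htc.trans (erase_subset x c)) hne fun htc' => notMem_erase x c (htc (htc' ▸ hx))

theorem ZeroSumFree.sum_notMem {s : Finset V} (h : ZeroSumFree s) (hs : 2 ≤ #s) :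
    s.sum id ∉ s := by
  intro hmem
  refine h (s.erase (s.sum id)) (erase_subset _ s) ?_ ?_
  · rw [← card_pos, card_erase_of_mem hmem]; omega
  · simpa using add_sum_erase s id hmem

variable [Module (ZMod 2) V]

theorem ZeroSumFree.isMinimalZeroSum_insert_sum {s : Finset V} (h : ZeroSumFree s)
    (hσ : s.sum id ∉ s) : IsMinimalZeroSum (insert (s.sum id) s) := by
  refine ⟨by rw [sum_insert hσ, id, ZModModule.add_self], fun t ht hne hne' h0 => ?_⟩
  by_cases hσt : s.sum id ∈ t
  · have ht' : t.erase (s.sum id) ⊆ s :=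
      (erase_subset_erase _ ht).trans (erase_insert hσ).le
    have hsum' : (t.erase (s.sum id)).sum id = s.sum id := by
      rw [← add_sum_erase t id hσt, add_eq_zero_iff_eq_neg, ZModModule.neg_eq_self] at h0
      exact h0.symm
    refine h (s \ t.erase (s.sum id)) sdiff_subset ?_ ?_
    · refine sdiff_nonempty.2 fun hst => hne' (Subset.antisymm ht ?_)
      exact insert_subset hσt (hst.trans (erase_subset _ t))
    · have := sum_sdiff (f := id) ht'
      rwa [hsum', add_eq_right] at this
  · exact h t ((subset_insert_iff_of_notMem hσt).1 ht) hne h0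

variable [Fintype V]

def minimalZeroSumExtensions (s₀ : Finset V) (j : ℕ) : Finset (Finset V) :=
  {c | s₀ ⊆ c ∧ IsMinimalZeroSum c ∧ #c = #s₀ + j + 1}

theorem card_minimalZeroSumExtensions_filter_supset {s₀ s : Finset V} {j : ℕ}
    (hs : s ∈ zeroSumFreeExtensions s₀ j) (h2 : 2 ≤ #s₀ + j) :
    #{c ∈ minimalZeroSumExtensions s₀ j | s ⊆ c} = 1 := by
  simp only [zeroSumFreeExtensions, mem_filter, mem_univ, true_and] at hs
  obtain ⟨hs₀s, hfree, hcard⟩ := hs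
  have hσ : s.sum id ∉ s := hfree.sum_notMem (by omega)
  refine card_eq_one.2 ⟨insert (s.sum id) s, ?_⟩
  ext c
  simp only [minimalZeroSumExtensions, mem_filter, mem_univ, true_and, mem_singleton]
  constructor
  · rintro ⟨⟨-, hc, hc'⟩, hsc⟩
    obtain ⟨x, hxs, rfl⟩ := exists_eq_insert_iff.2 ⟨hsc, by omega⟩
    have h0 := hc.1
    rw [sum_insert hxs, add_eq_zero_iff_eq_neg, ZModModule.neg_eq_self] at h0
    rw [← h0]; rfl
  · rintro rfl
    exact ⟨⟨hs₀s.trans (subset_insert _ s), hfree.isMinimalZeroSum_insert_sum hσ,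
      by rw [card_insert_of_notMem hσ, hcard]⟩, subset_insert _ s⟩

theorem card_minimalZeroSumExtensions_mul {s₀ : Finset V} {j : ℕ} (h2 : 2 ≤ #s₀ + j) :
    #(minimalZeroSumExtensions s₀ j) * (j + 1) = #(zeroSumFreeExtensions s₀ j) := by
  refine (card_mul_eq_card_mul (fun c s => s ⊆ c) (fun c hc => ?_) (fun s hs => ?_)).trans
    (mul_one _)
  · simp only [minimalZeroSumExtensions, mem_filter, mem_univ, true_and] at hc
    obtain ⟨hs₀c, hmin, hcard⟩ := hc
    exact card_zeroSumFreeExtensions_filter_subset hs₀c hcard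
      fun _ hx => hmin.zeroSumFree_erase hx
  · exact card_minimalZeroSumExtensions_filter_supset hs h2

theorem card_minimalZeroSumExtensions_mul_factorial {s₀ : Finset V} {j : ℕ}
    (h₀ : ZeroSumFree s₀) (h2 : 2 ≤ #s₀ + j) :
    #(minimalZeroSumExtensions s₀ j) * (j + 1)! =
      ∏ i ∈ range j, (Fintype.card V - 2 ^ (#s₀ + i)) := by
  rw [Nat.factorial_succ, ← mul_assoc, card_minimalZeroSumExtensions_mul h2,
    card_zeroSumFreeExtensions_mul_factorial h₀]

end MinimalZeroSum

theorem isMinimalZeroSum_insert_iff {V : Type*} [AddCommGroup V] [Module (ZMod 2) V] {e : V}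
    {B : Finset V} (he : e ≠ 0) (heB : e ∉ B) :
    IsMinimalZeroSum (insert e B) ↔
      B.sum id = e ∧ ∀ I ⊆ B, I.Nonempty → I ≠ B → I.sum id ≠ e := by
  have hsum_insert : ∀ {I : Finset V}, e ∉ I → ((insert e I).sum id = 0 ↔ I.sum id = e) :=
    fun hI => by rw [sum_insert hI, id, add_eq_zero_iff_eq_neg, ZModModule.neg_eq_self, eq_comm]
  rw [IsMinimalZeroSum, hsum_insert heB]
  refine and_congr_right fun hB => ⟨fun h I hIB hne hIB' hI => ?_, fun h t ht hne ht' ht0 => ?_⟩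
  · have heI : e ∉ I := fun h => heB (hIB h)
    refine h (insert e I) (insert_subset_insert e hIB) (insert_nonempty e I)
      (fun h' => hIB' ?_) ((hsum_insert heI).2 hI)
    rw [← erase_insert heI, h', erase_insert heB]
  by_cases het : e ∈ t
  · have hI : (t.erase e).sum id = e := by
      rwa [← hsum_insert (notMem_erase e t), insert_erase het]
    refine h (t.erase e) ((erase_subset_erase e ht).trans (erase_insert heB).le) ?_ ?_ hI
    · exact nonempty_iff_ne_empty.2 fun h' => he (by rw [← hI, h', sum_empty])
    · exact fun h' => ht' (by rw [← h', insert_erase het])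
  · have htB : t ⊆ B := (subset_insert_iff_of_notMem het).1 ht
    have hI : (B \ t).sum id = e := by
      have := sum_sdiff (f := id) htB
      rwa [ht0, add_zero, hB] at this
    refine h (B \ t) sdiff_subset ?_ ?_ hI
    · exact sdiff_nonempty.2 fun hBt => he (by rw [← hB, ← Subset.antisymm htB hBt, ht0])
    · obtain ⟨x, hx⟩ := hne
      exact fun h' => (mem_sdiff.1 (h' ▸ htB hx)).2 hx

theorem mem_designW_iff_s16 {m k : ℕ} {B : Finset (GaloisField 2 m)} :
    B ∈ designW m k ↔ 1 ∉ B ∧ IsMinimalZeroSum (insert 1 B) ∧ #B = k := by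
  constructor
  · rintro ⟨hX, hk, hB, hmin⟩
    have h1B : (1 : GaloisField 2 m) ∉ B := fun h => (hX h).2 rfl
    exact ⟨h1B, (isMinimalZeroSum_insert_iff one_ne_zero h1B).2 ⟨hB, hmin⟩, hk⟩
  · rintro ⟨h1B, hmin, hk⟩
    obtain ⟨hB, hmin'⟩ := (isMinimalZeroSum_insert_iff one_ne_zero h1B).1 hmin
    refine ⟨fun x hx => ⟨fun hx0 => ?_, fun hx1 => h1B (hx1 ▸ hx)⟩, hk, hB, hmin'⟩
    refine hmin.2 {x} (singleton_subset_iff.2 (mem_insert_of_mem hx)) (singleton_nonempty x)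
      (fun h => one_ne_zero ((mem_singleton.1 (h ▸ mem_insert_self 1 B)).trans hx0))
      (by simp [hx0])

theorem zeroSumFree_one_pair {m : ℕ} {u v : GaloisField 2 m} (hu : u ∈ designX m)
    (hv : v ∈ designX m) (huv : u ≠ v) (hsum : u + v ≠ 1) :
    ZeroSumFree ({1, u, v} : Finset (GaloisField 2 m)) := by
  obtain ⟨hu0, hu1⟩ := hu
  obtain ⟨hv0, hv1⟩ := hv
  have h1uv : (1 : GaloisField 2 m) ∉ ({u, v} : Finset _) := by simp [hu1.symm, hv1.symm]
  have huv' : u ∉ ({v} : Finset (GaloisField 2 m)) := by simp [huv]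
  rw [zeroSumFree_insert_iff h1uv, zeroSumFree_insert_iff huv', zeroSumFree_singleton,
    mem_subsetSums_insert huv']
  simp only [mem_subsetSums_singleton, ZModModule.sub_eq_add, not_or]
  refine ⟨⟨hv0, hu0, huv⟩, ⟨one_ne_zero, hv1.symm⟩, fun h => hu1 ?_, fun h => hsum ?_⟩
  · rw [add_eq_zero_iff_eq_neg, ZModModule.neg_eq_self] at h
    exact h.symm
  · rw [← h, add_left_comm, ZModModule.add_self, add_zero]

theorem ncard_designW_filter_mem_mem {m : ℕ} [Fintype (GaloisField 2 m)] {j : ℕ}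
    {u v : GaloisField 2 m} (hu1 : u ≠ 1) (hv1 : v ≠ 1) (huv : u ≠ v) :
    {B ∈ designW m (j + 3) | u ∈ B ∧ v ∈ B}.ncard =
      #(minimalZeroSumExtensions ({1, u, v} : Finset (GaloisField 2 m)) j) := by
  have hcard₀ : #({1, u, v} : Finset (GaloisField 2 m)) = 3 :=
    card_eq_three.2 ⟨1, u, v, hu1.symm, hv1.symm, huv, rfl⟩
  rw [← Set.ncard_coe_finset]
  refine Set.ncard_congr (fun B _ => insert 1 B) (fun B hB => ?_) (fun B B' hB hB' h => ?_)
    (fun c hc => ?_)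
  · obtain ⟨hB, huB, hvB⟩ := hB
    obtain ⟨h1B, hmin, hcard⟩ := mem_designW_iff_s16.1 hB
    simp only [minimalZeroSumExtensions, coe_filter, mem_univ, true_and]
    refine ⟨insert_subset_insert 1 (insert_subset huB (singleton_subset_iff.2 hvB)), hmin, ?_⟩
    rw [card_insert_of_notMem h1B, hcard, hcard₀]
    omega
  · have h1B := (mem_designW_iff_s16.1 hB.1).1
    have h1B' := (mem_designW_iff_s16.1 hB'.1).1
    rw [← erase_insert h1B, h, erase_insert h1B']
  · simp only [minimalZeroSumExtensions, coe_filter, mem_univ, true_and] at hc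
    obtain ⟨hs₀c, hmin, hcard⟩ := hc
    have h1c : (1 : GaloisField 2 m) ∈ c := hs₀c (mem_insert_self 1 _)
    refine ⟨c.erase 1, ⟨mem_designW_iff_s16.2 ⟨notMem_erase 1 c, by rwa [insert_erase h1c], ?_⟩,
      mem_erase.2 ⟨hu1, hs₀c (by simp)⟩, mem_erase.2 ⟨hv1, hs₀c (by simp)⟩⟩, insert_erase h1c⟩
    rw [card_erase_of_mem h1c, hcard, hcard₀]
    omega

/-- For `m ≥ 6` and distinct `u, v ∈ X` with `u + v ≠ 1`, exactly `λ_6 = (2^m-8)(2^m-16)(2^m-32)/4!`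
blocks of `W_6` contain both `u` and `v`; that is, `(X, W_2, W_6)` is a
`GDD(2^m - 2, 2, 6)` with balance parameter `λ_6`. -/
theorem GDD_W6 (m : ℕ) (hm : 6 ≤ m) (u v : GaloisField 2 m)
    (hu : u ∈ designX m) (hv : v ∈ designX m) (huv : u ≠ v) (hsum : u + v ≠ 1) :
    {B ∈ designW m 6 | u ∈ B ∧ v ∈ B}.ncard = (2 ^ m - 8) * (2 ^ m - 16) * (2 ^ m - 32) / Nat.factorial 4 := by
  let _ : Fintype (GaloisField 2 m) := Fintype.ofFinite _
  have hq : Fintype.card (GaloisField 2 m) = 2 ^ m := by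
    rw [← Nat.card_eq_fintype_card]
    exact GaloisField.card 2 m (by omega)
  have hcard₀ : #({1, u, v} : Finset (GaloisField 2 m)) = 3 :=
    card_eq_three.2 ⟨1, u, v, hu.2.symm, hv.2.symm, huv, rfl⟩
  have hcount := card_minimalZeroSumExtensions_mul_factorial (j := 3)
    (zeroSumFree_one_pair hu hv huv hsum) (by omega)
  rw [hcard₀, hq] at hcount
  rw [ncard_designW_filter_mem_mem (j := 3) hu.2 hv.2 huv]
  refine (Nat.div_eq_of_eq_mul_left (Nat.factorial_pos 4) ?_).symm
  rw [hcount]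
  simp [prod_range_succ]
end
end
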